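/- arXiv:2110.04191 — 6 statements merged into one kernel-verified Lean document; each statement's English description precedes it below -/
import Mathlib

section
/- For the line graph L_N on N nodes, there exists a legal parallel quantum pebbling using at most 2N rounds and at most k + ⌈N/k⌉ pebbles for any 1 ≤ k ≤ N; in particular, with k = ⌈√N⌉ the quantum space-time complexity of L_N is O(N√N). -/
attribute [local instance] Classical.propDecidable

/-- Edge relation of the line graph on nodes `1..n`. -/
def lineE (n : ℕ) : ℕ → ℕ → Prop := fun u v => v = u + 1 ∧ 1 ≤ u ∧ v ≤ n

/-- The set of immediate parents of `v` in the graph with edge relation `E`. -/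
def parents (E : ℕ → ℕ → Prop) (v : ℕ) : Set ℕ := {u | E u v}

/-- All parents of nodes in the set `S`. -/
def parentsOf (E : ℕ → ℕ → Prop) (S : Set ℕ) : Set ℕ := {u | ∃ v ∈ S, E u v}

/-- A legal parallel quantum pebbling of the graph `E` with target set `T`, in `t` rounds. -/
structure IsQPebbling (E : ℕ → ℕ → Prop) (T : Set ℕ) (P : ℕ → Set ℕ) (t : ℕ) : Prop where
  init : P 0 = ∅
  final : P t = T
  addLegal : ∀ i, 1 ≤ i → i ≤ t → ∀ x ∈ P i \ P (i-1), parents E x ⊆ P (i-1)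
  delLegal : ∀ i, 1 ≤ i → i ≤ t → ∀ x ∈ P (i-1) \ P i, parents E x ⊆ P (i-1)
  rev : ∀ i, 1 ≤ i → i ≤ t →
    parentsOf E (P i \ P (i-1)) ∪ parentsOf E (P (i-1) \ P i) ⊆ P i

/-- Space cost of a pebbling: maximum number of pebbles in any round. -/
noncomputable def spaceCost (P : ℕ → Set ℕ) (t : ℕ) : ℕ :=
  (Finset.range (t+1)).sup fun i => (P i).ncard

/-- Space-time cost of a pebbling. -/
noncomputable def stCost (P : ℕ → Set ℕ) (t : ℕ) : ℕ := t * spaceCost P t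

/-- Cumulative cost of a pebbling. -/
noncomputable def ccCost (P : ℕ → Set ℕ) (t : ℕ) : ℕ :=
  ∑ i ∈ Finset.range (t+1), (P i).ncard

/-! ### Auxiliary construction -/

/-- Configuration of the forward strategy at "block `q`, in-block time `m`":
checkpoints at multiples of `k` up to `q*k`, the new block prefix, and the
not-yet-unwound part of the previous block. -/
def Gconf (k q m : ℕ) : Set ℕ :=
  {x | ∃ j, 1 ≤ j ∧ j ≤ q ∧ x = j * k} ∪
  {x | q * k < x ∧ x ≤ q * k + m} ∪
  {x | 1 ≤ q ∧ (q-1) * k < x ∧ x + min m (k-1) + 1 ≤ q * k}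

lemma mem_Gconf {k q m x : ℕ} :
    x ∈ Gconf k q m ↔ (∃ j, 1 ≤ j ∧ j ≤ q ∧ x = j * k) ∨
      (q*k < x ∧ x ≤ q*k + m) ∨
      (1 ≤ q ∧ (q-1)*k < x ∧ x + min m (k-1) + 1 ≤ q*k) := by
  simp only [Gconf, Set.mem_union, Set.mem_setOf_eq, or_assoc]

lemma pred_mul (q k : ℕ) (hq : 1 ≤ q) : (q-1)*k + k = q*k := by
  cases q with
  | zero => omega
  | succ s => simp [Nat.succ_sub_one, Nat.succ_mul]

/-- Forward pebbling sequence. -/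
def Fp (k i : ℕ) : Set ℕ := if i = 0 then ∅ else Gconf k ((i-1)/k) ((i-1) % k + 1)

/-- The full pebbling: forward for `N` rounds, then reverse (keeping `N`). -/
def Pb (N k i : ℕ) : Set ℕ := if i ≤ N then Fp k i else Fp k (2*N - i) ∪ {N}

/-- One "strong" legal step: every changed vertex has its parents pebbled
both before and after the step. -/
def Stp (N : ℕ) (A B : Set ℕ) : Prop :=
  ∀ x ∈ (A \ B) ∪ (B \ A), parents (lineE N) x ⊆ A ∩ B

lemma stp_symm {N : ℕ} {A B : Set ℕ} (h : Stp N A B) : Stp N B A := by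
  intro x hx u hu
  have hx' : x ∈ (A \ B) ∪ (B \ A) := by
    rcases hx with h1 | h1
    · exact Set.mem_union_right _ h1
    · exact Set.mem_union_left _ h1
  rcases h x hx' hu with ⟨h1, h2⟩
  exact ⟨h2, h1⟩

lemma stp_union {N : ℕ} {A B : Set ℕ} (h : Stp N A B) :
    Stp N (A ∪ {N}) (B ∪ {N}) := by
  intro x hx u hu
  have hx' : x ∈ (A \ B) ∪ (B \ A) := by
    rcases hx with ⟨hx1, hx2⟩ | ⟨hx1, hx2⟩
    · rcases hx1 with hx1 | hx1
      · exact Or.inl ⟨hx1, fun hxb => hx2 (Or.inl hxb)⟩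
      · exact absurd (Set.mem_union_right _ hx1) hx2
    · rcases hx1 with hx1 | hx1
      · exact Or.inr ⟨hx1, fun hxb => hx2 (Or.inl hxb)⟩
      · exact absurd (Set.mem_union_right _ hx1) hx2
  rcases h x hx' hu with ⟨h1, h2⟩
  exact ⟨Or.inl h1, Or.inl h2⟩

lemma isQPebbling_of_stp {N : ℕ} {T : Set ℕ} {P : ℕ → Set ℕ} {t : ℕ}
    (h0 : P 0 = ∅) (ht : P t = T)
    (hs : ∀ i, 1 ≤ i → i ≤ t → Stp N (P (i-1)) (P i)) :
    IsQPebbling (lineE N) T P t := by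
  refine ⟨h0, ht, ?_, ?_, ?_⟩
  · intro i h1 h2 x hx u hu
    exact ((hs i h1 h2) x (Set.mem_union_right _ hx) hu).1
  · intro i h1 h2 x hx u hu
    exact ((hs i h1 h2) x (Set.mem_union_left _ hx) hu).1
  · intro i h1 h2 u hu
    rcases hu with ⟨v, hv, huv⟩ | ⟨v, hv, huv⟩
    · exact ((hs i h1 h2) v (Set.mem_union_right _ hv) huv).2
    · exact ((hs i h1 h2) v (Set.mem_union_left _ hv) huv).2

/-- Key step lemma, within a block. -/
lemma stpG1 {N k q m : ℕ} (hm2 : 2 ≤ m) (hmk : m ≤ k) :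
    Stp N (Gconf k q (m-1)) (Gconf k q m) := by
  intro x hx u hu
  simp only [parents, lineE, Set.mem_setOf_eq] at hu
  obtain ⟨hxu, hu1, hxN⟩ := hu
  simp only [Set.mem_union, Set.mem_diff, Set.mem_inter_iff] at hx ⊢
  rw [mem_Gconf (m := m-1), mem_Gconf (m := m)] at hx
  rw [mem_Gconf (m := m-1), mem_Gconf (m := m)]
  rcases hx with ⟨hA, hB⟩ | ⟨hB, hA⟩
  · -- x was deleted
    rw [not_or, not_or] at hB
    obtain ⟨hB1, hB2, hB3⟩ := hB
    rcases hA with ⟨j, hj1, hjq, hjx⟩ | ⟨hx1, hx2⟩ | ⟨hq1, hx1, hx2⟩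
    · exact absurd ⟨j, hj1, hjq, hjx⟩ hB1
    · exact absurd ⟨hx1, by omega⟩ hB2
    · have hbk : (q-1)*k + k = q*k := pred_mul q k hq1
      have key : x + m = q*k ∧ m + 1 ≤ k := by omega
      by_cases hcase : (q-1)*k < u
      · exact ⟨Or.inr (Or.inr ⟨hq1, hcase, by omega⟩),
          Or.inr (Or.inr ⟨hq1, hcase, by omega⟩)⟩
      · have hueq : u = (q-1)*k := by omega
        have hq2 : 2 ≤ q := by
          rcases (show q = 1 ∨ 2 ≤ q by omega) with rfl | h
          · norm_num at hueq; omega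
          · exact h
        exact ⟨Or.inl ⟨q-1, by omega, by omega, hueq⟩,
          Or.inl ⟨q-1, by omega, by omega, hueq⟩⟩
  · -- x was added
    rw [not_or, not_or] at hA
    obtain ⟨hA1, hA2, hA3⟩ := hA
    rcases hB with ⟨j, hj1, hjq, hjx⟩ | ⟨hx1, hx2⟩ | ⟨hq1, hx1, hx2⟩
    · exact absurd ⟨j, hj1, hjq, hjx⟩ hA1
    · have hxm : x = q*k + m := by omega
      exact ⟨Or.inr (Or.inl ⟨by omega, by omega⟩),
        Or.inr (Or.inl ⟨by omega, by omega⟩)⟩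
    · exact absurd ⟨hq1, hx1, by omega⟩ hA3

/-- Key step lemma, crossing a block boundary. -/
lemma stpG2 {N k q : ℕ} (hk : 1 ≤ k) (hq : 1 ≤ q) :
    Stp N (Gconf k (q-1) k) (Gconf k q 1) := by
  intro x hx u hu
  simp only [parents, lineE, Set.mem_setOf_eq] at hu
  obtain ⟨hxu, hu1, hxN⟩ := hu
  have hbk : (q-1)*k + k = q*k := pred_mul q k hq
  simp only [Set.mem_union, Set.mem_diff, Set.mem_inter_iff] at hx ⊢
  rw [mem_Gconf (q := q-1), mem_Gconf (q := q)] at hx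
  rw [mem_Gconf (q := q-1), mem_Gconf (q := q)]
  rcases hx with ⟨hA, hB⟩ | ⟨hB, hA⟩
  · rw [not_or, not_or] at hB
    obtain ⟨hB1, hB2, hB3⟩ := hB
    rcases hA with ⟨j, hj1, hjq, hjx⟩ | ⟨hx1, hx2⟩ | ⟨hq1, hx1, hx2⟩
    · exact absurd ⟨j, hj1, by omega, hjx⟩ hB1
    · have hxb : x ≠ q*k := fun h => hB1 ⟨q, hq, le_refl q, h⟩
      have key : x + 1 = q*k ∧ 2 ≤ k := by omega
      by_cases hcase : (q-1)*k < u
      · exact ⟨Or.inr (Or.inl ⟨hcase, by omega⟩),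
          Or.inr (Or.inr ⟨hq, hcase, by omega⟩)⟩
      · have hueq : u = (q-1)*k := by omega
        have hq2 : 2 ≤ q := by
          rcases (show q = 1 ∨ 2 ≤ q by omega) with rfl | h
          · norm_num at hueq; omega
          · exact h
        exact ⟨Or.inl ⟨q-1, by omega, le_refl _, hueq⟩,
          Or.inl ⟨q-1, by omega, by omega, hueq⟩⟩
    · exfalso
      have hbk2 : (q-1-1)*k + k = (q-1)*k := pred_mul (q-1) k hq1
      omega
  · rw [not_or, not_or] at hA
    obtain ⟨hA1, hA2, hA3⟩ := hA
    rcases hB with ⟨j, hj1, hjq, hjx⟩ | ⟨hx1, hx2⟩ | ⟨hq1, hx1, hx2⟩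
    · rcases (show j ≤ q - 1 ∨ j = q by omega) with h | h
      · exact absurd ⟨j, hj1, h, hjx⟩ hA1
      · subst h
        exact absurd ⟨by omega, by omega⟩ hA2
    · have hxeq : x = q*k + 1 := by omega
      exact ⟨Or.inr (Or.inl ⟨by omega, by omega⟩),
        Or.inl ⟨q, hq, le_refl _, by omega⟩⟩
    · exact absurd ⟨by omega, by omega⟩ hA2

/-- All forward steps are strongly legal. -/
lemma stpF {N k : ℕ} (hk : 1 ≤ k) {i : ℕ} (h1 : 1 ≤ i) :
    Stp N (Fp k (i-1)) (Fp k i) := by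
  have hk0 : 0 < k := hk
  rcases Nat.lt_or_ge i 2 with hi | hi
  · -- i = 1
    have hi1 : i = 1 := by omega
    subst hi1
    intro x hx u hu
    simp only [parents, lineE, Set.mem_setOf_eq] at hu
    obtain ⟨hxu, hu1, hxN⟩ := hu
    exfalso
    have hxG : x ∈ Gconf k 0 1 := by
      simp only [Fp] at hx
      norm_num at hx
      exact hx
    rw [mem_Gconf] at hxG
    rcases hxG with ⟨j, hj1, hj0, _⟩ | ⟨_, hx2⟩ | ⟨h0, _, _⟩
    · omega
    · omega
    · omega
  · -- i ≥ 2
    obtain ⟨q, r, hqd, hrd, hdm, hrk⟩ :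
        ∃ q r, (i-1)/k = q ∧ (i-1)%k = r ∧ k*q + r = i-1 ∧ r < k :=
      ⟨_, _, rfl, rfl, Nat.div_add_mod _ _, Nat.mod_lt _ hk0⟩
    have hFi : Fp k i = Gconf k q (r+1) := by rw [Fp, if_neg (by omega), hqd, hrd]
    rcases Nat.eq_zero_or_pos r with hr0 | hr1
    · -- block boundary
      have hq1 : 1 ≤ q := by
        by_contra h
        have hq0 : q = 0 := by omega
        subst hq0
        have h0 : k*0 = 0 := Nat.mul_zero k
        omega
      have hmul : (q-1)*k + k = q*k := pred_mul q k hq1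
      have hc1 : k*q = q*k := Nat.mul_comm k q
      have hc2 : k*(q-1) = (q-1)*k := Nat.mul_comm k (q-1)
      have e1 : (k-1) + k*(q-1) = i - 1 - 1 := by omega
      obtain ⟨ed, em⟩ := (Nat.div_mod_unique hk0).2 ⟨e1, by omega⟩
      have hprev : Fp k (i-1) = Gconf k (q-1) k := by
        rw [Fp, if_neg (by omega), ed, em, (show k - 1 + 1 = k by omega)]
      rw [hprev, hFi, (show r + 1 = 1 by omega)]
      exact stpG2 hk hq1
    · -- within block
      have e1 : (r-1) + k*q = i - 1 - 1 := by omega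
      obtain ⟨ed, em⟩ := (Nat.div_mod_unique hk0).2 ⟨e1, by omega⟩
      have hprev : Fp k (i-1) = Gconf k q r := by
        rw [Fp, if_neg (by omega), ed, em, (show r - 1 + 1 = r by omega)]
      rw [hprev, hFi]
      have h := stpG1 (N := N) (k := k) (q := q) (m := r+1) (by omega) (by omega)
      have e2 : r + 1 - 1 = r := by omega
      rw [e2] at h
      exact h

/-- Cardinality bound for a configuration. -/
lemma ncard_G {k q m : ℕ} (hk : 1 ≤ k) (hmk : m ≤ k) :
    (Gconf k q m).ncard ≤ q + k := by
  classical
  set F : Finset ℕ := (((Finset.Icc 1 q).image (· * k)) ∪ (Finset.Ioc (q*k) (q*k+m))) ∪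
      (Finset.Ioc ((q-1)*k) (q*k - min m (k-1) - 1)) with hF
  have hsub : Gconf k q m ⊆ ↑F := by
    intro x hx
    rw [mem_Gconf] at hx
    simp only [hF, Finset.coe_union, Set.mem_union, Finset.coe_image, Finset.coe_Icc,
      Finset.coe_Ioc, Set.mem_image, Set.mem_Ioc, Set.mem_Icc]
    rcases hx with ⟨j, hj1, hjq, hjx⟩ | ⟨h1, h2⟩ | ⟨hq1, h1, h2⟩
    · exact Or.inl (Or.inl ⟨j, ⟨hj1, hjq⟩, hjx.symm⟩)
    · exact Or.inl (Or.inr ⟨h1, h2⟩)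
    · exact Or.inr ⟨h1, by omega⟩
  have h1 : (Gconf k q m).ncard ≤ F.card := by
    have h := Set.ncard_le_ncard hsub (Finset.finite_toSet F)
    rwa [Set.ncard_coe_finset] at h
  have c1 : ((Finset.Icc 1 q).image (· * k)).card ≤ q :=
    le_trans Finset.card_image_le (by simp [Nat.card_Icc])
  have c2 : (Finset.Ioc (q*k) (q*k+m)).card = m := by simp [Nat.card_Ioc]
  have c3 : (Finset.Ioc ((q-1)*k) (q*k - min m (k-1) - 1)).card ≤ k - m := by
    rw [Nat.card_Ioc]
    rcases Nat.eq_zero_or_pos q with rfl | hq1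
    · omega
    · have := pred_mul q k hq1
      omega
  have u1 := Finset.card_union_le (((Finset.Icc 1 q).image (· * k)) ∪
      (Finset.Ioc (q*k) (q*k+m))) (Finset.Ioc ((q-1)*k) (q*k - min m (k-1) - 1))
  have u2 := Finset.card_union_le ((Finset.Icc 1 q).image (· * k))
      (Finset.Ioc (q*k) (q*k+m))
  rw [← hF] at u1
  omega

lemma ncard_Fp {k i : ℕ} (hk : 1 ≤ k) : (Fp k i).ncard ≤ (i-1)/k + k := by
  rcases Nat.eq_zero_or_pos i with rfl | hi
  · simp [Fp]
  · rw [Fp, if_neg (by omega)]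
    exact ncard_G hk (by have := Nat.mod_lt (i-1) (y := k) hk; omega)

lemma space_bound {N k : ℕ} (hk : 1 ≤ k) (hkN : k ≤ N) :
    spaceCost (Pb N k) (2*N) ≤ k + (N + k - 1)/k := by
  have hN1 : 1 ≤ N := hk.trans hkN
  have hL : (N + k - 1)/k = (N-1)/k + 1 := by
    rw [(show N + k - 1 = (N - 1) + k by omega), Nat.add_div_right _ hk]
  apply Finset.sup_le
  intro i _
  rw [Pb]
  split
  · have h1 := ncard_Fp (k := k) (i := i) hk
    have h2 : (i-1)/k ≤ (N-1)/k := Nat.div_le_div_right (by omega)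
    omega
  · have hb := Set.ncard_union_le (Fp k (2*N - i)) {N}
    have h1 := ncard_Fp (k := k) (i := 2*N - i) hk
    have h2 : (2*N - i - 1)/k ≤ (N-1)/k := Nat.div_le_div_right (by omega)
    rw [Set.ncard_singleton] at hb
    omega

lemma pb_isQ {N k : ℕ} (hk : 1 ≤ k) (hkN : k ≤ N) :
    IsQPebbling (lineE N) {N} (Pb N k) (2*N) := by
  have hN1 : 1 ≤ N := hk.trans hkN
  have hk0 : 0 < k := hk
  have hNmem : N ∈ Fp k N := by
    rw [Fp, if_neg (by omega), mem_Gconf]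
    have hdm := Nat.div_add_mod (N-1) k
    have hc : k * ((N-1)/k) = ((N-1)/k) * k := Nat.mul_comm _ _
    have hm := Nat.mod_lt (N-1) hk0
    exact Or.inr (Or.inl ⟨by omega, by omega⟩)
  apply isQPebbling_of_stp
  · simp [Pb, Fp]
  · rw [Pb, if_neg (by omega)]
    simp [Fp, Nat.sub_self]
  · intro i h1 h2
    rcases Nat.lt_or_ge i (N+1) with hi | hi
    · have e1 : Pb N k (i-1) = Fp k (i-1) := by rw [Pb, if_pos (by omega)]
      have e2 : Pb N k i = Fp k i := by rw [Pb, if_pos (by omega)]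
      rw [e1, e2]
      exact stpF hk h1
    · rcases Nat.eq_or_lt_of_le hi with hi' | hi'
      · have e1 : Pb N k (i-1) = Fp k N := by
          rw [(show i - 1 = N by omega), Pb, if_pos (le_refl N)]
        have e2 : Pb N k i = Fp k (N-1) ∪ {N} := by
          rw [Pb, if_neg (by omega), (show 2*N - i = N - 1 by omega)]
        rw [e1, e2]
        have hs := stp_union (N := N) (stp_symm (stpF (N := N) (k := k) hk (i := N) (by omega)))
        have he : Fp k N ∪ {N} = Fp k N := by
          rw [Set.union_singleton, Set.insert_eq_self]
          exact hNmem
        rwa [he] at hs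
      · have e1 : Pb N k (i-1) = Fp k (2*N - i + 1) ∪ {N} := by
          rw [Pb, if_neg (by omega), (show 2*N - (i-1) = 2*N - i + 1 by omega)]
        have e2 : Pb N k i = Fp k (2*N - i) ∪ {N} := by
          rw [Pb, if_neg (by omega)]
        rw [e1, e2]
        have hs := stp_union (N := N)
          (stp_symm (stpF (N := N) (k := k) hk (i := 2*N - i + 1) (by omega)))
        have e3 : 2*N - i + 1 - 1 = 2*N - i := by omega
        rw [e3] at hs
        exact hs

/-- For the line graph `L_N`: for any `1 ≤ k ≤ N` there is a legal parallel quantum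
pebbling with at most `2N` rounds and at most `k + ⌈N/k⌉` pebbles; in particular
(with `k = ⌈√N⌉`) the quantum space-time complexity of `L_N` is `O(N√N)`. -/
theorem stmt2 :
    (∀ N k : ℕ, 1 ≤ k → k ≤ N →
      ∃ P t, IsQPebbling (lineE N) {N} P t ∧ t ≤ 2*N ∧
        spaceCost P t ≤ k + (N + k - 1) / k) ∧
    (∃ C : ℝ, 0 < C ∧ ∀ N : ℕ, 1 ≤ N →
      ∃ P t, IsQPebbling (lineE N) {N} P t ∧
        (stCost P t : ℝ) ≤ C * N * Real.sqrt N) := by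
  constructor
  · intro N k hk hkN
    exact ⟨Pb N k, 2*N, pb_isQ hk hkN, le_refl _, space_bound hk hkN⟩
  · refine ⟨10, by norm_num, ?_⟩
    intro N hN
    set k := Nat.sqrt N with hkdef
    have hk : 1 ≤ k := Nat.sqrt_pos.mpr hN
    have hkN : k ≤ N := Nat.sqrt_le_self N
    refine ⟨Pb N k, 2*N, pb_isQ hk hkN, ?_⟩
    have hspace := space_bound (N := N) (k := k) hk hkN
    have hst : stCost (Pb N k) (2*N) ≤ 2*N*(k + (N+k-1)/k) := by
      rw [stCost]
      exact Nat.mul_le_mul_left _ hspace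
    have hs1 : (1:ℝ) ≤ Real.sqrt N := by
      rw [show (1:ℝ) = Real.sqrt 1 by simp]
      exact Real.sqrt_le_sqrt (by exact_mod_cast hN)
    have hks : (k:ℝ) ≤ Real.sqrt N := by
      have h2 : ((k:ℝ))^2 ≤ (N:ℝ) := by exact_mod_cast Nat.sqrt_le' N
      have h3 := Real.sqrt_le_sqrt h2
      rwa [Real.sqrt_sq (by positivity)] at h3
    have hkpos : (0:ℝ) < (k:ℝ) := by exact_mod_cast hk
    have hdiv : ((N:ℝ)) / k ≤ 3 * Real.sqrt N := by
      rcases Nat.lt_or_ge N 4 with h4 | h4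
      · calc ((N:ℝ))/k ≤ N := div_le_self (by positivity) (by exact_mod_cast hk)
          _ ≤ 3 := by exact_mod_cast (show N ≤ 3 by omega)
          _ ≤ 3 * Real.sqrt N := by nlinarith
      · have hk_lb : Real.sqrt N ≤ (k:ℝ) + 1 := by
          have hlt := Nat.lt_succ_sqrt' N
          have h2 : (N:ℝ) < ((k:ℝ)+1)^2 := by
            rw [hkdef]
            exact_mod_cast hlt
          have h3 := Real.sqrt_le_sqrt (le_of_lt h2)
          rwa [Real.sqrt_sq (by positivity)] at h3
        have hsqN : (2:ℝ) ≤ Real.sqrt N := by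
          rw [show (2:ℝ) = Real.sqrt 4 by
            rw [show (4:ℝ) = 2^2 by norm_num, Real.sqrt_sq]; norm_num]
          exact Real.sqrt_le_sqrt (by exact_mod_cast h4)
        have hk2 : Real.sqrt N / 2 ≤ (k:ℝ) := by nlinarith
        have hNs : (N:ℝ) = Real.sqrt N * Real.sqrt N :=
          (Real.mul_self_sqrt (by positivity)).symm
        rw [div_le_iff₀ hkpos]
        nlinarith
    have cast1 : ((k + (N + k - 1)/k : ℕ) : ℝ) ≤ 5 * Real.sqrt N := by
      have hd1 : ((((N + k - 1)/k : ℕ)) : ℝ) ≤ ((N + k - 1 : ℕ) : ℝ)/(k:ℝ) :=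
        Nat.cast_div_le
      have hd2 : ((N + k - 1 : ℕ):ℝ) ≤ (N:ℝ) + k := by
        have h : (N + k - 1 : ℕ) ≤ N + k := by omega
        exact_mod_cast h
      have hd3 : ((N:ℝ) + k)/k = N/k + 1 := by field_simp
      have hd4 : ((((N + k - 1)/k : ℕ)) : ℝ) ≤ (N:ℝ)/k + 1 := by
        calc ((((N + k - 1)/k : ℕ)) : ℝ) ≤ ((N + k - 1 : ℕ) : ℝ)/(k:ℝ) := hd1
          _ ≤ ((N:ℝ) + k)/k := by gcongr
          _ = N/k + 1 := hd3
      push_cast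
      linarith
    calc (stCost (Pb N k) (2*N) : ℝ) ≤ ((2*N*(k + (N+k-1)/k) : ℕ) : ℝ) := by
          exact_mod_cast hst
      _ = 2*(N:ℝ)*((k + (N+k-1)/k : ℕ):ℝ) := by push_cast; ring
      _ ≤ 2*(N:ℝ)*(5*Real.sqrt N) := by
          apply mul_le_mul_of_nonneg_left cast1 (by positivity)
      _ = 10 * N * Real.sqrt N := by ring
end

section
/- For every constant ε > 0, the quantum parallel space-time pebbling complexity of the line graph L_N satisfies Π^{q,∥}_{st}(L_N) = O(N^{1+ε}). -/
attribute [local instance] Classical.propDecidable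

namespace Peb

def step (S : Finset ℕ) (v : ℕ) : Finset ℕ := if v ∈ S then S.erase v else insert v S

def runL (S : Finset ℕ) (L : List ℕ) : Finset ℕ := L.foldl step S

def LegalFrom (n : ℕ) : Finset ℕ → List ℕ → Prop
  | _, [] => True
  | S, v :: L => (2 ≤ v → v ≤ n → v - 1 ∈ S) ∧ LegalFrom n (step S v) L

def maxCard : Finset ℕ → List ℕ → ℕ
  | S, [] => S.card
  | S, v :: L => max S.card (maxCard (step S v) L)

@[simp] lemma runL_nil (S : Finset ℕ) : runL S [] = S := rfl
@[simp] lemma runL_cons (S : Finset ℕ) (v : ℕ) (L : List ℕ) :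
    runL S (v :: L) = runL (step S v) L := rfl

lemma runL_append (S : Finset ℕ) (L1 L2 : List ℕ) :
    runL S (L1 ++ L2) = runL (runL S L1) L2 := by
  induction L1 generalizing S with
  | nil => rfl
  | cons v L ih => simp [runL_cons, ih]

lemma legal_append {n : ℕ} {S : Finset ℕ} {L1 L2 : List ℕ}
    (h1 : LegalFrom n S L1) (h2 : LegalFrom n (runL S L1) L2) :
    LegalFrom n S (L1 ++ L2) := by
  induction L1 generalizing S with
  | nil => exact h2
  | cons v L ih => exact ⟨h1.1, ih h1.2 h2⟩

lemma maxCard_append (S : Finset ℕ) (L1 L2 : List ℕ) :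
    maxCard S (L1 ++ L2) = max (maxCard S L1) (maxCard (runL S L1) L2) := by
  induction L1 generalizing S with
  | nil =>
    simp only [List.nil_append, runL_nil, maxCard]
    have : S.card ≤ maxCard S L2 := by
      cases L2 with
      | nil => simp [maxCard]
      | cons v L => simp [maxCard]
    omega
  | cons v L ih =>
    show max S.card (maxCard (step S v) (L ++ L2)) = _
    rw [ih]
    simp only [maxCard, runL_cons]
    omega

lemma card_le_maxCard (S : Finset ℕ) (L : List ℕ) : S.card ≤ maxCard S L := by
  cases L with
  | nil => simp [maxCard]
  | cons v L => simp [maxCard]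

lemma card_step_le (S : Finset ℕ) (v : ℕ) : (step S v).card ≤ S.card + 1 := by
  unfold step; split
  · exact le_trans (Finset.card_erase_le) (Nat.le_succ _)
  · exact Finset.card_insert_le _ _

lemma run_take_card_le (L : List ℕ) (S : Finset ℕ) (i : ℕ) :
    (runL S (L.take i)).card ≤ maxCard S L := by
  induction L generalizing S i with
  | nil => simp [maxCard]
  | cons v L ih =>
    cases i with
    | zero => simp [maxCard]
    | succ i =>
      simp only [List.take_succ_cons, runL_cons, maxCard]
      exact le_max_of_le_right (ih _ _)

lemma legal_get (n : ℕ) : ∀ (L : List ℕ) (S : Finset ℕ) (i : ℕ) (h : i < L.length),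
    LegalFrom n S L →
    (2 ≤ L.get ⟨i, h⟩ → L.get ⟨i, h⟩ ≤ n → L.get ⟨i, h⟩ - 1 ∈ runL S (L.take i)) := by
  intro L
  induction L with
  | nil => intro S i h; simp at h
  | cons v L ih =>
    intro S i h hleg
    cases i with
    | zero => exact hleg.1
    | succ i => exact ih (step S v) i (by simpa using h) hleg.2

lemma run_take_succ (L : List ℕ) (S : Finset ℕ) (i : ℕ) (h : i < L.length) :
    runL S (L.take (i+1)) = step (runL S (L.take i)) (L.get ⟨i, h⟩) := by
  induction L generalizing S i with
  | nil => simp at h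
  | cons v L ih =>
    cases i with
    | zero => simp [runL]
    | succ i => exact ih (step S v) i (by simpa using h)

/-! ### step and finset identities -/

lemma mem_step {S : Finset ℕ} {v x : ℕ} (h : x ∈ step S v) : x ∈ S ∨ x = v := by
  unfold step at h; split at h
  · exact Or.inl (Finset.mem_of_mem_erase h)
  · rcases Finset.mem_insert.1 h with h | h
    · exact Or.inr h
    · exact Or.inl h

lemma mem_step_of_ne {S : Finset ℕ} {v x : ℕ} (hx : x ∈ S) (hne : x ≠ v) :
    x ∈ step S v := by
  unfold step; split
  · exact Finset.mem_erase.2 ⟨hne, hx⟩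
  · exact Finset.mem_insert_of_mem hx

lemma step_not_mem {S : Finset ℕ} {v : ℕ} (h : v ∉ S) : step S v = insert v S := by
  unfold step; rw [if_neg h]

lemma step_union_not_mem (S C : Finset ℕ) (v : ℕ) (hv : v ∉ C) :
    step (S ∪ C) v = step S v ∪ C := by
  unfold step
  by_cases h : v ∈ S
  · rw [if_pos (Finset.mem_union_left _ h), if_pos h]
    ext x
    simp only [Finset.mem_erase, Finset.mem_union]
    constructor
    · rintro ⟨hne, h | h⟩
      · exact Or.inl ⟨hne, h⟩
      · exact Or.inr h
    · rintro (⟨hne, h⟩ | h)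
      · exact ⟨hne, Or.inl h⟩
      · exact ⟨fun hx => hv (hx ▸ h), Or.inr h⟩
  · rw [if_neg (by simp [h, hv]), if_neg h, Finset.insert_union]

lemma step_union_mem (S C : Finset ℕ) (v : ℕ) (hvS : v ∉ S) (hvC : v ∈ C) :
    step (S ∪ C) v = S ∪ C.erase v := by
  unfold step
  rw [if_pos (Finset.mem_union_right _ hvC)]
  ext x
  simp only [Finset.mem_erase, Finset.mem_union]
  constructor
  · rintro ⟨hne, h | h⟩
    · exact Or.inl h
    · exact Or.inr ⟨hne, h⟩
  · rintro (h | ⟨hne, h⟩)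
    · exact ⟨fun hx => hvS (hx ▸ h), Or.inl h⟩
    · exact ⟨hne, Or.inr h⟩

/-! ### The recursive strategy -/

def fwd (f : ℕ → List ℕ) : ℕ → List ℕ
  | 0 => []
  | m+1 => fwd f m ++ f m

def bwd (f : ℕ → List ℕ) : ℕ → List ℕ
  | 0 => []
  | m+1 => f m ++ bwd f m

def toggle (k : ℕ) : ℕ → ℕ → ℕ → List ℕ
  | 0, _, _ => []
  | fuel+1, i, d =>
    if d ≤ 1 then (if d = 1 then [i+1] else []) else
      let q := (d + k - 1) / k
      let r := (d - 1) / q + 1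
      fwd (fun j => toggle k fuel (i + j*q) q) (r-1)
      ++ toggle k fuel (i + (r-1)*q) (d - (r-1)*q)
      ++ bwd (fun j => toggle k fuel (i + j*q) q) (r-1)

def cks (i q m : ℕ) : Finset ℕ := (Finset.range m).image (fun j => i + (j+1)*q)

lemma mem_cks {i q m x : ℕ} : x ∈ cks i q m ↔ ∃ j < m, x = i + (j+1)*q := by
  simp [cks, eq_comm]

lemma card_cks (i q m : ℕ) (hq : 1 ≤ q) : (cks i q m).card = m := by
  rw [cks, Finset.card_image_of_injective, Finset.card_range]
  intro a b hab
  simp only at hab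
  have h2 : (a+1)*q = (b+1)*q := by omega
  have := Nat.eq_of_mul_eq_mul_right hq h2
  omega

@[simp] lemma cks_zero (i q : ℕ) : cks i q 0 = ∅ := rfl

lemma cks_succ (i q m : ℕ) : cks i q (m+1) = insert (i + (m+1)*q) (cks i q m) := by
  rw [cks, Finset.range_add_one, Finset.image_insert]; rfl

lemma cks_bounds {i q m x : ℕ} (hq : 1 ≤ q) (hx : x ∈ cks i q m) :
    i + q ≤ x ∧ x ≤ i + m * q := by
  rcases mem_cks.1 hx with ⟨j, hj, rfl⟩
  constructor
  · have : 1 * q ≤ (j+1) * q := Nat.mul_le_mul_right _ (by omega)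
    omega
  · have : (j+1) * q ≤ m * q := Nat.mul_le_mul_right _ (by omega)
    omega


lemma not_mem_cks_interior {i q M m x : ℕ} (h1 : i + m*q < x) (h2 : x < i + (m+1)*q) :
    x ∉ cks i q M := by
  intro hx
  rcases mem_cks.1 hx with ⟨l, hl, rfl⟩
  have a : m*q < (l+1)*q := by omega
  have b : (l+1)*q < (m+1)*q := by omega
  have ha := Nat.lt_of_mul_lt_mul_right a
  have hb := Nat.lt_of_mul_lt_mul_right b
  omega

theorem toggle_spec (n k : ℕ) (hk : 2 ≤ k) :
    ∀ fuel d i S, 1 ≤ d → d ≤ fuel →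
    (∀ x, i < x → x < i + d → x ∉ S) → (i = 0 ∨ i ∈ S) →
    LegalFrom n S (toggle k fuel i d) ∧
    runL S (toggle k fuel i d) = step S (i+d) ∧
    maxCard S (toggle k fuel i d) ≤ S.card + k * Nat.clog k d + 1 ∧
    (toggle k fuel i d).length ≤ (2*k-1) ^ Nat.clog k d := by
  intro fuel
  induction fuel with
  | zero => intro d i S h1 h0; omega
  | succ fuel IH =>
    intro d i S hd1 hdf hfree hstart
    by_cases hd2 : d ≤ 1
    · -- base case d = 1
      have hd : d = 1 := by omega
      subst hd
      have htog : toggle k (fuel+1) i 1 = [i+1] := by simp [toggle]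
      rw [htog]
      refine ⟨⟨fun h2 _ => ?_, trivial⟩, rfl, ?_, ?_⟩
      · rcases hstart with h | h
        · omega
        · simpa using h
      · simpa [maxCard, Nat.clog_one_right] using card_step_le S (i+1)
      · simp [Nat.clog_one_right]
    · -- recursive case d ≥ 2
      push_neg at hd2
      set q := (d + k - 1) / k with hq_def
      set r := (d - 1) / q + 1 with hr_def
      -- arithmetic facts
      have hqd : q = (d - 1) / k + 1 := by
        rw [hq_def, show d + k - 1 = (d - 1) + k by omega, Nat.add_div_right _ (by omega)]
      have hdk1 : k * ((d-1)/k) + (d-1) % k = d - 1 := Nat.div_add_mod _ _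
      have hdk2 : (d-1) % k < k := Nat.mod_lt _ (by omega)
      have hdk3 : 2 * ((d-1)/k) ≤ k * ((d-1)/k) := Nat.mul_le_mul_right _ hk
      have hq1 : 1 ≤ q := by omega
      have hqlt : q < d := by omega
      have hkq : d - 1 < k * q := by
        rw [hqd, Nat.mul_add, Nat.mul_one]; omega
      have hdq1 : q * ((d-1)/q) + (d-1) % q = d - 1 := Nat.div_add_mod _ _
      have hdq2 : (d-1) % q < q := Nat.mod_lt _ (by omega)
      have hr2 : 2 ≤ r := by
        have : 1 ≤ (d-1)/q := Nat.one_le_div_iff hq1 |>.2 (by omega)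
        omega
      have hrk : r ≤ k := by
        have : (d-1)/q < k := by
          have h := Nat.div_lt_iff_lt_mul (by omega : 0 < q) |>.2
            (by rw [Nat.mul_comm] at hkq ⊢; exact hkq)
          exact h
        omega
      have hr1 : r - 1 = (d-1)/q := by omega
      have hbridge : (r-1) * q = q * ((d-1)/q) := by rw [hr1, Nat.mul_comm]
      have hrq : (r-1) * q ≤ d - 1 := by omega
      have hrq2 : d - (r-1) * q ≤ q := by omega
      have hd'1 : 1 ≤ d - (r-1)*q := by omega
      have hclog : Nat.clog k d = Nat.clog k q + 1 := by
        rw [Nat.clog_of_two_le (by omega) (by omega)]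
      have hkc : k * Nat.clog k d = k * Nat.clog k q + k := by
        rw [hclog, Nat.mul_add, Nat.mul_one]
      set f : ℕ → List ℕ := fun j => toggle k fuel (i + j*q) q with hf_def
      set B := k * Nat.clog k q + 1 with hB_def
      set E := (2*k-1) ^ Nat.clog k q with hE_def
      have hqfuel : q ≤ fuel := by omega
      -- forward chain
      have FWD : ∀ m, m ≤ r - 1 →
          LegalFrom n S (fwd f m) ∧ runL S (fwd f m) = S ∪ cks i q m ∧
          maxCard S (fwd f m) ≤ S.card + m + B ∧
          (fwd f m).length ≤ m * E := by
        intro m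
        induction m with
        | zero => intro _; exact ⟨trivial, by simp [fwd], by simp [fwd, maxCard], by simp [fwd]⟩
        | succ m ihm =>
          intro hm
          obtain ⟨ihL, ihR, ihC, ihE⟩ := ihm (by omega)
          have hsm : (m+1)*q = m*q + q := by ring
          have hsm' : Nat.succ m * q = m*q + q := Nat.succ_mul m q
          have hmono : (m+1)*q ≤ (r-1)*q := Nat.mul_le_mul_right _ (by omega)
          have hmono2 : m*q ≤ (r-1)*q := Nat.mul_le_mul_right _ (by omega)
          have hcard : (S ∪ cks i q m).card ≤ S.card + m :=
            le_trans (Finset.card_union_le _ _) (by rw [card_cks _ _ _ hq1])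
          have hsub := IH q (i + m*q) (S ∪ cks i q m) hq1 hqfuel
            (by
              intro x hx1 hx2 hx
              rcases Finset.mem_union.1 hx with hx | hx
              · exact hfree x (by omega) (by omega) hx
              · exact not_mem_cks_interior (M := m) (m := m) (by omega) (by omega) hx)
            (by
              rcases Nat.eq_zero_or_pos m with rfl | hm0
              · have h0 : i + 0*q = i := by ring
                rw [h0]
                simpa using hstart
              · right
                refine Finset.mem_union_right _ (mem_cks.2 ⟨m-1, by omega, ?_⟩)
                rw [show m - 1 + 1 = m from by omega])
          obtain ⟨hL, hR, hC, hE⟩ := hsub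
          have hnotmem : i + (m+1)*q ∉ S ∪ cks i q m := by
            intro hx
            rcases Finset.mem_union.1 hx with hx | hx
            · exact hfree _ (by omega) (by omega) hx
            · rcases cks_bounds hq1 hx with ⟨_, h2⟩
              omega
          have hrun : runL S (fwd f (m+1)) = S ∪ cks i q (m+1) := by
            rw [fwd, runL_append, ihR, hR, show i + m*q + q = i + (m+1)*q by omega, step_not_mem hnotmem, cks_succ,
              Finset.union_insert]
          refine ⟨legal_append ihL (by rw [ihR]; exact hL), hrun, ?_, ?_⟩
          · rw [fwd, maxCard_append, ihR]
            have : maxCard (S ∪ cks i q m) (f m) ≤ S.card + m + B := by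
              calc maxCard (S ∪ cks i q m) (f m) ≤ (S ∪ cks i q m).card + B := hC
                _ ≤ S.card + m + B := by omega
            omega
          · rw [fwd, List.length_append]
            have hfE : (f m).length ≤ E := hE
            calc (fwd f m).length + (f m).length ≤ m * E + E := by omega
              _ = (m+1) * E := by ring
      -- middle segment
      obtain ⟨FL, FR, FC, FE⟩ := FWD (r-1) le_rfl
      have hcksfree : ∀ x, i + (r-1)*q < x → x ∉ cks i q (r-1) := by
        intro x hx1 hx
        rcases cks_bounds hq1 hx with ⟨_, h2⟩; omega
      have hcard_r : (S ∪ cks i q (r-1)).card ≤ S.card + (r-1) :=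
        le_trans (Finset.card_union_le _ _) (by rw [card_cks _ _ _ hq1])
      have MID := IH (d - (r-1)*q) (i + (r-1)*q) (S ∪ cks i q (r-1)) hd'1 (by omega)
        (by
          intro x hx1 hx2 hx
          rcases Finset.mem_union.1 hx with hx | hx
          · exact hfree x (by omega) (by omega) hx
          · exact hcksfree x hx1 hx)
        (by
          right
          refine Finset.mem_union_right _ (mem_cks.2 ⟨r-2, by omega, ?_⟩)
          rw [show r - 2 + 1 = r - 1 from by omega])
      obtain ⟨ML, MR, MC, ME⟩ := MID
      have hmid_target : i + (r-1)*q + (d - (r-1)*q) = i + d := by omega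
      have hidnot : i + d ∉ cks i q (r-1) := by
        intro hx; rcases cks_bounds hq1 hx with ⟨_, h2⟩; omega
      have MR' : runL (S ∪ cks i q (r-1)) (toggle k fuel (i + (r-1)*q) (d - (r-1)*q))
          = step S (i+d) ∪ cks i q (r-1) := by
        rw [MR, hmid_target, step_union_not_mem _ _ _ hidnot]
      set T := step S (i + d) with hT_def
      have hTcard : T.card ≤ S.card + 1 := card_step_le _ _
      have hmemT : ∀ x, x ∈ T → x ∈ S ∨ x = i + d := fun x hx => mem_step hx
      -- backward chain
      have BWD : ∀ m, m ≤ r - 1 →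
          LegalFrom n (T ∪ cks i q m) (bwd f m) ∧ runL (T ∪ cks i q m) (bwd f m) = T ∧
          maxCard (T ∪ cks i q m) (bwd f m) ≤ S.card + 1 + m + B ∧
          (bwd f m).length ≤ m * E := by
        intro m
        induction m with
        | zero =>
          intro _
          refine ⟨trivial, by simp [bwd], ?_, by simp [bwd]⟩
          simp only [bwd, cks_zero, Finset.union_empty, maxCard]
          omega
        | succ m ihm =>
          intro hm
          obtain ⟨ihL, ihR, ihC, ihE⟩ := ihm (by omega)
          have hsm : (m+1)*q = m*q + q := by ring
          have hsm' : Nat.succ m * q = m*q + q := Nat.succ_mul m q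
          have hmono : (m+1)*q ≤ (r-1)*q := Nat.mul_le_mul_right _ (by omega)
          have htopnot : i + (m+1)*q ∉ T := by
            intro hx
            rcases hmemT _ hx with hx | hx
            · exact hfree _ (by omega) (by omega) hx
            · omega
          have hcard : (T ∪ cks i q (m+1)).card ≤ S.card + 1 + (m+1) :=
            le_trans (Finset.card_union_le _ _) (by rw [card_cks _ _ _ hq1]; omega)
          have hsub := IH q (i + m*q) (T ∪ cks i q (m+1)) hq1 hqfuel
            (by
              intro x hx1 hx2 hx
              rcases Finset.mem_union.1 hx with hx | hx
              · rcases hmemT _ hx with hx' | hx'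
                · exact hfree x (by omega) (by omega) hx'
                · omega
              · exact not_mem_cks_interior (M := m+1) (m := m) (by omega) (by omega) hx)
            (by
              rcases Nat.eq_zero_or_pos m with rfl | hm0
              · have h0 : i + 0*q = i := by ring
                rw [h0]
                rcases hstart with h | h
                · exact Or.inl h
                · exact Or.inr (Finset.mem_union_left _ (mem_step_of_ne h (by omega)))
              · right
                refine Finset.mem_union_right _ (mem_cks.2 ⟨m-1, by omega, ?_⟩)
                rw [show m - 1 + 1 = m from by omega])
          obtain ⟨hL, hR, hC, hE⟩ := hsub
          have hmemtop : i + (m+1)*q ∈ cks i q (m+1) := mem_cks.2 ⟨m, by omega, rfl⟩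
          have hnotmemm : i + (m+1)*q ∉ cks i q m := by
            intro hx; rcases cks_bounds hq1 hx with ⟨_, h2⟩; omega
          have hrun1 : runL (T ∪ cks i q (m+1)) (f m) = T ∪ cks i q m := by
            rw [hR, show i + m*q + q = i + (m+1)*q by omega,
              step_union_mem _ _ _ htopnot hmemtop, cks_succ, Finset.erase_insert hnotmemm]
          refine ⟨legal_append hL (by rw [hrun1]; exact ihL), ?_, ?_, ?_⟩
          · rw [bwd, runL_append, hrun1, ihR]
          · rw [bwd, maxCard_append, hrun1]
            have h1 : maxCard (T ∪ cks i q (m+1)) (f m) ≤ S.card + 1 + (m+1) + B := by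
              calc maxCard (T ∪ cks i q (m+1)) (f m) ≤ (T ∪ cks i q (m+1)).card + B := hC
                _ ≤ S.card + 1 + (m+1) + B := by omega
            omega
          · rw [bwd, List.length_append]
            have hfE : (f m).length ≤ E := hE
            calc (f m).length + (bwd f m).length ≤ E + m * E := by omega
              _ = (m+1) * E := by ring
      obtain ⟨BL, BR, BC, BE⟩ := BWD (r-1) le_rfl
      -- assemble
      have htog : toggle k (fuel+1) i d =
          fwd f (r-1) ++ toggle k fuel (i + (r-1)*q) (d - (r-1)*q) ++ bwd f (r-1) := by
        rw [toggle]
        rw [if_neg (by omega)]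
      rw [htog]
      have hrun_all : runL S (fwd f (r-1) ++ toggle k fuel (i + (r-1)*q) (d - (r-1)*q)
          ++ bwd f (r-1)) = T := by
        rw [runL_append, runL_append, FR, MR', BR]
      have hEpos : 1 ≤ E := Nat.one_le_iff_ne_zero.2 (pow_ne_zero _ (by omega))
      refine ⟨?_, hrun_all, ?_, ?_⟩
      · refine legal_append (legal_append FL (by rw [FR]; exact ML)) ?_
        rw [runL_append, FR, MR']
        exact BL
      · rw [maxCard_append, maxCard_append, runL_append, FR, MR']
        have h1 : maxCard S (fwd f (r-1)) ≤ S.card + (r-1) + B := FC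
        have h2 : maxCard (S ∪ cks i q (r-1)) (toggle k fuel (i + (r-1)*q) (d - (r-1)*q))
            ≤ S.card + (r-1) + (k * Nat.clog k (d - (r-1)*q) + 1) := by
          calc _ ≤ (S ∪ cks i q (r-1)).card + (k * Nat.clog k (d - (r-1)*q) + 1) := by
                have := MC; omega
            _ ≤ _ := by omega
        have hclogmono : Nat.clog k (d - (r-1)*q) ≤ Nat.clog k q := Nat.clog_mono_right _ hrq2
        have h2' : maxCard (S ∪ cks i q (r-1)) (toggle k fuel (i + (r-1)*q) (d - (r-1)*q))
            ≤ S.card + (r-1) + B := by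
          have : k * Nat.clog k (d - (r-1)*q) ≤ k * Nat.clog k q :=
            Nat.mul_le_mul_left _ hclogmono
          omega
        have h3 : maxCard (T ∪ cks i q (r-1)) (bwd f (r-1)) ≤ S.card + 1 + (r-1) + B := BC
        omega
      · rw [List.length_append, List.length_append]
        have hME : (toggle k fuel (i + (r-1)*q) (d - (r-1)*q)).length ≤ E := by
          calc _ ≤ (2*k-1) ^ Nat.clog k (d - (r-1)*q) := ME
            _ ≤ E := Nat.pow_le_pow_right (by omega) (Nat.clog_mono_right _ hrq2)
        calc (fwd f (r-1)).length + (toggle k fuel (i + (r-1)*q) (d - (r-1)*q)).length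
              + (bwd f (r-1)).length ≤ (r-1) * E + E + (r-1) * E := by omega
          _ = (2*(r-1)+1) * E := by ring
          _ ≤ (2*k-1) * E := Nat.mul_le_mul_right _ (by omega)
          _ = (2*k-1) ^ (Nat.clog k q + 1) := by rw [pow_succ]; ring
          _ = (2*k-1) ^ Nat.clog k d := by rw [hclog]



lemma step_zero_add (n : ℕ) : step (∅ : Finset ℕ) (0 + n) = {n} := by
  simp [step]

lemma bridge (n : ℕ) (L : List ℕ) (hleg : LegalFrom n ∅ L) (hrun : runL ∅ L = {n}) :
    IsQPebbling (lineE n) {n} (fun i => (↑(runL ∅ (L.take i)) : Set ℕ)) L.length ∧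
    spaceCost (fun i => (↑(runL ∅ (L.take i)) : Set ℕ)) L.length ≤ maxCard ∅ L := by
  constructor
  · constructor
    · simp
    · rw [List.take_length, hrun]; simp
    · intro i h1 h2 x hx
      obtain ⟨j, rfl⟩ : ∃ j, i = j + 1 := ⟨i - 1, by omega⟩
      have hj : j < L.length := by omega
      simp only [Nat.add_sub_cancel] at hx ⊢
      set F := runL ∅ (L.take j) with hF
      set v := L.get ⟨j, hj⟩ with hv
      have hstep : runL ∅ (L.take (j+1)) = step F v := run_take_succ L ∅ j hj
      have hlegv : 2 ≤ v → v ≤ n → v - 1 ∈ F := legal_get n L ∅ j hj hleg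
      rw [Set.mem_diff, hstep] at hx
      have hxv : x = v := by
        rcases mem_step (Finset.mem_coe.1 hx.1) with h | h
        · exact absurd (Finset.mem_coe.2 h) hx.2
        · exact h
      subst hxv
      intro u hu
      obtain ⟨he, hu1, hun⟩ : v = u + 1 ∧ 1 ≤ u ∧ v ≤ n := hu
      have := hlegv (by omega) hun
      have : u ∈ F := by rwa [show v - 1 = u by omega] at this
      exact Finset.mem_coe.2 this
    · intro i h1 h2 x hx
      obtain ⟨j, rfl⟩ : ∃ j, i = j + 1 := ⟨i - 1, by omega⟩
      have hj : j < L.length := by omega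
      simp only [Nat.add_sub_cancel] at hx ⊢
      set F := runL ∅ (L.take j) with hF
      set v := L.get ⟨j, hj⟩ with hv
      have hstep : runL ∅ (L.take (j+1)) = step F v := run_take_succ L ∅ j hj
      have hlegv : 2 ≤ v → v ≤ n → v - 1 ∈ F := legal_get n L ∅ j hj hleg
      rw [Set.mem_diff, hstep] at hx
      have hxv : x = v := by
        by_contra hne
        exact hx.2 (Finset.mem_coe.2 (mem_step_of_ne (Finset.mem_coe.1 hx.1) hne))
      subst hxv
      intro u hu
      obtain ⟨he, hu1, hun⟩ : v = u + 1 ∧ 1 ≤ u ∧ v ≤ n := hu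
      have := hlegv (by omega) hun
      have : u ∈ F := by rwa [show v - 1 = u by omega] at this
      exact Finset.mem_coe.2 this
    · intro i h1 h2 u hu
      obtain ⟨j, rfl⟩ : ∃ j, i = j + 1 := ⟨i - 1, by omega⟩
      have hj : j < L.length := by omega
      simp only [Nat.add_sub_cancel] at hu ⊢
      set F := runL ∅ (L.take j) with hF
      set v := L.get ⟨j, hj⟩ with hv
      have hstep : runL ∅ (L.take (j+1)) = step F v := run_take_succ L ∅ j hj
      have hlegv : 2 ≤ v → v ≤ n → v - 1 ∈ F := legal_get n L ∅ j hj hleg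
      rw [hstep] at hu ⊢
      have hx : ∃ x, (x = v) ∧ lineE n u x := by
        rcases hu with ⟨x, hx, hE⟩ | ⟨x, hx, hE⟩
        · rw [Set.mem_diff] at hx
          refine ⟨x, ?_, hE⟩
          rcases mem_step (Finset.mem_coe.1 hx.1) with h | h
          · exact absurd (Finset.mem_coe.2 h) hx.2
          · exact h
        · rw [Set.mem_diff] at hx
          refine ⟨x, ?_, hE⟩
          by_contra hne
          exact hx.2 (Finset.mem_coe.2 (mem_step_of_ne (Finset.mem_coe.1 hx.1) hne))
      obtain ⟨x, rfl, he, hu1, hun⟩ := hx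
      have := hlegv (by omega) hun
      have huF : u ∈ F := by rwa [show v - 1 = u by omega] at this
      exact Finset.mem_coe.2 (mem_step_of_ne huF (by omega))
  · refine Finset.sup_le fun i _ => ?_
    rw [Set.ncard_coe_finset]
    exact run_take_card_le L ∅ i

end Peb


/-- For every constant `ε > 0`, the quantum parallel space-time pebbling complexity of
the line graph `L_N` is `O(N^{1+ε})`. -/
theorem stmt4 (ε : ℝ) (hε : 0 < ε) :
    ∃ C : ℝ, 0 < C ∧ ∀ N : ℕ, 1 ≤ N →
      ∃ P t, IsQPebbling (lineE N) {N} P t ∧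
        (stCost P t : ℝ) ≤ C * (N : ℝ) ^ ((1 : ℝ) + ε) := by
  classical
  set k : ℕ := 2 + ⌈(2:ℝ) ^ (2/ε)⌉₊ with hk_def
  have hk2 : 2 ≤ k := by omega
  have hkR : (2:ℝ) ^ (2/ε) ≤ (k : ℝ) := by
    have h1 : (2:ℝ) ^ (2/ε) ≤ (⌈(2:ℝ) ^ (2/ε)⌉₊ : ℝ) := Nat.le_ceil _
    have h2 : ((⌈(2:ℝ) ^ (2/ε)⌉₊ : ℕ) : ℝ) ≤ (k : ℝ) := by
      exact_mod_cast Nat.le_add_left _ 2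
    linarith
  have hkpos : (0:ℝ) < (k:ℝ) := by positivity
  have hk2R : (2:ℝ) ≤ (k:ℝ) ^ (ε/2) := by
    have h1 : ((2:ℝ) ^ (2/ε)) ^ (ε/2) ≤ (k:ℝ) ^ (ε/2) :=
      Real.rpow_le_rpow (by positivity) hkR (by positivity)
    have h2 : ((2:ℝ) ^ (2/ε)) ^ (ε/2) = (2:ℝ) ^ ((2/ε) * (ε/2)) :=
      (Real.rpow_mul (by norm_num) _ _).symm
    have h3 : (2/ε) * (ε/2) = 1 := by field_simp
    rw [h2, h3, Real.rpow_one] at h1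
    exact h1
  set C2 : ℝ := (k : ℝ) * (2/ε) / Real.log 2 + (k : ℝ) + 1 with hC2_def
  have hlog2 : 0 < Real.log 2 := Real.log_pos (by norm_num)
  have hC2pos : 0 < C2 := by
    have : 0 ≤ (k : ℝ) * (2/ε) / Real.log 2 := by positivity
    positivity
  refine ⟨(2 * (k:ℝ)) * C2, by positivity, ?_⟩
  intro N hN
  -- construct the pebbling
  obtain ⟨hleg, hrun, hcard, hlen⟩ :=
    Peb.toggle_spec N k hk2 N N 0 ∅ hN le_rfl (by simp) (Or.inl rfl)
  set L := Peb.toggle k N 0 N with hL_def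
  have hrun' : Peb.runL ∅ L = {N} := by rw [hrun, Peb.step_zero_add]
  obtain ⟨hpeb, hspace⟩ := Peb.bridge N L hleg hrun'
  refine ⟨_, L.length, hpeb, ?_⟩
  set c := Nat.clog k N with hc_def
  have ht : L.length ≤ (2*k-1)^c := hlen
  have hs : spaceCost (fun i => (↑(Peb.runL ∅ (L.take i)) : Set ℕ)) L.length ≤ k * c + 1 := by
    calc spaceCost _ L.length ≤ Peb.maxCard ∅ L := hspace
      _ ≤ (∅ : Finset ℕ).card + k * c + 1 := hcard
      _ = k * c + 1 := by simp
  have hNpos : (0:ℝ) < (N:ℝ) := by exact_mod_cast hN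
  have hN1 : (1:ℝ) ≤ (N:ℝ) := by exact_mod_cast hN
  have hNrp : (1:ℝ) ≤ (N:ℝ) ^ (ε/2) := by
    calc (1:ℝ) = (1:ℝ) ^ (ε/2) := (Real.one_rpow _).symm
      _ ≤ (N:ℝ) ^ (ε/2) := Real.rpow_le_rpow (by norm_num) hN1 (by positivity)
  -- bound the two factors
  have hA : ((2*k-1 : ℕ)^c : ℝ) ≤ (2 * (k:ℝ)) * (N:ℝ) ^ ((1:ℝ) + ε/2) := by
    rcases Nat.eq_zero_or_pos c with hc0 | hcpos
    · rw [hc0]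
      have : (1:ℝ) ≤ (N:ℝ) ^ ((1:ℝ) + ε/2) := by
        calc (1:ℝ) = (1:ℝ) ^ ((1:ℝ) + ε/2) := (Real.one_rpow _).symm
          _ ≤ (N:ℝ) ^ ((1:ℝ) + ε/2) := Real.rpow_le_rpow (by norm_num) hN1 (by positivity)
      have hk4 : (4:ℝ) ≤ 2 * (k:ℝ) := by
        have : (2:ℝ) ≤ (k:ℝ) := by exact_mod_cast hk2
        linarith
      simp only [pow_zero, Nat.cast_one]
      nlinarith
    · -- c ≥ 1, hence N ≥ 2
      have hN2 : 2 ≤ N := by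
        by_contra h
        have : N = 1 := by omega
        rw [this] at hc_def
        simp [Nat.clog_one_right] at hc_def
        omega
      have hpow : k ^ (c - 1) ≤ N := by
        have h := Nat.pow_pred_clog_lt_self (show 1 < k by omega) (show 1 < N by omega)
        have : k ^ (c - 1) < N := by
          simpa [Nat.pred_eq_sub_one, ← hc_def] using h
        omega
      have hpowR : ((k:ℝ)) ^ (c - 1 : ℕ) ≤ (N:ℝ) := by exact_mod_cast hpow
      have e1 : ((2*k-1:ℕ) : ℝ) ≤ 2*(k:ℝ) := by
        push_cast [Nat.cast_sub (show 1 ≤ 2*k by omega)]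
        linarith
      have e2 : ((2*k-1:ℕ)^c : ℝ) = ((2*k-1:ℕ):ℝ) * ((2*k-1:ℕ):ℝ)^(c-1:ℕ) := by
        push_cast
        rw [← pow_succ']
        congr 1
        omega
      have ebase : ((2*k-1:ℕ):ℝ) ≤ (k:ℝ) ^ ((1:ℝ)+ε/2) := by
        have hsplit : (k:ℝ)^((1:ℝ)+ε/2) = (k:ℝ) * (k:ℝ)^(ε/2) := by
          rw [Real.rpow_add hkpos, Real.rpow_one]
        rw [hsplit]
        have h2k : 2*(k:ℝ) ≤ (k:ℝ)^(ε/2) * (k:ℝ) := by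
          have := mul_le_mul_of_nonneg_right hk2R (le_of_lt hkpos)
          linarith
        calc ((2*k-1:ℕ):ℝ) ≤ 2*(k:ℝ) := e1
          _ ≤ (k:ℝ)^(ε/2) * (k:ℝ) := h2k
          _ = (k:ℝ) * (k:ℝ)^(ε/2) := by ring
      have e3 : ((2*k-1:ℕ):ℝ) ^ (c-1:ℕ) ≤ ((k:ℝ) ^ ((1:ℝ)+ε/2)) ^ (c-1:ℕ) :=
        pow_le_pow_left₀ (by positivity) ebase _
      have e4 : ((k:ℝ) ^ ((1:ℝ)+ε/2)) ^ (c-1:ℕ) = ((k:ℝ)^(c-1:ℕ)) ^ ((1:ℝ)+ε/2) := by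
        rw [← Real.rpow_natCast ((k:ℝ)^((1:ℝ)+ε/2)) (c-1), ← Real.rpow_mul (le_of_lt hkpos),
          mul_comm, Real.rpow_mul (le_of_lt hkpos), Real.rpow_natCast]
      have e5 : ((k:ℝ)^(c-1:ℕ)) ^ ((1:ℝ)+ε/2) ≤ (N:ℝ) ^ ((1:ℝ)+ε/2) :=
        Real.rpow_le_rpow (by positivity) hpowR (by positivity)
      have e6 : ((2*k-1:ℕ):ℝ) ^ (c-1:ℕ) ≤ (N:ℝ) ^ ((1:ℝ)+ε/2) := by
        calc ((2*k-1:ℕ):ℝ) ^ (c-1:ℕ) ≤ ((k:ℝ) ^ ((1:ℝ)+ε/2)) ^ (c-1:ℕ) := e3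
          _ = ((k:ℝ)^(c-1:ℕ)) ^ ((1:ℝ)+ε/2) := e4
          _ ≤ (N:ℝ) ^ ((1:ℝ)+ε/2) := e5
      calc ((2*k-1:ℕ)^c : ℝ) = ((2*k-1:ℕ):ℝ) * ((2*k-1:ℕ):ℝ)^(c-1:ℕ) := e2
        _ ≤ (2*(k:ℝ)) * ((N:ℝ) ^ ((1:ℝ)+ε/2)) := by
            apply mul_le_mul e1 e6 (by positivity) (by positivity)
        _ = 2 * (k:ℝ) * (N:ℝ) ^ ((1:ℝ)+ε/2) := by ring
  have hB : ((k * c + 1 : ℕ) : ℝ) ≤ C2 * (N:ℝ) ^ (ε/2) := by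
    have hlogN : Real.log (N:ℝ) ≤ (2/ε) * (N:ℝ)^(ε/2) := by
      have hlogr : Real.log ((N:ℝ)^(ε/2)) = (ε/2) * Real.log N := Real.log_rpow hNpos _
      have hsub : Real.log ((N:ℝ)^(ε/2)) ≤ (N:ℝ)^(ε/2) - 1 :=
        Real.log_le_sub_one_of_pos (by positivity)
      have h1 : (ε/2) * Real.log N ≤ (N:ℝ)^(ε/2) := by
        rw [← hlogr]; linarith
      have h2 : Real.log N = (2/ε) * ((ε/2) * Real.log N) := by
        field_simp
      rw [h2]
      exact mul_le_mul_of_nonneg_left h1 (by positivity)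
    rcases Nat.eq_zero_or_pos c with hc0 | hcpos
    · rw [hc0]
      have hC2one : (1:ℝ) ≤ C2 := by
        have : (0:ℝ) ≤ (k : ℝ) * (2/ε) / Real.log 2 := by positivity
        have hk0 : (2:ℝ) ≤ (k:ℝ) := by exact_mod_cast hk2
        rw [hC2_def]; linarith
      simp only [Nat.mul_zero, Nat.zero_add, Nat.cast_one]
      calc (1:ℝ) ≤ C2 := hC2one
        _ = C2 * 1 := by ring
        _ ≤ C2 * (N:ℝ)^(ε/2) := mul_le_mul_of_nonneg_left hNrp (le_of_lt hC2pos)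
    · have hN2 : 2 ≤ N := by
        by_contra h
        have : N = 1 := by omega
        rw [this] at hc_def
        simp [Nat.clog_one_right] at hc_def
        omega
      have hpow : k ^ (c - 1) ≤ N := by
        have h := Nat.pow_pred_clog_lt_self (show 1 < k by omega) (show 1 < N by omega)
        have : k ^ (c - 1) < N := by
          simpa [Nat.pred_eq_sub_one, ← hc_def] using h
        omega
      have h21 : (2:ℕ)^(c-1) ≤ N := le_trans (Nat.pow_le_pow_left hk2 _) hpow
      have h21R : (2:ℝ)^(c-1:ℕ) ≤ (N:ℝ) := by exact_mod_cast h21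
      have h22 : ((c-1:ℕ):ℝ) * Real.log 2 ≤ Real.log N := by
        rw [← Real.log_pow]
        exact Real.log_le_log (by positivity) h21R
      have h23 : ((c-1:ℕ):ℝ) ≤ Real.log N / Real.log 2 :=
        (le_div_iff₀ hlog2).2 h22
      have hcast : ((k * c + 1 : ℕ) : ℝ) = (k:ℝ) * ((c-1:ℕ):ℝ) + ((k:ℝ) + 1) := by
        push_cast [Nat.cast_sub (show 1 ≤ c from hcpos)]
        ring
      have hkR0 : (0:ℝ) ≤ (k:ℝ) := le_of_lt hkpos
      calc ((k * c + 1 : ℕ) : ℝ) = (k:ℝ) * ((c-1:ℕ):ℝ) + ((k:ℝ) + 1) := hcast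
        _ ≤ (k:ℝ) * (Real.log N / Real.log 2) + ((k:ℝ) + 1) := by
            have := mul_le_mul_of_nonneg_left h23 hkR0
            linarith
        _ ≤ (k:ℝ) * ((2/ε) * (N:ℝ)^(ε/2) / Real.log 2) + ((k:ℝ) + 1) * (N:ℝ)^(ε/2) := by
            have hh : Real.log N / Real.log 2 ≤ (2/ε) * (N:ℝ)^(ε/2) / Real.log 2 := by
              gcongr
            have h1 := mul_le_mul_of_nonneg_left hh hkR0
            have h2 : (k:ℝ) + 1 ≤ ((k:ℝ) + 1) * (N:ℝ)^(ε/2) := by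
              nlinarith [hNrp]
            linarith
        _ = C2 * (N:ℝ)^(ε/2) := by
            rw [hC2_def]; field_simp; ring
  -- final assembly
  have hst : (stCost (fun i => (↑(Peb.runL ∅ (L.take i)) : Set ℕ)) L.length : ℝ)
      = (L.length : ℝ) * (spaceCost (fun i => (↑(Peb.runL ∅ (L.take i)) : Set ℕ)) L.length : ℝ) := by
    rw [stCost]; push_cast; ring
  rw [hst]
  have htR : (L.length : ℝ) ≤ ((2*k-1:ℕ)^c : ℝ) := by exact_mod_cast ht
  have hsR : (spaceCost (fun i => (↑(Peb.runL ∅ (L.take i)) : Set ℕ)) L.length : ℝ)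
      ≤ ((k * c + 1 : ℕ) : ℝ) := by exact_mod_cast hs
  have hmul : (L.length : ℝ) * (spaceCost (fun i => (↑(Peb.runL ∅ (L.take i)) : Set ℕ)) L.length : ℝ)
      ≤ (2 * (k:ℝ) * (N:ℝ) ^ ((1:ℝ)+ε/2)) * (C2 * (N:ℝ)^(ε/2)) := by
    apply mul_le_mul (htR.trans hA) (hsR.trans hB) (by positivity) (by positivity)
  refine hmul.trans (le_of_eq ?_)
  have hNpow : (N:ℝ) ^ ((1:ℝ)+ε/2) * (N:ℝ)^(ε/2) = (N:ℝ) ^ ((1:ℝ)+ε) := by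
    rw [← Real.rpow_add hNpos]
    ring_nf
  calc (2 * (k:ℝ) * (N:ℝ) ^ ((1:ℝ)+ε/2)) * (C2 * (N:ℝ)^(ε/2))
      = 2 * (k:ℝ) * C2 * ((N:ℝ) ^ ((1:ℝ)+ε/2) * (N:ℝ)^(ε/2)) := by ring
    _ = 2 * (k:ℝ) * C2 * (N:ℝ) ^ ((1:ℝ)+ε) := by rw [hNpow]
end

section
/- If the DAG G on N nodes with indegree at most 2 and unique sink N is (e,d)-reducible, then the quantum parallel space-time pebbling complexity of G is at most O(Ne + N·d·2^d): there is a legal parallel quantum pebbling of G with at most 2N rounds using at most e + 8d·2^d + 3 pebbles in every round. -/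
attribute [local instance] Classical.propDecidable

/-- The subgraph of `E` obtained by deleting the nodes of `S` (and incident edges). -/
def subE (E : ℕ → ℕ → Prop) (S : Set ℕ) : ℕ → ℕ → Prop :=
  fun u v => E u v ∧ u ∉ S ∧ v ∉ S

/-- The set of all (strict) ancestors of `v`. -/
def ancestors (E : ℕ → ℕ → Prop) (v : ℕ) : Set ℕ := {u | Relation.TransGen E u v}

/-- There is a directed path with `d` nodes in the graph `E`. -/
def HasPath (E : ℕ → ℕ → Prop) (d : ℕ) : Prop :=
  ∃ p : ℕ → ℕ, ∀ i, i + 1 < d → E (p i) (p (i+1))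

/-- There is a directed path from `v` to `w` containing exactly `n` nodes. -/
def PathFromTo (E : ℕ → ℕ → Prop) (v w n : ℕ) : Prop :=
  ∃ p : ℕ → ℕ, p 0 = v ∧ p (n - 1) = w ∧ ∀ i, i + 1 < n → E (p i) (p (i+1))

/-- `S_{≤ v} := S ∩ [v]`. -/
def Sle (S : Set ℕ) (v : ℕ) : Set ℕ := S ∩ Set.Icc 1 v

/-- `A_{w,S,i}`: the set of nodes `v` such that the longest directed path from `v` to `w`
in `G − S_{≤ w-1}` contains exactly `i` nodes (empty when `w ∉ [N]`). -/
def Aset (N : ℕ) (E : ℕ → ℕ → Prop) (S : Set ℕ) (w i : ℕ) : Set ℕ :=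
  {v | 1 ≤ w ∧ w ≤ N ∧ 1 ≤ i ∧ PathFromTo (subE E (Sle S (w-1))) v w i ∧
       ∀ j, i < j → ¬ PathFromTo (subE E (Sle S (w-1))) v w j}


namespace QPebAux

/-! ### Auxiliary definitions -/

/-- Nodes whose "distance window" `(w,k)` is active at round `i`. -/
def KsetQ (N : ℕ) (E : ℕ → ℕ → Prop) (S : Set ℕ) (i : ℕ) : Set ℕ :=
  {v | ∃ w k, w < i + k ∧ i < w + k ∧ v ∈ Aset N E S w k}

/-- Configuration of the forward phase at round `i`. -/
def coreQ (N : ℕ) (E : ℕ → ℕ → Prop) (S : Set ℕ) (i : ℕ) : Set ℕ :=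
  Sle S i ∪ KsetQ N E S i

/-- The full pebbling: forward phase for `i ≤ N`, mirrored phase afterwards. -/
def PQ (N : ℕ) (E : ℕ → ℕ → Prop) (S : Set ℕ) (i : ℕ) : Set ℕ :=
  if i ≤ N then coreQ N E S i else coreQ N E S (2*N - i) ∪ {N}

/-- Nodes having a path with exactly `ℓ` nodes to `w` in `G - S_{≤ w-1}`. -/
def Dset (E : ℕ → ℕ → Prop) (S : Set ℕ) (w ℓ : ℕ) : Set ℕ :=
  {v | PathFromTo (subE E (Sle S (w-1))) v w ℓ}

/-- Nodes having a path with at most `ℓ` nodes to `w` in `G - S_{≤ w-1}`. -/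
def Bset (E : ℕ → ℕ → Prop) (S : Set ℕ) (w ℓ : ℕ) : Set ℕ :=
  {v | ∃ m, 1 ≤ m ∧ m ≤ ℓ ∧ v ∈ Dset E S w m}

/-! ### Path lemmas -/

lemma path_mono {E : ℕ → ℕ → Prop} (hE : ∀ u v, E u v → u < v) {p : ℕ → ℕ} {n : ℕ}
    (hp : ∀ i, i + 1 < n → E (p i) (p (i+1))) :
    ∀ a b, a ≤ b → b < n → p a + (b - a) ≤ p b := by
  intro a b
  induction b with
  | zero => intro h1 _; interval_cases a; simp
  | succ b ih =>
    intro hab hbn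
    rcases Nat.eq_or_lt_of_le hab with h | h
    · subst h; simp
    · have hab' : a ≤ b := by omega
      have h1 := ih hab' (by omega)
      have h2 := hE _ _ (hp b hbn)
      omega

lemma pft_le {E : ℕ → ℕ → Prop} (hE : ∀ u v, E u v → u < v) {T : Set ℕ} {v w n : ℕ}
    (h : PathFromTo (subE E T) v w n) (hn : 1 ≤ n) : v + (n - 1) ≤ w := by
  obtain ⟨p, h0, h1, he⟩ := h
  have he' : ∀ i, i + 1 < n → E (p i) (p (i+1)) := fun i hi => (he i hi).1
  have := path_mono hE he' 0 (n-1) (by omega) (by omega)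
  simpa [h0, h1] using this

lemma pft_len_le {N d : ℕ} {E : ℕ → ℕ → Prop} {S : Set ℕ}
    (hrange : ∀ u v, E u v → 1 ≤ u ∧ u < v ∧ v ≤ N)
    (hS : ¬ HasPath (subE E S) d) (hd2 : 2 ≤ d) {w v n : ℕ} (hw : 1 ≤ w)
    (h : PathFromTo (subE E (Sle S (w-1))) v w n) : n ≤ d := by
  by_contra hcon
  push_neg at hcon
  obtain ⟨p, h0, h1, he⟩ := h
  have he' : ∀ i, i + 1 < n → E (p i) (p (i+1)) := fun i hi => (he i hi).1
  have hElt : ∀ u v, E u v → u < v := fun u v h => (hrange u v h).2.1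
  have key : ∀ j, j + 1 < n → p j ∉ S := by
    intro j hj hjS
    have hedge := he j hj
    have h1j : 1 ≤ p j := (hrange _ _ hedge.1).1
    have hlt : p j + (n - 1 - j) ≤ p (n-1) := path_mono hElt he' j (n-1) (by omega) (by omega)
    rw [h1] at hlt
    exact hedge.2.1 ⟨hjS, h1j, by omega⟩
  exact hS ⟨p, fun i hi => ⟨he' i (by omega), key i (by omega), key (i+1) (by omega)⟩⟩

/-! ### `Aset` lemmas -/

lemma aset_facts {N d : ℕ} {E : ℕ → ℕ → Prop} {S : Set ℕ}
    (hrange : ∀ u v, E u v → 1 ≤ u ∧ u < v ∧ v ≤ N)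
    (hS : ¬ HasPath (subE E S) d) (hd2 : 2 ≤ d) {w k x : ℕ}
    (hx : x ∈ Aset N E S w k) :
    1 ≤ w ∧ w ≤ N ∧ 1 ≤ k ∧ 1 ≤ x ∧ x + k ≤ w + 1 ∧ k ≤ d := by
  obtain ⟨hw1, hwN, hk1, hpath, hmax⟩ := hx
  have hElt : ∀ u v, E u v → u < v := fun u v h => (hrange u v h).2.1
  have hle := pft_le hElt hpath hk1
  have hkd : k ≤ d := pft_len_le hrange hS hd2 hw1 hpath
  have hx1 : 1 ≤ x := by
    rcases Nat.lt_or_ge k 2 with hk | hk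
    · have hk' : k = 1 := by omega
      subst hk'
      obtain ⟨p, h0, h1, _⟩ := hpath
      simp only [Nat.sub_self] at h1
      omega
    · obtain ⟨p, h0, h1, he⟩ := hpath
      have := (hrange _ _ (he 0 (by omega)).1).1
      omega
  exact ⟨hw1, hwN, hk1, hx1, by omega, hkd⟩

lemma self_mem_aset {N : ℕ} {E : ℕ → ℕ → Prop} {S : Set ℕ}
    (hrange : ∀ u v, E u v → 1 ≤ u ∧ u < v ∧ v ≤ N) {w : ℕ}
    (hw1 : 1 ≤ w) (hwN : w ≤ N) : w ∈ Aset N E S w 1 := by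
  have hElt : ∀ u v, E u v → u < v := fun u v h => (hrange u v h).2.1
  refine ⟨hw1, hwN, le_refl 1, ⟨fun _ => w, rfl, rfl, fun i hi => absurd hi (by omega)⟩, ?_⟩
  intro j hj hpath
  have := pft_le hElt hpath (by omega)
  omega

lemma parent_mem_aset {N d : ℕ} {E : ℕ → ℕ → Prop} {S : Set ℕ}
    (hrange : ∀ u v, E u v → 1 ≤ u ∧ u < v ∧ v ≤ N)
    (hS : ¬ HasPath (subE E S) d) (hd2 : 2 ≤ d) {w j x u : ℕ}
    (hx : x ∈ Aset N E S w j) (hu : E u x) (huS : u ∉ S) :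
    ∃ k', j + 1 ≤ k' ∧ u ∈ Aset N E S w k' := by
  obtain ⟨hw1, hwN, hj1, hpath, hmax⟩ := hx
  have hElt : ∀ u v, E u v → u < v := fun u v h => (hrange u v h).2.1
  have hxS : x ∉ Sle S (w-1) := by
    rcases Nat.lt_or_ge j 2 with hj' | hj'
    · have hj'' : j = 1 := by omega
      subst hj''
      obtain ⟨p, h0, h1, _⟩ := hpath
      simp only [Nat.sub_self] at h1
      have hxw : x = w := by omega
      subst hxw
      rintro ⟨_, _, hle⟩
      omega
    · obtain ⟨p, h0, h1, he⟩ := hpath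
      have := (he 0 (by omega)).2.1
      rwa [h0] at this
  have huSle : u ∉ Sle S (w-1) := fun h => huS h.1
  have hnew : PathFromTo (subE E (Sle S (w-1))) u w (j+1) := by
    obtain ⟨p, h0, h1, he⟩ := hpath
    refine ⟨fun i => if i = 0 then u else p (i-1), by simp, ?_, ?_⟩
    · simp only [Nat.add_sub_cancel]
      have : j ≠ 0 := by omega
      simp only [this, if_neg]
      exact h1
    · intro i hi
      rcases Nat.eq_or_lt_of_le (Nat.zero_le i) with h | h
      · subst h
        simp only [if_pos rfl, if_neg (by omega : (1:ℕ) ≠ 0)]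
        simp only [Nat.sub_self]
        rw [h0]
        exact ⟨hu, huSle, hxS⟩
      · have hi0 : i ≠ 0 := by omega
        have hi10 : i + 1 ≠ 0 := by omega
        simp only [if_neg hi0, if_neg hi10]
        have : i - 1 + 1 = i := by omega
        have h2 := he (i-1) (by omega)
        rwa [this] at h2
  set T := {n | PathFromTo (subE E (Sle S (w-1))) u w n} with hT
  have hmem : j + 1 ∈ T := hnew
  have hbdd : ∀ n ∈ T, n ≤ d := fun n hn => pft_len_le hrange hS hd2 hw1 hn
  have hk'T : sSup T ∈ T := Nat.sSup_mem ⟨j+1, hmem⟩ ⟨d, hbdd⟩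
  have hk'ge : j + 1 ≤ sSup T := le_csSup ⟨d, hbdd⟩ hmem
  refine ⟨sSup T, hk'ge, hw1, hwN, by omega, hk'T, ?_⟩
  intro j' hj' hp'
  have : j' ≤ sSup T := le_csSup ⟨d, hbdd⟩ hp'
  omega

/-! ### Main legality lemma -/

lemma mainLeg {N d : ℕ} {E : ℕ → ℕ → Prop} {S : Set ℕ}
    (hrange : ∀ u v, E u v → 1 ≤ u ∧ u < v ∧ v ≤ N)
    (hS : ¬ HasPath (subE E S) d) (hd2 : 2 ≤ d) {m : ℕ} (hmN : m + 1 ≤ N) {x : ℕ}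
    (hx : (x ∈ coreQ N E S (m+1) ∧ x ∉ coreQ N E S m) ∨
          (x ∈ coreQ N E S m ∧ x ∉ coreQ N E S (m+1))) {u : ℕ} (hu : E u x) :
    u ∈ coreQ N E S m ∧ u ∈ coreQ N E S (m+1) := by
  have key : ∃ w j, x ∈ Aset N E S w j ∧ w ≤ m + j ∧ m + 1 ≤ w + j := by
    rcases hx with ⟨hin, hout⟩ | ⟨hin, hout⟩
    · rcases hin with hsle | hK
      · -- x ∈ Sle S (m+1), x ∉ core m : x = m+1 ∈ S
        obtain ⟨hxS, hx1, hxle⟩ := hsle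
        have hxm : x = m + 1 := by
          by_contra hne
          exact hout (Or.inl ⟨hxS, hx1, by omega⟩)
        subst hxm
        exact ⟨m+1, 1, self_mem_aset hrange (by omega) hmN, by omega, by omega⟩
      · obtain ⟨w, k, ha1, ha2, hA⟩ := hK
        have hnot : ¬ (w < m + k ∧ m < w + k) := by
          intro hc
          exact hout (Or.inr ⟨w, k, hc.1, hc.2, hA⟩)
        exact ⟨w, k, hA, by omega, by omega⟩
    · rcases hin with hsle | hK
      · obtain ⟨hxS, hx1, hxle⟩ := hsle
        exact absurd (Or.inl ⟨hxS, hx1, by omega⟩) hout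
      · obtain ⟨w, k, ha1, ha2, hA⟩ := hK
        have hnot : ¬ (w < m + 1 + k ∧ m + 1 < w + k) := by
          intro hc
          exact hout (Or.inr ⟨w, k, hc.1, hc.2, hA⟩)
        exact ⟨w, k, hA, by omega, by omega⟩
  obtain ⟨w, j, hA, hw1, hw2⟩ := key
  obtain ⟨hfw1, hfwN, hfj1, hfx1, hfxj, hfjd⟩ := aset_facts hrange hS hd2 hA
  have hux : u < x := (hrange _ _ hu).2.1
  have hu1 : 1 ≤ u := (hrange _ _ hu).1
  rcases Classical.em (u ∈ S) with huS | huS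
  · have hum : u ≤ m := by omega
    exact ⟨Or.inl ⟨huS, hu1, hum⟩, Or.inl ⟨huS, hu1, by omega⟩⟩
  · obtain ⟨k', hk'ge, hk'A⟩ := parent_mem_aset hrange hS hd2 hA hu huS
    exact ⟨Or.inr ⟨w, k', by omega, by omega, hk'A⟩,
           Or.inr ⟨w, k', by omega, by omega, hk'A⟩⟩

/-! ### Cardinality lemmas -/

lemma parentsOf_encard {E : ℕ → ℕ → Prop} (hdeg : ∀ v, (parents E v).encard ≤ 2)
    (X : Set ℕ) : (parentsOf E X).encard ≤ 2 * X.encard := by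
  rcases X.finite_or_infinite with hfin | hinf
  · refine Set.Finite.induction_on
      (motive := fun Y _ => (parentsOf E Y).encard ≤ 2 * Y.encard) X hfin (by simp [parentsOf]) ?_ 
    intro a X' ha hX' ih
    ·
      have heq : parentsOf E (insert a X') = parents E a ∪ parentsOf E X' := by
        ext u
        simp only [parentsOf, parents, Set.mem_setOf_eq, Set.mem_union, Set.mem_insert_iff]
        constructor
        · rintro ⟨v, (rfl | hv), hE⟩
          · exact Or.inl hE
          · exact Or.inr ⟨v, hv, hE⟩
        · rintro (hE | ⟨v, hv, hE⟩)
          · exact ⟨a, Or.inl rfl, hE⟩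
          · exact ⟨v, Or.inr hv, hE⟩
      rw [heq, Set.encard_insert_of_notMem ha]
      calc (parents E a ∪ parentsOf E X').encard
          ≤ (parents E a).encard + (parentsOf E X').encard := Set.encard_union_le _ _
        _ ≤ 2 + 2 * X'.encard := add_le_add (hdeg a) ih
        _ = 2 * (X'.encard + 1) := by ring
  · rw [hinf.encard_eq]
    simp

lemma D_one {E : ℕ → ℕ → Prop} {S : Set ℕ} {w : ℕ} : Dset E S w 1 ⊆ {w} := by
  rintro v ⟨p, h0, h1, _⟩
  simp only [Nat.sub_self] at h1
  simp only [Set.mem_singleton_iff]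
  omega

lemma D_succ {E : ℕ → ℕ → Prop} {S : Set ℕ} {w ℓ : ℕ} (hℓ : 1 ≤ ℓ) :
    Dset E S w (ℓ+1) ⊆ parentsOf E (Dset E S w ℓ) := by
  rintro v ⟨p, h0, h1, he⟩
  refine ⟨p 1, ⟨fun i => p (i+1), rfl, ?_, ?_⟩, ?_⟩
  · show p (ℓ - 1 + 1) = w
    have : ℓ - 1 + 1 = ℓ := by omega
    rw [this]
    simpa using h1
  · intro i hi
    exact he (i+1) (by omega)
  · rw [← h0]
    exact (he 0 (by omega)).1

lemma D_encard {E : ℕ → ℕ → Prop} {S : Set ℕ} (hdeg : ∀ v, (parents E v).encard ≤ 2)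
    {w : ℕ} : ∀ ℓ, 1 ≤ ℓ → (Dset E S w ℓ).encard ≤ 2 ^ (ℓ - 1) := by
  intro ℓ hℓ
  induction ℓ, hℓ using Nat.le_induction with
  | base =>
    calc (Dset E S w 1).encard ≤ ({w} : Set ℕ).encard := Set.encard_mono D_one
      _ = 1 := Set.encard_singleton w
      _ ≤ 2 ^ (1 - 1) := by simp
  | succ ℓ hℓ ih =>
    calc (Dset E S w (ℓ+1)).encard
        ≤ (parentsOf E (Dset E S w ℓ)).encard := Set.encard_mono (D_succ hℓ)
      _ ≤ 2 * (Dset E S w ℓ).encard := parentsOf_encard hdeg _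
      _ ≤ 2 * 2 ^ (ℓ - 1) := by exact mul_le_mul_right ih 2
      _ = 2 ^ (ℓ + 1 - 1) := by
          rw [Nat.add_sub_cancel, ← pow_succ']
          congr 1
          omega

lemma B_encard {E : ℕ → ℕ → Prop} {S : Set ℕ} (hdeg : ∀ v, (parents E v).encard ≤ 2)
    {w : ℕ} : ∀ ℓ, 1 ≤ ℓ → (Bset E S w ℓ).encard + 1 ≤ 2 ^ ℓ := by
  intro ℓ hℓ
  induction ℓ, hℓ using Nat.le_induction with
  | base =>
    have hsub : Bset E S w 1 ⊆ {w} := by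
      rintro v ⟨m, hm1, hm2, hv⟩
      have : m = 1 := by omega
      subst this
      exact D_one hv
    calc (Bset E S w 1).encard + 1 ≤ ({w} : Set ℕ).encard + 1 :=
          add_le_add_left (Set.encard_mono hsub) 1
      _ = 2 ^ 1 := by rw [Set.encard_singleton]; rfl
  | succ ℓ hℓ ih =>
    have hsub : Bset E S w (ℓ+1) ⊆ Bset E S w ℓ ∪ Dset E S w (ℓ+1) := by
      rintro v ⟨m, hm1, hm2, hv⟩
      rcases Nat.eq_or_lt_of_le hm2 with h | h
      · subst h
        exact Or.inr hv
      · exact Or.inl ⟨m, hm1, by omega, hv⟩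
    calc (Bset E S w (ℓ+1)).encard + 1
        ≤ ((Bset E S w ℓ).encard + (Dset E S w (ℓ+1)).encard) + 1 :=
          add_le_add_left (le_trans (Set.encard_mono hsub) (Set.encard_union_le _ _)) 1
      _ = ((Bset E S w ℓ).encard + 1) + (Dset E S w (ℓ+1)).encard := by ring
      _ ≤ 2 ^ ℓ + 2 ^ ℓ := by
          refine add_le_add ih ?_
          have h := D_encard (S := S) (w := w) hdeg (ℓ+1) (by omega)
          rw [Nat.add_sub_cancel] at h
          exact h
      _ = 2 ^ (ℓ+1) := by rw [pow_succ, mul_two]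

lemma biUnion_encard_le (F : Finset ℕ) (f : ℕ → Set ℕ) :
    (⋃ a ∈ F, f a).encard ≤ ∑ a ∈ F, (f a).encard := by
  induction F using Finset.induction_on with
  | empty => simp
  | @insert a F' ha ih =>
    rw [Finset.set_biUnion_insert, Finset.sum_insert ha]
    exact le_trans (Set.encard_union_le _ _) (add_le_add_right ih _)

lemma Kset_encard {N d : ℕ} {E : ℕ → ℕ → Prop} {S : Set ℕ}
    (hrange : ∀ u v, E u v → 1 ≤ u ∧ u < v ∧ v ≤ N)
    (hdeg : ∀ v, (parents E v).encard ≤ 2)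
    (hS : ¬ HasPath (subE E S) d) (hd2 : 2 ≤ d) (i : ℕ) :
    (KsetQ N E S i).encard ≤ ((2 * d * 2 ^ d : ℕ) : ℕ∞) := by
  have hsub : KsetQ N E S i ⊆ ⋃ w ∈ Finset.Ioo (i - d) (i + d), Bset E S w d := by
    rintro x ⟨w, k, ha1, ha2, hA⟩
    obtain ⟨hfw1, hfwN, hfk1, hfx1, hfxk, hfkd⟩ := aset_facts hrange hS hd2 hA
    have hD : x ∈ Dset E S w k := hA.2.2.2.1
    have hB : x ∈ Bset E S w d := ⟨k, hfk1, hfkd, hD⟩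
    exact Set.mem_iUnion₂.mpr ⟨w, by rw [Finset.mem_Ioo]; omega, hB⟩
  calc (KsetQ N E S i).encard
      ≤ (⋃ w ∈ Finset.Ioo (i - d) (i + d), Bset E S w d).encard := Set.encard_mono hsub
    _ ≤ ∑ w ∈ Finset.Ioo (i - d) (i + d), (Bset E S w d).encard :=
        biUnion_encard_le _ _
    _ ≤ ∑ _w ∈ Finset.Ioo (i - d) (i + d), ((2 ^ d : ℕ) : ℕ∞) := by
        refine Finset.sum_le_sum ?_
        intro w _
        have h1 := B_encard (E := E) (S := S) (w := w) hdeg d (by omega)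
        have h2 : (Bset E S w d).encard ≤ (2 : ℕ∞) ^ d :=
          le_trans (le_add_right (le_refl _)) h1
        have h3 : ((2 ^ d : ℕ) : ℕ∞) = (2 : ℕ∞) ^ d := by push_cast; rfl
        rw [h3]
        exact h2
    _ = ((Finset.Ioo (i - d) (i + d)).card : ℕ∞) * ((2 ^ d : ℕ) : ℕ∞) := by
        rw [Finset.sum_const, nsmul_eq_mul]
    _ ≤ ((2 * d : ℕ) : ℕ∞) * ((2 ^ d : ℕ) : ℕ∞) := by
        refine mul_le_mul_left ?_ _
        refine Nat.cast_le.mpr ?_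
        rw [Nat.card_Ioo]
        omega
    _ = ((2 * d * 2 ^ d : ℕ) : ℕ∞) := by push_cast; ring

/-! ### The pebbling -/

lemma coreQ_zero {N d : ℕ} {E : ℕ → ℕ → Prop} {S : Set ℕ}
    (hrange : ∀ u v, E u v → 1 ≤ u ∧ u < v ∧ v ≤ N)
    (hS : ¬ HasPath (subE E S) d) (hd2 : 2 ≤ d) : coreQ N E S 0 = ∅ := by
  apply Set.eq_empty_iff_forall_notMem.mpr
  rintro x (⟨hxS, h1, h0⟩ | ⟨w, k, h1, h2, hA⟩)
  · omega
  · obtain ⟨_, _, _, hx1, hxk, _⟩ := aset_facts hrange hS hd2 hA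
    omega

lemma N_mem_coreQ {N : ℕ} {E : ℕ → ℕ → Prop} {S : Set ℕ}
    (hrange : ∀ u v, E u v → 1 ≤ u ∧ u < v ∧ v ≤ N) (hN : 1 ≤ N) :
    N ∈ coreQ N E S N :=
  Or.inr ⟨N, 1, by omega, by omega, self_mem_aset hrange hN le_rfl⟩

lemma stepLeg {N d : ℕ} {E : ℕ → ℕ → Prop} {S : Set ℕ}
    (hrange : ∀ u v, E u v → 1 ≤ u ∧ u < v ∧ v ≤ N)
    (hS : ¬ HasPath (subE E S) d) (hd2 : 2 ≤ d) (hN : 1 ≤ N) {i : ℕ}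
    (h1 : 1 ≤ i) (h2 : i ≤ 2*N) {x : ℕ}
    (hx : x ∈ (PQ N E S i \ PQ N E S (i-1)) ∪ (PQ N E S (i-1) \ PQ N E S i))
    {u : ℕ} (hu : E u x) :
    u ∈ PQ N E S (i-1) ∧ u ∈ PQ N E S i := by
  rcases Nat.lt_or_ge N i with hcase | hcase
  · -- backward phase
    rcases Nat.eq_or_lt_of_le hcase with hNi | hNi
    · -- i = N + 1
      have hiN : i = N + 1 := by omega
      subst hiN
      have e0 : PQ N E S (N + 1 - 1) = coreQ N E S N := by
        simp only [Nat.add_sub_cancel, PQ, if_pos (le_refl N)]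
      have e1 : PQ N E S (N+1) = coreQ N E S (N-1) ∪ {N} := by
        have hh : 2*N - (N+1) = N - 1 := by omega
        rw [PQ, if_neg (by omega), hh]
      rw [e0, e1] at hx ⊢
      have hxN : x ≠ N := by
        rintro rfl
        rcases hx with ⟨_, hout⟩ | ⟨_, hout⟩
        · exact hout (N_mem_coreQ hrange hN)
        · exact hout (Or.inr rfl)
      have hmN : (N - 1) + 1 = N := by omega
      have hdis : (x ∈ coreQ N E S ((N-1)+1) ∧ x ∉ coreQ N E S (N-1)) ∨
          (x ∈ coreQ N E S (N-1) ∧ x ∉ coreQ N E S ((N-1)+1)) := by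
        rw [hmN]
        rcases hx with ⟨hin, hout⟩ | ⟨hin, hout⟩
        · rcases hin with hin | hin
          · exact Or.inr ⟨hin, hout⟩
          · exact absurd hin hxN
        · exact Or.inl ⟨hin, fun hc => hout (Or.inl hc)⟩
      have := mainLeg hrange hS hd2 (m := N - 1) (by omega) hdis hu
      rw [hmN] at this
      exact ⟨this.2, Or.inl this.1⟩
    · -- i ≥ N + 2
      have e0 : PQ N E S (i-1) = coreQ N E S ((2*N - i) + 1) ∪ {N} := by
        have hh : 2*N - (i-1) = (2*N - i) + 1 := by omega
        rw [PQ, if_neg (by omega), hh]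
      have e1 : PQ N E S i = coreQ N E S (2*N - i) ∪ {N} := by
        rw [PQ, if_neg (by omega)]
      rw [e0, e1] at hx ⊢
      have hxN : x ≠ N := by
        rintro rfl
        rcases hx with ⟨_, hout⟩ | ⟨_, hout⟩
        · exact hout (Or.inr rfl)
        · exact hout (Or.inr rfl)
      have hdis : (x ∈ coreQ N E S ((2*N-i)+1) ∧ x ∉ coreQ N E S (2*N-i)) ∨
          (x ∈ coreQ N E S (2*N-i) ∧ x ∉ coreQ N E S ((2*N-i)+1)) := by
        rcases hx with ⟨hin, hout⟩ | ⟨hin, hout⟩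
        · rcases hin with hin | hin
          · exact Or.inr ⟨hin, fun hc => hout (Or.inl hc)⟩
          · exact absurd hin hxN
        · rcases hin with hin | hin
          · exact Or.inl ⟨hin, fun hc => hout (Or.inl hc)⟩
          · exact absurd hin hxN
      have := mainLeg hrange hS hd2 (m := 2*N - i) (by omega) hdis hu
      exact ⟨Or.inl this.2, Or.inl this.1⟩
  · -- forward phase: i ≤ N
    have e0 : PQ N E S (i-1) = coreQ N E S (i-1) := by
      rw [PQ, if_pos (by omega)]
    have e1 : PQ N E S i = coreQ N E S i := by
      rw [PQ, if_pos hcase]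
    rw [e0, e1] at hx ⊢
    have hi1 : (i - 1) + 1 = i := by omega
    have hdis : (x ∈ coreQ N E S ((i-1)+1) ∧ x ∉ coreQ N E S (i-1)) ∨
        (x ∈ coreQ N E S (i-1) ∧ x ∉ coreQ N E S ((i-1)+1)) := by
      rw [hi1]
      rcases hx with ⟨hin, hout⟩ | ⟨hin, hout⟩
      · exact Or.inl ⟨hin, hout⟩
      · exact Or.inr ⟨hin, hout⟩
    have := mainLeg hrange hS hd2 (m := i - 1) (by omega) hdis hu
    rw [hi1] at this
    exact this

lemma PQ_ncard_le {N d e : ℕ} {E : ℕ → ℕ → Prop} {S : Set ℕ}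
    (hrange : ∀ u v, E u v → 1 ≤ u ∧ u < v ∧ v ≤ N)
    (hdeg : ∀ v, (parents E v).encard ≤ 2)
    (hS : ¬ HasPath (subE E S) d) (hd2 : 2 ≤ d)
    (hScard : S.encard ≤ (e : ℕ∞)) (i : ℕ) :
    (PQ N E S i).ncard ≤ e + 2*d*2^d + 1 := by
  set j : ℕ := if i ≤ N then i else 2*N - i with hj
  have hsub : PQ N E S i ⊆ Sle S j ∪ (KsetQ N E S j ∪ {N}) := by
    rw [PQ, hj]
    split_ifs with h
    · intro x hx
      rcases hx with hx | hx
      · exact Or.inl hx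
      · exact Or.inr (Or.inl hx)
    · rintro x (hx | hx)
      · rcases hx with hx | hx
        · exact Or.inl hx
        · exact Or.inr (Or.inl hx)
      · exact Or.inr (Or.inr hx)
  have henc : (PQ N E S i).encard ≤ ((e + 2*d*2^d + 1 : ℕ) : ℕ∞) := by
    calc (PQ N E S i).encard
        ≤ (Sle S j ∪ (KsetQ N E S j ∪ {N})).encard := Set.encard_mono hsub
      _ ≤ (Sle S j).encard + (KsetQ N E S j ∪ {N}).encard := Set.encard_union_le _ _
      _ ≤ (Sle S j).encard + ((KsetQ N E S j).encard + ({N} : Set ℕ).encard) :=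
          add_le_add_right (Set.encard_union_le _ _) _
      _ ≤ (e : ℕ∞) + (((2*d*2^d : ℕ) : ℕ∞) + 1) := by
          refine add_le_add (le_trans (Set.encard_mono Set.inter_subset_left) hScard) ?_
          exact add_le_add (Kset_encard hrange hdeg hS hd2 j) (le_of_eq (Set.encard_singleton N))
      _ = ((e + 2*d*2^d + 1 : ℕ) : ℕ∞) := by push_cast; ring
  exact (Set.encard_le_coe_iff_finite_ncard_le.mp henc).2


end QPebAux

/-- If a DAG `G` on `[N]` with indegree at most `2` and unique sink `N` is
`(e,d)`-reducible, then there is a legal parallel quantum pebbling of `G` with at most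
`2N` rounds using at most `e + 8d·2^d + 3` pebbles in every round; hence the quantum
parallel space-time pebbling complexity of `G` is at most `2N(e + 8d·2^d + 3) = O(Ne + Nd2^d)`. -/
theorem stmt7 (N e d : ℕ) (hN : 1 ≤ N) (E : ℕ → ℕ → Prop)
    (hrange : ∀ u v, E u v → 1 ≤ u ∧ u < v ∧ v ≤ N)
    (hdeg : ∀ v, (parents E v).encard ≤ 2)
    (hsink : ∀ v, 1 ≤ v → v < N → ∃ w, E v w)
    (hred : ∃ S : Set ℕ, S ⊆ Set.Icc 1 N ∧ S.encard ≤ e ∧ ¬ HasPath (subE E S) d) :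
    ∃ P t, IsQPebbling E {N} P t ∧ t ≤ 2*N ∧
      spaceCost P t ≤ e + 8*d*2^d + 3 ∧
      stCost P t ≤ 2*N*(e + 8*d*2^d + 3) := by
  obtain ⟨S, hSsub, hScard, hSpath⟩ := hred
  have hd2 : 2 ≤ d := by
    by_contra hcon
    exact hSpath ⟨id, fun i hi => absurd hi (by omega)⟩
  have hsp : spaceCost (QPebAux.PQ N E S) (2*N) ≤ e + 8*d*2^d + 3 := by
    have hb : ∀ i, (QPebAux.PQ N E S i).ncard ≤ e + 8*d*2^d + 3 := by
      intro i
      have h1 := QPebAux.PQ_ncard_le hrange hdeg hSpath hd2 hScard i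
      have h2 : 2*d*2^d ≤ 8*d*2^d := Nat.mul_le_mul (by omega) (le_refl (2^d))
      omega
    unfold spaceCost
    exact Finset.sup_le fun i _ => hb i
  refine ⟨QPebAux.PQ N E S, 2*N, ⟨?_, ?_, ?_, ?_, ?_⟩, le_rfl, hsp, ?_⟩
  · rw [QPebAux.PQ, if_pos (Nat.zero_le N)]
    exact QPebAux.coreQ_zero hrange hSpath hd2
  · rw [QPebAux.PQ, if_neg (by omega), Nat.sub_self,
      QPebAux.coreQ_zero hrange hSpath hd2]
    simp
  · intro i hi1 hi2 x hx u hu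
    exact (QPebAux.stepLeg hrange hSpath hd2 hN hi1 hi2 (Or.inl hx) hu).1
  · intro i hi1 hi2 x hx u hu
    exact (QPebAux.stepLeg hrange hSpath hd2 hN hi1 hi2 (Or.inr hx) hu).1
  · intro i hi1 hi2 x hx
    rcases hx with hx | hx
    · obtain ⟨v, hv, hE⟩ := hx
      exact (QPebAux.stepLeg hrange hSpath hd2 hN hi1 hi2 (Or.inl hv) hE).2
    · obtain ⟨v, hv, hE⟩ := hx
      exact (QPebAux.stepLeg hrange hSpath hd2 hN hi1 hi2 (Or.inr hv) hE).2
  · unfold stCost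
    exact Nat.mul_le_mul (le_refl (2*N)) hsp
end

section
/- Let G be an (e,d)-reducible DAG on [N] with depth-reducing set S, and define B_v := ∪_{j=1}^{d+1} ∪_{i=j}^{d+1} (A_{v+1−j,S,i} ∪ A_{v−1+j,S,i}). Then the sequence P_0 = ∅, P_v = S_{≤v} ∪ B_v for v ∈ [N], and P_v = P_{2N−v} ∪ {N} for N < v ≤ 2N, is a legal parallel quantum pebbling of G with target {N}. -/
attribute [local instance] Classical.propDecidable

/-- `B_v := ⋃_{j=1}^{d+1} ⋃_{i=j}^{d+1} (A_{v+1-j,S,i} ∪ A_{v-1+j,S,i})`. -/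
def Bset (N : ℕ) (E : ℕ → ℕ → Prop) (S : Set ℕ) (d v : ℕ) : Set ℕ :=
  ⋃ j ∈ Finset.Icc 1 (d+1), ⋃ i ∈ Finset.Icc j (d+1),
    Aset N E S (v+1-j) i ∪ Aset N E S (v-1+j) i

/-- `P_v := S_{≤v} ∪ B_v` for `v ∈ [N]`, with `P_0 = ∅`. -/
def Pbase (N : ℕ) (E : ℕ → ℕ → Prop) (S : Set ℕ) (d v : ℕ) : Set ℕ :=
  if v = 0 then ∅ else Sle S v ∪ Bset N E S d v

/-- The full pebbling: `P_v` for `v ≤ N` and `P_v := P_{2N-v} ∪ {N}` for `N < v ≤ 2N`. -/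
def Pfull (N : ℕ) (E : ℕ → ℕ → Prop) (S : Set ℕ) (d v : ℕ) : Set ℕ :=
  if v ≤ N then Pbase N E S d v else Pbase N E S d (2*N - v) ∪ {N}

section helpers
variable {N d : ℕ} {E : ℕ → ℕ → Prop} {S : Set ℕ}

lemma notMem_Sle_self (S : Set ℕ) (w : ℕ) : w ∉ Sle S (w-1) := by
  rintro ⟨-, h1, h2⟩; omega

lemma path_incr {F : ℕ → ℕ → Prop} (hr : ∀ u v, F u v → u < v)
    {p : ℕ → ℕ} {n : ℕ} (hs : ∀ i, i+1 < n → F (p i) (p (i+1))) :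
    ∀ m k, k + m ≤ n - 1 → p k + m ≤ p (k + m) := by
  intro m
  induction m with
  | zero => intro k _; simp
  | succ m ih =>
    intro k hk
    have h1 : p k + m ≤ p (k+m) := ih k (by omega)
    have h2 : p (k+m) < p (k+m+1) := hr _ _ (hs (k+m) (by omega))
    have : k + (m+1) = k+m+1 := by ring
    rw [this]; omega

lemma path_mono (hrange : ∀ u v, E u v → 1 ≤ u ∧ u < v ∧ v ≤ N) {T : Set ℕ}
    {u w n : ℕ} (h : PathFromTo (subE E T) u w n) (hn : 1 ≤ n) :
    u + (n-1) ≤ w := by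
  obtain ⟨p, h0, h1, hs⟩ := h
  have := path_incr (fun a b hab => (hrange a b hab.1).2.1) hs (n-1) 0 (by omega)
  simpa [h0, h1] using this

lemma two_le_d (hdepth : ¬ HasPath (subE E S) d) : 2 ≤ d := by
  by_contra h
  exact hdepth ⟨fun _ => 0, fun i hi => absurd hi (by omega)⟩

lemma path_le_d (hrange : ∀ u v, E u v → 1 ≤ u ∧ u < v ∧ v ≤ N)
    (hdepth : ¬ HasPath (subE E S) d)
    {u w n : ℕ} (h : PathFromTo (subE E (Sle S (w-1))) u w n) (hn : 1 ≤ n) : n ≤ d := by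
  have hd2 : 2 ≤ d := two_le_d hdepth
  by_contra hnd
  push_neg at hnd
  obtain ⟨p, h0, h1, hs⟩ := h
  have hlt : ∀ a b, subE E (Sle S (w-1)) a b → a < b :=
    fun a b hab => (hrange a b hab.1).2.1
  have hnotS : ∀ k, k + 1 < n → p k ∉ S := by
    intro k hk hkS
    have hedge := hs k hk
    have h1p : 1 ≤ p k := (hrange _ _ hedge.1).1
    have hle : p k + (n-1-k) ≤ p (k + (n-1-k)) := path_incr hlt hs (n-1-k) k (by omega)
    have hkn : k + (n-1-k) = n-1 := by omega
    rw [hkn, h1] at hle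
    exact hedge.2.1 ⟨hkS, by omega, by omega⟩
  apply hdepth
  refine ⟨p, fun i hi => ?_⟩
  have hedge := hs i (by omega)
  exact ⟨hedge.1, hnotS i (by omega), hnotS (i+1) (by omega)⟩

lemma exists_Aset (hrange : ∀ u v, E u v → 1 ≤ u ∧ u < v ∧ v ≤ N)
    (hdepth : ¬ HasPath (subE E S) d) {u w n : ℕ} (hw1 : 1 ≤ w) (hwN : w ≤ N)
    (hn : 1 ≤ n) (h : PathFromTo (subE E (Sle S (w-1))) u w n) :
    ∃ i, n ≤ i ∧ u ∈ Aset N E S w i := by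
  classical
  set P : ℕ → Prop := fun m => PathFromTo (subE E (Sle S (w-1))) u w m with hP
  have hnd : n ≤ d := path_le_d hrange hdepth h hn
  have hle : n ≤ Nat.findGreatest P d := Nat.le_findGreatest hnd h
  refine ⟨Nat.findGreatest P d, hle, hw1, hwN, by omega,
    Nat.findGreatest_spec hnd h, fun j hj hPj => ?_⟩
  by_cases hjd : j ≤ d
  · exact Nat.findGreatest_is_greatest hj hjd hPj
  · exact hjd (path_le_d hrange hdepth hPj (by omega))

lemma Aset_le_d (hrange : ∀ u v, E u v → 1 ≤ u ∧ u < v ∧ v ≤ N)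
    (hdepth : ¬ HasPath (subE E S) d) {x w i : ℕ} (hx : x ∈ Aset N E S w i) : i ≤ d :=
  path_le_d hrange hdepth hx.2.2.2.1 hx.2.2.1

lemma Aset_add_le (hrange : ∀ u v, E u v → 1 ≤ u ∧ u < v ∧ v ≤ N)
    {x w i : ℕ} (hx : x ∈ Aset N E S w i) : x + i ≤ w + 1 := by
  have h1 := path_mono hrange hx.2.2.2.1 hx.2.2.1
  have := hx.2.2.1
  omega

lemma parent_Aset (hrange : ∀ u v, E u v → 1 ≤ u ∧ u < v ∧ v ≤ N)
    (hdepth : ¬ HasPath (subE E S) d) {x p w i : ℕ}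
    (hx : x ∈ Aset N E S w i) (hpx : E p x) (hpS : p ∉ S) :
    ∃ i', i + 1 ≤ i' ∧ p ∈ Aset N E S w i' := by
  obtain ⟨hw1, hwN, hi1, ⟨q, hq0, hq1, hqs⟩, hmax⟩ := hx
  have hpS' : p ∉ Sle S (w-1) := fun h => hpS h.1
  have hxS' : x ∉ Sle S (w-1) := by
    rcases eq_or_lt_of_le hi1 with h1 | h2
    · have hxw : x = w := by rw [← hq0, ← hq1]; congr 1; omega
      rw [hxw]; exact notMem_Sle_self S w
    · have := hqs 0 (by omega)
      exact fun hc => this.2.1 (by rwa [hq0])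
  refine (exists_Aset hrange hdepth hw1 hwN (show 1 ≤ i+1 by omega) ?_).imp
    (fun i' hi' => ⟨by omega, hi'.2⟩)
  refine ⟨fun k => match k with | 0 => p | Nat.succ m => q m, rfl, ?_, ?_⟩
  · obtain ⟨m, rfl⟩ : ∃ m, i = m + 1 := ⟨i-1, by omega⟩
    show q m = w
    have : m + 1 - 1 = m := by omega
    rwa [this] at hq1
  · intro k hk
    match k with
    | 0 =>
      show subE E (Sle S (w-1)) p (q 0)
      rw [hq0]
      exact ⟨hpx, hpS', hxS'⟩
    | Nat.succ m =>
      show subE E (Sle S (w-1)) (q m) (q (m+1))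
      exact hqs m (by omega)

lemma mem_Bset_iff (hrange : ∀ u v, E u v → 1 ≤ u ∧ u < v ∧ v ≤ N)
    (hdepth : ¬ HasPath (subE E S) d) {v x : ℕ} (hv : 1 ≤ v) :
    x ∈ Bset N E S d v ↔ ∃ w i, x ∈ Aset N E S w i ∧ w < v + i ∧ v < w + i := by
  simp only [Bset, Set.mem_iUnion, Finset.mem_Icc, Set.mem_union]
  constructor
  · rintro ⟨j, ⟨hj1, hjd⟩, i, ⟨hji, hid⟩, (h | h)⟩
    · have hw1 : 1 ≤ v+1-j := h.1
      have hi1 : 1 ≤ i := h.2.2.1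
      exact ⟨v+1-j, i, h, by omega, by omega⟩
    · have hw1 : 1 ≤ v-1+j := h.1
      have hi1 : 1 ≤ i := h.2.2.1
      exact ⟨v-1+j, i, h, by omega, by omega⟩
  · rintro ⟨w, i, hA, hwv, hvw⟩
    have hid : i ≤ d := Aset_le_d hrange hdepth hA
    have hw1 : 1 ≤ w := hA.1
    have hi1 : 1 ≤ i := hA.2.2.1
    by_cases hwle : w ≤ v
    · refine ⟨v+1-w, ⟨by omega, by omega⟩, i, ⟨by omega, by omega⟩, Or.inl ?_⟩
      have : v+1-(v+1-w) = w := by omega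
      rwa [this]
    · refine ⟨w+1-v, ⟨by omega, by omega⟩, i, ⟨by omega, by omega⟩, Or.inr ?_⟩
      have : v-1+(w+1-v) = w := by omega
      rwa [this]

lemma key (hrange : ∀ u v, E u v → 1 ≤ u ∧ u < v ∧ v ≤ N) (hS : S ⊆ Set.Icc 1 N)
    (hdepth : ¬ HasPath (subE E S) d)
    {v x : ℕ} (hv1 : 1 ≤ v) (hvN : v ≤ N)
    (hx : (x ∈ Pbase N E S d v ∧ x ∉ Pbase N E S d (v-1)) ∨
          (x ∈ Pbase N E S d (v-1) ∧ x ∉ Pbase N E S d v))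
    {p : ℕ} (hp : E p x) :
    p ∈ Pbase N E S d (v-1) ∧ p ∈ Pbase N E S d v := by
  have hp1 : 1 ≤ p := (hrange _ _ hp).1
  have hpx : p < x := (hrange _ _ hp).2.1
  rcases eq_or_lt_of_le hv1 with hv1' | hv2
  · -- v = 1 : no node of Pbase 1 has a parent
    exfalso
    have hveq : v = 1 := hv1'.symm
    subst hveq
    have hP0 : Pbase N E S d (1-1) = ∅ := if_pos rfl
    have hx1 : x ∈ Pbase N E S d 1 := by
      rcases hx with ⟨h, -⟩ | ⟨h, -⟩
      · exact h
      · rw [hP0] at h; exact absurd h (Set.notMem_empty x)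
    rw [show Pbase N E S d 1 = Sle S 1 ∪ Bset N E S d 1 from if_neg (by omega)] at hx1
    rcases hx1 with h | h
    · obtain ⟨-, h1, h2⟩ := h; omega
    · rw [mem_Bset_iff hrange hdepth le_rfl] at h
      obtain ⟨w, i, hA, h1, h2⟩ := h
      have := Aset_add_le hrange hA
      omega
  · -- v ≥ 2
    have hPv : Pbase N E S d v = Sle S v ∪ Bset N E S d v := if_neg (by omega)
    have hPv1 : Pbase N E S d (v-1) = Sle S (v-1) ∪ Bset N E S d (v-1) := if_neg (by omega)
    rw [hPv, hPv1] at hx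
    have hcases : (x = v ∧ v ∈ S) ∨
        (x ∈ Bset N E S d v ∧ x ∉ Bset N E S d (v-1)) ∨
        (x ∈ Bset N E S d (v-1) ∧ x ∉ Bset N E S d v) := by
      rcases hx with ⟨hin, hout⟩ | ⟨hin, hout⟩
      · rcases hin with hin | hin
        · obtain ⟨hxS, hx1, hxv⟩ := hin
          have : ¬ (x ≤ v - 1) := fun hc => hout (Or.inl ⟨hxS, hx1, hc⟩)
          have hxv' : x = v := by omega
          exact Or.inl ⟨hxv', hxv' ▸ hxS⟩
        · exact Or.inr (Or.inl ⟨hin, fun hc => hout (Or.inr hc)⟩)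
      · rcases hin with hin | hin
        · obtain ⟨hxS, hx1, hxv⟩ := hin
          exact absurd (Or.inl ⟨hxS, hx1, by omega⟩) hout
        · exact Or.inr (Or.inr ⟨hin, fun hc => hout (Or.inr hc)⟩)
    rw [hPv, hPv1]
    rcases hcases with ⟨rfl, hvS⟩ | ⟨hin, hout⟩ | ⟨hin, hout⟩
    · -- Case A : x = v ∈ S
      by_cases hpS : p ∈ S
      · have hmem : p ∈ Sle S (x-1) := ⟨hpS, hp1, by omega⟩
        exact ⟨Or.inl hmem, Or.inl ⟨hpS, hp1, by omega⟩⟩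
      · have hpath : PathFromTo (subE E (Sle S (x-1))) p x 2 := by
          refine ⟨fun k => match k with | 0 => p | Nat.succ _ => x, rfl, rfl, ?_⟩
          intro k hk
          match k with
          | 0 => exact ⟨hp, fun h => hpS h.1, notMem_Sle_self S x⟩
          | Nat.succ m => exact absurd hk (by omega)
        obtain ⟨i', hi'2, hA⟩ := exists_Aset hrange hdepth hv1 hvN (by omega) hpath
        constructor
        · exact Or.inr ((mem_Bset_iff hrange hdepth (by omega)).2
            ⟨x, i', hA, by omega, by omega⟩)
        · exact Or.inr ((mem_Bset_iff hrange hdepth hv1).2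
            ⟨x, i', hA, by omega, by omega⟩)
    · -- Case B : x enters Bset at step v
      rw [mem_Bset_iff hrange hdepth hv1] at hin
      obtain ⟨w, i, hA, hc1, hc2⟩ := hin
      rw [mem_Bset_iff hrange hdepth (by omega : 1 ≤ v-1)] at hout
      have h3 : ¬ (w < v - 1 + i ∧ v - 1 < w + i) := fun hc => hout ⟨w, i, hA, hc.1, hc.2⟩
      have hi1 : 1 ≤ i := hA.2.2.1
      have hw : w + 1 = v + i := by rcases not_and_or.mp h3 with h | h <;> omega
      have hxle : x ≤ v := by have := Aset_add_le hrange hA; omega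
      by_cases hpS : p ∈ S
      · exact ⟨Or.inl ⟨hpS, hp1, by omega⟩, Or.inl ⟨hpS, hp1, by omega⟩⟩
      · obtain ⟨i', hi', hA'⟩ := parent_Aset hrange hdepth hA hp hpS
        constructor
        · exact Or.inr ((mem_Bset_iff hrange hdepth (by omega : 1 ≤ v-1)).2
            ⟨w, i', hA', by omega, by omega⟩)
        · exact Or.inr ((mem_Bset_iff hrange hdepth hv1).2
            ⟨w, i', hA', by omega, by omega⟩)
    · -- Case C : x leaves Bset at step v
      rw [mem_Bset_iff hrange hdepth (by omega : 1 ≤ v-1)] at hin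
      obtain ⟨w, i, hA, hc1, hc2⟩ := hin
      rw [mem_Bset_iff hrange hdepth hv1] at hout
      have h3 : ¬ (w < v + i ∧ v < w + i) := fun hc => hout ⟨w, i, hA, hc.1, hc.2⟩
      have hi1 : 1 ≤ i := hA.2.2.1
      have hw : v = w + i := by rcases not_and_or.mp h3 with h | h <;> omega
      have hxle : x + i ≤ w + 1 := Aset_add_le hrange hA
      by_cases hpS : p ∈ S
      · exact ⟨Or.inl ⟨hpS, hp1, by omega⟩, Or.inl ⟨hpS, hp1, by omega⟩⟩
      · obtain ⟨i', hi', hA'⟩ := parent_Aset hrange hdepth hA hp hpS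
        constructor
        · exact Or.inr ((mem_Bset_iff hrange hdepth (by omega : 1 ≤ v-1)).2
            ⟨w, i', hA', by omega, by omega⟩)
        · exact Or.inr ((mem_Bset_iff hrange hdepth hv1).2
            ⟨w, i', hA', by omega, by omega⟩)

lemma key' (hrange : ∀ u v, E u v → 1 ≤ u ∧ u < v ∧ v ≤ N) (hS : S ⊆ Set.Icc 1 N)
    (hdepth : ¬ HasPath (subE E S) d)
    {u x : ℕ} (huN : u + 1 ≤ N)
    (hx : (x ∈ Pbase N E S d (u+1) ∧ x ∉ Pbase N E S d u) ∨
          (x ∈ Pbase N E S d u ∧ x ∉ Pbase N E S d (u+1)))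
    {p : ℕ} (hp : E p x) :
    p ∈ Pbase N E S d u ∧ p ∈ Pbase N E S d (u+1) := by
  have h := key hrange hS hdepth (v := u+1) (by omega) huN ?_ hp
  · simpa using h
  · simpa using hx

lemma N_mem_PbaseN (hN : 1 ≤ N) (hrange : ∀ u v, E u v → 1 ≤ u ∧ u < v ∧ v ≤ N)
    (hdepth : ¬ HasPath (subE E S) d) :
    N ∈ Pbase N E S d N := by
  have hA : N ∈ Aset N E S N 1 := by
    refine ⟨hN, le_rfl, le_rfl, ⟨fun _ => N, rfl, rfl, fun i hi => absurd hi (by omega)⟩, ?_⟩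
    intro j hj hpath
    have := path_mono hrange hpath (by omega)
    omega
  rw [show Pbase N E S d N = Sle S N ∪ Bset N E S d N from if_neg (by omega)]
  exact Or.inr ((mem_Bset_iff hrange hdepth hN).2 ⟨N, 1, hA, by omega, by omega⟩)

end helpers

/-- For an `(e,d)`-reducible DAG `G` on `[N]` with depth-reducing set `S`, the sequence
`P_0 = ∅`, `P_v = S_{≤v} ∪ B_v` for `v ∈ [N]`, `P_v = P_{2N-v} ∪ {N}` for `N < v ≤ 2N`,
is a legal parallel quantum pebbling of `G` with target `{N}`. -/
theorem stmt8 (N e d : ℕ) (hN : 1 ≤ N) (E : ℕ → ℕ → Prop) (S : Set ℕ)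
    (hrange : ∀ u v, E u v → 1 ≤ u ∧ u < v ∧ v ≤ N)
    (hsink : ∀ v, 1 ≤ v → v < N → ∃ w, E v w)
    (hS : S ⊆ Set.Icc 1 N) (hSe : S.encard ≤ e)
    (hdepth : ¬ HasPath (subE E S) d) :
    IsQPebbling E {N} (Pfull N E S d) (2*N) := by
  have hNP : N ∈ Pbase N E S d N := N_mem_PbaseN hN hrange hdepth
  have hPf1 : ∀ i, i ≤ N → Pfull N E S d i = Pbase N E S d i := fun i hi => if_pos hi
  have hPf2 : ∀ i, N < i → Pfull N E S d i = Pbase N E S d (2*N - i) ∪ {N} :=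
    fun i hi => if_neg (by omega)
  have main : ∀ i x, 1 ≤ i → i ≤ 2*N →
      ((x ∈ Pfull N E S d i ∧ x ∉ Pfull N E S d (i-1)) ∨
       (x ∈ Pfull N E S d (i-1) ∧ x ∉ Pfull N E S d i)) →
      ∀ p, E p x → p ∈ Pfull N E S d (i-1) ∧ p ∈ Pfull N E S d i := by
    intro i x h1 h2 hx p hp
    by_cases hiN : i ≤ N
    · rw [hPf1 i hiN, hPf1 (i-1) (by omega)] at hx ⊢
      obtain ⟨u, rfl⟩ : ∃ u, i = u + 1 := ⟨i-1, by omega⟩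
      simp only [Nat.add_sub_cancel] at hx ⊢
      exact key' hrange hS hdepth hiN hx hp
    · push_neg at hiN
      set v := 2*N - i with hv'
      have hvN : v + 1 ≤ N := by omega
      have hPi : Pfull N E S d i = Pbase N E S d v ∪ {N} := hPf2 i hiN
      have hPi1 : Pfull N E S d (i-1) = Pbase N E S d (v+1) ∪ {N} := by
        by_cases h : i - 1 ≤ N
        · rw [hPf1 _ h, show i - 1 = N from by omega, show v + 1 = N from by omega]
          exact (Set.union_eq_left.mpr (Set.singleton_subset_iff.mpr hNP)).symm
        · rw [hPf2 _ (by omega), show 2*N - (i-1) = v + 1 from by omega]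
      rw [hPi, hPi1] at hx ⊢
      have hxN : (x ∈ Pbase N E S d v ∧ x ∉ Pbase N E S d (v+1)) ∨
                 (x ∈ Pbase N E S d (v+1) ∧ x ∉ Pbase N E S d v) := by
        rcases hx with ⟨hin, hout⟩ | ⟨hin, hout⟩
        · rcases hin with hin | hin
          · exact Or.inl ⟨hin, fun hc => hout (Or.inl hc)⟩
          · exact absurd (Or.inr hin) hout
        · rcases hin with hin | hin
          · exact Or.inr ⟨hin, fun hc => hout (Or.inl hc)⟩
          · exact absurd (Or.inr hin) hout
      have hkey := key' hrange hS hdepth hvN (x := x) (p := p) ?_ hp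
      · exact ⟨Or.inl hkey.2, Or.inl hkey.1⟩
      · tauto
  refine ⟨?_, ?_, ?_, ?_, ?_⟩
  · rw [hPf1 0 (by omega)]
    exact if_pos rfl
  · rw [hPf2 (2*N) (by omega), show 2*N - 2*N = 0 from by omega]
    rw [show Pbase N E S d 0 = ∅ from if_pos rfl]
    simp
  · intro i h1 h2 x hx u hu
    exact (main i x h1 h2 (Or.inl ⟨hx.1, hx.2⟩) u hu).1
  · intro i h1 h2 x hx u hu
    exact (main i x h1 h2 (Or.inr ⟨hx.1, hx.2⟩) u hu).1
  · intro i h1 h2 u hu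
    rcases hu with ⟨x, hx, hux⟩ | ⟨x, hx, hux⟩
    · exact (main i x h1 h2 (Or.inl ⟨hx.1, hx.2⟩) u hux).2
    · exact (main i x h1 h2 (Or.inr ⟨hx.1, hx.2⟩) u hux).2
end

section
/- For an (e,d)-reducible DAG G on [N] with depth-reducing set S and the pebbling configuration B_v := ∪_{j=1}^{d+1} ∪_{i=j}^{d+1} (A_{v+1−j,S,i} ∪ A_{v−1+j,S,i}), it holds for every v ∈ [N] that parents(P_v \ P_{v−1}, G) ∪ parents(P_{v−1} \ P_v, G) ⊆ P_{v−1} ∩ P_v, where P_v = S_{≤v} ∪ B_v. -/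
attribute [local instance] Classical.propDecidable

section AuxStmt9

variable {N d : ℕ} {E : ℕ → ℕ → Prop} {S : Set ℕ}

lemma subE_lt9 (hrange : ∀ u v, E u v → 1 ≤ u ∧ u < v ∧ v ≤ N) {T : Set ℕ}
    {u v : ℕ} (h : subE E T u v) : u < v := (hrange u v h.1).2.1

lemma path_mono9 (hrange : ∀ u v, E u v → 1 ≤ u ∧ u < v ∧ v ≤ N) {T : Set ℕ}
    {p : ℕ → ℕ} {n : ℕ} (hp : ∀ i, i + 1 < n → subE E T (p i) (p (i+1))) :
    ∀ i k, i + k < n → p i + k ≤ p (i + k) := by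
  intro i k
  induction k with
  | zero => simp
  | succ k ih =>
    intro h
    have h1 := ih (by omega)
    have h2 := subE_lt9 hrange (hp (i+k) (by omega))
    have h3 : i + (k+1) = (i+k)+1 := rfl
    rw [h3]
    omega

lemma path_nodes_le9 (hrange : ∀ u v, E u v → 1 ≤ u ∧ u < v ∧ v ≤ N)
    (hdepth : ¬ HasPath (subE E S) d)
    {w n x : ℕ} (hpath : PathFromTo (subE E (Sle S (w-1))) x w n) : n ≤ d := by
  by_contra hn
  push_neg at hn
  obtain ⟨p, hp0, hpw, hp⟩ := hpath
  apply hdepth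
  refine ⟨p, fun i hi => ?_⟩
  have hb : ∀ j, j + 1 < n → 1 ≤ p j ∧ p j < w := by
    intro j hj
    have hm := path_mono9 hrange hp j (n-1-j) (by omega)
    have heq : j + (n-1-j) = n-1 := by omega
    rw [heq, hpw] at hm
    have h1 := (hrange _ _ (hp j hj).1).1
    omega
  have hedge := hp i (by omega)
  have hpi := hb i (by omega)
  have hpi1 := hb (i+1) (by omega)
  refine ⟨hedge.1, fun hS' => hedge.2.1 ?_, fun hS' => hedge.2.2 ?_⟩
  · exact ⟨hS', by simp [Set.mem_Icc]; omega⟩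
  · exact ⟨hS', by simp [Set.mem_Icc]; omega⟩

lemma path_start_le9 (hrange : ∀ u v, E u v → 1 ≤ u ∧ u < v ∧ v ≤ N) {T : Set ℕ}
    {w n x : ℕ} (hn : 1 ≤ n) (hpath : PathFromTo (subE E T) x w n) : x + (n-1) ≤ w := by
  obtain ⟨p, hp0, hpw, hp⟩ := hpath
  have := path_mono9 hrange hp 0 (n-1) (by omega)
  rw [Nat.zero_add, hp0, hpw] at this
  exact this

lemma path_start_not9 {w n x : ℕ} (hn : 1 ≤ n)
    (hpath : PathFromTo (subE E (Sle S (w-1))) x w n) : x ∉ Sle S (w-1) := by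
  obtain ⟨p, hp0, hpw, hp⟩ := hpath
  rcases eq_or_lt_of_le hn with h | h
  · have hxw : x = w := by rw [← hp0, ← hpw]; congr 1; omega
    subst hxw
    simp only [Sle, Set.mem_inter_iff, Set.mem_Icc]
    rintro ⟨-, h1, h2⟩; omega
  · have := hp 0 (by omega)
    rw [hp0] at this
    exact this.2.1

lemma path_prepend9 {T : Set ℕ} {x w n u : ℕ} (hn : 1 ≤ n)
    (hpath : PathFromTo (subE E T) x w n) (hux : E u x) (huT : u ∉ T) (hxT : x ∉ T) :
    PathFromTo (subE E T) u w (n+1) := by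
  obtain ⟨p, hp0, hpw, hp⟩ := hpath
  refine ⟨fun k => if k = 0 then u else p (k-1), by simp, ?_, ?_⟩
  · have : n + 1 - 1 = n := rfl
    rw [this]
    simp only [if_neg (by omega : ¬ n = 0)]
    exact hpw
  · intro i hi
    rcases Nat.eq_zero_or_pos i with h0 | h0
    · subst h0
      simp only [if_pos rfl, if_neg (by omega : ¬ (0:ℕ)+1 = 0)]
      have : (0:ℕ) + 1 - 1 = 0 := rfl
      rw [this, hp0]
      exact ⟨hux, huT, hxT⟩
    · simp only [if_neg (by omega : ¬ i = 0), if_neg (by omega : ¬ i+1 = 0)]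
      have h2 : (i-1) + 1 < n := by omega
      have := hp (i-1) h2
      have he1 : i - 1 + 1 = i := by omega
      have he2 : i + 1 - 1 = i := rfl
      rw [he1] at this
      rw [he2]
      exact this

lemma mem_B_of_witness9 (hrange : ∀ u v, E u v → 1 ≤ u ∧ u < v ∧ v ≤ N)
    (hdepth : ¬ HasPath (subE E S) d) {v w n x : ℕ}
    (hv : 1 ≤ v) (hw1 : 1 ≤ w) (hwN : w ≤ N)
    (hpath : PathFromTo (subE E (Sle S (w-1))) x w n)
    (hdist : w - v + (v - w) < n) : x ∈ Bset N E S d v := by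
  classical
  have hnd : n ≤ d := path_nodes_le9 hrange hdepth hpath
  have hn1 : 1 ≤ n := by omega
  set Q : ℕ → Prop := fun j => PathFromTo (subE E (Sle S (w-1))) x w j with hQ
  have hQn : Q n := hpath
  set i := Nat.findGreatest Q d with hi
  have hni : n ≤ i := Nat.le_findGreatest hnd hQn
  have hid : i ≤ d := Nat.findGreatest_le d
  have hQi : Q i := Nat.findGreatest_spec (by omega) hQn
  have hmax : ∀ j, i < j → ¬ Q j := by
    intro j hj hQj
    rcases le_or_gt j d with hjd | hjd
    · exact Nat.findGreatest_is_greatest hj hjd hQj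
    · exact absurd (path_nodes_le9 hrange hdepth hQj) (by omega)
  have hxA : x ∈ Aset N E S w i := ⟨hw1, hwN, by omega, hQi, hmax⟩
  simp only [Bset, Set.mem_iUnion, Finset.mem_Icc, Set.mem_union]
  refine ⟨w - v + (v - w) + 1, ⟨by omega, by omega⟩, i, ⟨by omega, by omega⟩, ?_⟩
  rcases le_or_gt w v with hwv | hwv
  · left
    have : v + 1 - (w - v + (v - w) + 1) = w := by omega
    rwa [this]
  · right
    have : v - 1 + (w - v + (v - w) + 1) = w := by omega
    rwa [this]

lemma witness_of_mem_B9 {v x : ℕ} (hv : 1 ≤ v) (hx : x ∈ Bset N E S d v) :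
    ∃ w n, 1 ≤ w ∧ w ≤ N ∧ w - v + (v - w) < n ∧
      PathFromTo (subE E (Sle S (w-1))) x w n := by
  simp only [Bset, Set.mem_iUnion, Finset.mem_Icc, Set.mem_union] at hx
  obtain ⟨j, ⟨hj1, hjd⟩, i, ⟨hij, hid⟩, hx⟩ := hx
  rcases hx with h | h
  · obtain ⟨hw1, hwN, hi1, hpath, -⟩ := h
    exact ⟨_, _, hw1, hwN, by omega, hpath⟩
  · obtain ⟨hw1, hwN, hi1, hpath, -⟩ := h
    exact ⟨_, _, hw1, hwN, by omega, hpath⟩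

end AuxStmt9

/-- For every `v ∈ [N]`, with `P_v = S_{≤v} ∪ B_v`,
`parents(P_v \ P_{v-1}, G) ∪ parents(P_{v-1} \ P_v, G) ⊆ P_{v-1} ∩ P_v`. -/
theorem stmt9 (N e d : ℕ) (E : ℕ → ℕ → Prop) (S : Set ℕ)
    (hrange : ∀ u v, E u v → 1 ≤ u ∧ u < v ∧ v ≤ N)
    (hS : S ⊆ Set.Icc 1 N) (hSe : S.encard ≤ e)
    (hdepth : ¬ HasPath (subE E S) d) :
    ∀ v, 1 ≤ v → v ≤ N →
      parentsOf E (Pbase N E S d v \ Pbase N E S d (v-1)) ∪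
        parentsOf E (Pbase N E S d (v-1) \ Pbase N E S d v) ⊆
      Pbase N E S d (v-1) ∩ Pbase N E S d v := by
  intro v hv1 hvN u hu
  have hmain : ∃ x, E u x ∧ ((x ∈ Pbase N E S d v ∧ x ∉ Pbase N E S d (v-1)) ∨
      (x ∈ Pbase N E S d (v-1) ∧ x ∉ Pbase N E S d v)) := by
    rcases hu with h | h <;> obtain ⟨x, hx, hE⟩ := h
    · exact ⟨x, hE, Or.inl ⟨hx.1, hx.2⟩⟩
    · exact ⟨x, hE, Or.inr ⟨hx.1, hx.2⟩⟩
  obtain ⟨x, hEux, hx⟩ := hmain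
  obtain ⟨hu1, hux, hxN⟩ := hrange u x hEux
  have hPv : Pbase N E S d v = Sle S v ∪ Bset N E S d v := by
    rw [Pbase, if_neg (by omega)]
  rcases eq_or_lt_of_le hv1 with hv1' | hv2
  · -- v = 1
    exfalso
    have hP0 : Pbase N E S d (v-1) = ∅ := by rw [Pbase, if_pos (by omega)]
    rcases hx with ⟨hxin, -⟩ | ⟨hxin, -⟩
    · rw [hPv] at hxin
      rcases hxin with h | h
      · obtain ⟨-, h1, h2⟩ := h
        omega
      · obtain ⟨w, n, hw1, hwN, hdist, hpath⟩ := witness_of_mem_B9 hv1 h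
        have hle := path_start_le9 hrange (by omega) hpath
        omega
    · rw [hP0] at hxin
      exact hxin
  · -- v ≥ 2
    have hPv1 : Pbase N E S d (v-1) = Sle S (v-1) ∪ Bset N E S d (v-1) := by
      rw [Pbase, if_neg (by omega)]
    have hv11 : 1 ≤ v - 1 := by omega
    have notB : ∀ v' : ℕ, 1 ≤ v' → x ∉ Bset N E S d v' → ∀ w n, 1 ≤ w → w ≤ N →
        PathFromTo (subE E (Sle S (w-1))) x w n → n ≤ w - v' + (v' - w) := by
      intro v' hv' hnB w n hw1 hwN hpath
      by_contra hc
      exact hnB (mem_B_of_witness9 hrange hdepth hv' hw1 hwN hpath (by omega))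
    have key : (u ∈ S ∧ u ≤ v - 1) ∨
        (u ∈ Bset N E S d (v-1) ∧ u ∈ Bset N E S d v) := by
      rcases hx with ⟨hxin, hxout⟩ | ⟨hxin, hxout⟩
      · rw [hPv] at hxin
        rw [hPv1] at hxout
        have hxnB : x ∉ Bset N E S d (v-1) := fun h => hxout (Or.inr h)
        have hxnS : x ∉ Sle S (v-1) := fun h => hxout (Or.inl h)
        rcases hxin with h | h
        · -- x ∈ Sle S v, so x = v
          have hxS := h.1
          obtain ⟨hx1, hxv⟩ : 1 ≤ x ∧ x ≤ v := h.2
          have hxv' : x = v := by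
            by_contra hc
            exact hxnS ⟨hxS, by simp [Set.mem_Icc]; omega⟩
          by_cases huS : u ∈ S
          · left; exact ⟨huS, by omega⟩
          · right
            have htriv : PathFromTo (subE E (Sle S (x-1))) x x 1 :=
              ⟨fun _ => x, rfl, rfl, fun i hi => absurd hi (by omega)⟩
            have hxT : x ∉ Sle S (x-1) := by
              simp only [Sle, Set.mem_inter_iff, Set.mem_Icc]
              rintro ⟨-, h1, h2⟩; omega
            have huT : u ∉ Sle S (x-1) := fun hh => huS hh.1
            have hpath2 := path_prepend9 le_rfl htriv hEux huT hxT
            constructor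
            · exact mem_B_of_witness9 hrange hdepth hv11 (by omega) (by omega)
                hpath2 (by omega)
            · exact mem_B_of_witness9 hrange hdepth hv1 (by omega) (by omega)
                hpath2 (by omega)
        · -- x ∈ B_v \ B_{v-1}
          obtain ⟨w, n, hw1, hwN, hdist, hpath⟩ := witness_of_mem_B9 hv1 h
          have hnle := notB (v-1) hv11 hxnB w n hw1 hwN hpath
          have hwv : v ≤ w ∧ n = w - v + 1 := by omega
          have hle := path_start_le9 hrange (by omega) hpath
          by_cases huS : u ∈ S
          · left; exact ⟨huS, by omega⟩
          · right
            have huT : u ∉ Sle S (w-1) := fun hh => huS hh.1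
            have hxT : x ∉ Sle S (w-1) := path_start_not9 (by omega) hpath
            have hpath2 := path_prepend9 (by omega) hpath hEux huT hxT
            constructor
            · exact mem_B_of_witness9 hrange hdepth hv11 hw1 hwN hpath2 (by omega)
            · exact mem_B_of_witness9 hrange hdepth hv1 hw1 hwN hpath2 (by omega)
      · rw [hPv1] at hxin
        rw [hPv] at hxout
        have hxnB : x ∉ Bset N E S d v := fun h => hxout (Or.inr h)
        have hxB : x ∈ Bset N E S d (v-1) := by
          rcases hxin with h | h
          · exfalso
            exact hxout (Or.inl ⟨h.1, by
              obtain ⟨-, h1, h2⟩ := h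
              simp [Set.mem_Icc]; omega⟩)
          · exact h
        obtain ⟨w, n, hw1, hwN, hdist, hpath⟩ := witness_of_mem_B9 hv11 hxB
        have hnle := notB v hv1 hxnB w n hw1 hwN hpath
        have hwv : w ≤ v - 1 ∧ n = v - w := by omega
        have hle := path_start_le9 hrange (by omega) hpath
        by_cases huS : u ∈ S
        · left; exact ⟨huS, by omega⟩
        · right
          have huT : u ∉ Sle S (w-1) := fun hh => huS hh.1
          have hxT : x ∉ Sle S (w-1) := path_start_not9 (by omega) hpath
          have hpath2 := path_prepend9 (by omega) hpath hEux huT hxT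
          constructor
          · exact mem_B_of_witness9 hrange hdepth hv11 hw1 hwN hpath2 (by omega)
          · exact mem_B_of_witness9 hrange hdepth hv1 hw1 hwN hpath2 (by omega)
    rw [hPv, hPv1]
    rcases key with ⟨huS, huv⟩ | ⟨hB1, hB2⟩
    · exact ⟨Or.inl ⟨huS, by simp [Set.mem_Icc]; omega⟩,
        Or.inl ⟨huS, by simp [Set.mem_Icc]; omega⟩⟩
    · exact ⟨Or.inr hB1, Or.inr hB2⟩
end

section
/- Let G be a DAG on [N], b ∈ [N], and P' a legal parallel quantum pebbling of the induced line graph L_{⌈N/b⌉}. Then the transformed pebbling P = Trans(G,P',b), which expands each addition (resp. removal) of a node v' in P' into b rounds pebbling (resp. unpebbling, retaining skip nodes until the block's final deletion) the nodes of block B_{v'} in (reverse) topological order, is a legal parallel quantum pebbling of G. -/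
attribute [local instance] Classical.propDecidable

/-- The last round `i ≤ t` in which node `v` carries a pebble. -/
noncomputable def LastDelete (P : ℕ → Set ℕ) (t v : ℕ) : ℕ := sSup {i | i ≤ t ∧ v ∈ P i}

/-- The last round `i ≤ t` in which a pebble is placed on node `M`
(i.e. the largest `i` with `M ∉ P (i-1)`). -/
noncomputable def LastAdd (P : ℕ → Set ℕ) (t M : ℕ) : ℕ := sSup {i | i ≤ t ∧ M ∉ P (i-1)}

/-- The number of blocks `⌈N/b⌉`. -/
def numBlocks (N b : ℕ) : ℕ := (N + b - 1) / b

/-- The index of the block containing node `v`, i.e. `⌈v/b⌉`. -/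
def blockOf (b v : ℕ) : ℕ := (v + b - 1) / b

/-- The `i`-th block `B_i = {(i-1)b+1, …, min(ib, N)}`. -/
def blockSet (N b i : ℕ) : Set ℕ := Set.Icc ((i-1)*b + 1) (min (i*b) N)

/-- The skip nodes of block `B_i`: nodes with an outgoing edge skipping block `B_{i+1}`. -/
def SkipSet (N b : ℕ) (E : ℕ → ℕ → Prop) (i : ℕ) : Set ℕ :=
  {u ∈ blockSet N b i | ∃ v, E u v ∧ i + 1 < blockOf b v}

/-- The total number of skip nodes of `G` with block size `b`. -/
noncomputable def NumSkip (N b : ℕ) (E : ℕ → ℕ → Prop) : ℕ :=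
  ∑ i ∈ Finset.Icc 1 (numBlocks N b), (SkipSet N b E i).ncard

/-- State of block `i` at the end of (expanded) round `j` of the simulated pebbling:
fully pebbled when `i ∈ P'_j` (only `{N}` for the last block after its final placement),
only skip nodes when unpebbled but still needed, empty after its final deletion. -/
noncomputable def endState (N b : ℕ) (E : ℕ → ℕ → Prop) (P' : ℕ → Set ℕ) (t i j : ℕ) :
    Set ℕ :=
  if i ∈ P' j then
    (if i = numBlocks N b ∧ LastAdd P' t (numBlocks N b) ≤ j then {N} else blockSet N b i)
  else if (∃ j' ≤ j, i ∈ P' j') ∧ j ≤ LastDelete P' t i then SkipSet N b E i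
  else ∅

/-- State of block `i` during round `j` after `k` sub-steps: when block `i` is being
added, its nodes are pebbled in topological order (and, for the final placement on the
last block, the non-sink nodes are afterwards removed in reverse order); when it is being
removed, its nodes are removed in reverse topological order, retaining the skip nodes
unless this is the block's final deletion; otherwise it is unchanged. -/
noncomputable def midState (N b : ℕ) (E : ℕ → ℕ → Prop) (P' : ℕ → Set ℕ) (t i j k : ℕ) :
    Set ℕ :=
  let lo := (i-1)*b + 1
  let hi := min (i*b) N
  let prev := endState N b E P' t i (j-1)
  let k' := if i = numBlocks N b then k else min k b
  if i ∈ P' j ∧ i ∉ P' (j-1) then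
    (prev ∪ Set.Icc lo (min (lo + k' - 1) hi)) \ Set.Icc (hi + b - k') (hi - 1)
  else if i ∉ P' j ∧ i ∈ P' (j-1) then
    (prev \ Set.Icc (hi + 1 - k') hi) ∪
      (if j - 1 = LastDelete P' t i then ∅ else SkipSet N b E i)
  else prev

/-- Given a global sub-round `s`, the pair (round of `P'`, sub-step within that round),
where the round `LastAdd(P')` is expanded to `b + (N - (⌈N/b⌉-1)b - 1)` sub-steps and
every other round to `b` sub-steps. -/
noncomputable def roundOf (N b : ℕ) (P' : ℕ → Set ℕ) (t s : ℕ) : ℕ × ℕ :=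
  let js := LastAdd P' t (numBlocks N b)
  let r := N - (numBlocks N b - 1)*b - 1
  if s ≤ js * b + r then
    if s ≤ js * b then ((s + b - 1)/b, s - ((s + b - 1)/b - 1) * b)
    else (js, s - (js - 1) * b)
  else ((s - r + b - 1)/b, (s - r) - ((s - r + b - 1)/b - 1) * b)

/-- The transformed pebbling `TransPeb(G, P', b)` of `G`, obtained from a pebbling `P'` of
the induced line graph `L_{⌈N/b⌉}`. -/
noncomputable def TransPeb (N b : ℕ) (E : ℕ → ℕ → Prop) (P' : ℕ → Set ℕ) (t s : ℕ) :
    Set ℕ :=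
  ⋃ i ∈ Finset.Icc 1 (numBlocks N b),
    midState N b E P' t i (roundOf N b P' t s).1 (roundOf N b P' t s).2

/-- The number of rounds of the transformed pebbling. -/
def TransTime (N b t : ℕ) : ℕ := t * b + (N - (numBlocks N b - 1)*b - 1)


namespace Stmt12

structure Ctx (N b : ℕ) (E : ℕ → ℕ → Prop) (P' : ℕ → Set ℕ) (t : ℕ) : Prop where
  hb : 1 ≤ b
  hbN : b ≤ N
  hrange : ∀ u v, E u v → 1 ≤ u ∧ u < v ∧ v ≤ N
  hP' : IsQPebbling (lineE (numBlocks N b)) {numBlocks N b} P' t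

variable {N b : ℕ} {E : ℕ → ℕ → Prop} {P' : ℕ → Set ℕ} {t : ℕ}

/-! ### arithmetic basics -/

lemma succ_pred_mul {i : ℕ} (hi : 1 ≤ i) : (i-1)*b + b = i * b := by
  have h : i - 1 + 1 = i := by omega
  calc (i-1)*b + b = (i-1+1) * b := by ring
  _ = i * b := by rw [h]

lemma div_eq_of {a c : ℕ} (hb : 1 ≤ b) (h1 : c * b ≤ a) (h2 : a < (c+1) * b) : a / b = c := by
  have l1 : c ≤ a / b := by
    have := Nat.div_le_div_right (c := b) h1
    rwa [Nat.mul_div_cancel _ (by omega : 0 < b)] at this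
  have l2 : a / b < c + 1 := (Nat.div_lt_iff_lt_mul (by omega : 0 < b)).mpr
    (by omega)
  omega

lemma self_div_bounds {a : ℕ} (hb : 1 ≤ b) : (a / b) * b ≤ a ∧ a < (a / b + 1) * b := by
  refine ⟨Nat.div_mul_le_self _ _, ?_⟩
  have := (Nat.div_lt_iff_lt_mul (by omega : 0 < b)).mp (Nat.lt_succ_self (a / b))
  simp only [Nat.succ_eq_add_one] at this
  omega

lemma nb_pos (C : Ctx N b E P' t) : 1 ≤ numBlocks N b := by
  rw [numBlocks, Nat.one_le_div_iff (by have := C.hb; omega)]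
  have := C.hb; have := C.hbN; omega

lemma nb_bounds (C : Ctx N b E P' t) :
    (numBlocks N b - 1) * b + 1 ≤ N ∧ N ≤ numBlocks N b * b := by
  have hb := C.hb; have hbN := C.hbN
  have hpos := nb_pos C
  have h12 := self_div_bounds (a := N + b - 1) hb
  rw [show (N + b - 1) / b = numBlocks N b from rfl] at h12
  have h3 := succ_pred_mul (b := b) hpos
  have h4 : numBlocks N b * b + b = (numBlocks N b + 1) * b := by ring
  omega

lemma blockOf_eq (hb : 1 ≤ b) {i x : ℕ} (hi : 1 ≤ i) (h1 : (i-1)*b + 1 ≤ x) (h2 : x ≤ i * b) :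
    blockOf b x = i := by
  have h3 := succ_pred_mul (b := b) hi
  have h4 : i * b + b = (i + 1) * b := by ring
  exact div_eq_of hb (by omega) (by omega)

lemma blockOf_mem (hb : 1 ≤ b) {x : ℕ} (hx : 1 ≤ x) :
    1 ≤ blockOf b x ∧ (blockOf b x - 1) * b + 1 ≤ x ∧ x ≤ blockOf b x * b := by
  set i := blockOf b x with hi
  have h12 := self_div_bounds (a := x + b - 1) hb
  rw [show (x + b - 1)/b = i from rfl] at h12
  have hip : 1 ≤ i := by
    rw [hi, blockOf, Nat.one_le_div_iff (by omega)]; omega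
  have h3 := succ_pred_mul (b := b) hip
  have h4 : i * b + b = (i + 1) * b := by ring
  omega

lemma blockOf_mono {u x : ℕ} (h : u ≤ x) : blockOf b u ≤ blockOf b x :=
  Nat.div_le_div_right (by omega)

lemma blockOf_le_nb (hb : 1 ≤ b) {x : ℕ} (hx : x ≤ N) : blockOf b x ≤ numBlocks N b :=
  blockOf_mono (by omega)

lemma mem_blockSet_iff {i x : ℕ} (hb : 1 ≤ b) (hi : 1 ≤ i) :
    x ∈ blockSet N b i ↔ blockOf b x = i ∧ 1 ≤ x ∧ x ≤ N := by
  rw [blockSet, Set.mem_Icc]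
  constructor
  · rintro ⟨h1, h2⟩
    exact ⟨blockOf_eq hb hi h1 (by omega), by omega, by omega⟩
  · rintro ⟨h1, h2, h3⟩
    have := blockOf_mem hb h2 (x := x)
    rw [h1] at this
    omega

lemma blockSet_subset {i : ℕ} : blockSet N b i ⊆ Set.Icc 1 N := by
  intro x hx
  rw [blockSet, Set.mem_Icc] at hx
  simp only [Set.mem_Icc]
  omega

lemma skip_subset {i : ℕ} : SkipSet N b E i ⊆ blockSet N b i := fun _ h => h.1

lemma skip_nb_empty (C : Ctx N b E P' t) : SkipSet N b E (numBlocks N b) = ∅ := by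
  ext u
  simp only [SkipSet, Set.mem_setOf_eq, Set.mem_empty_iff_false, iff_false, not_and]
  rintro hu ⟨v, hEv, hlt⟩
  have hr := C.hrange u v hEv
  have := blockOf_le_nb (N := N) C.hb (x := v) hr.2.2
  omega

lemma N_mem_blockSet_nb (C : Ctx N b E P' t) : N ∈ blockSet N b (numBlocks N b) := by
  have := nb_bounds C
  rw [blockSet, Set.mem_Icc]
  omega

/-! ### pebbling `P'` facts -/

lemma t_pos (C : Ctx N b E P' t) : 1 ≤ t := by
  by_contra h
  have h0 : t = 0 := by omega
  have := C.hP'.final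
  rw [h0, C.hP'.init] at this
  have : numBlocks N b ∈ (∅ : Set ℕ) := by rw [this]; rfl
  exact this

lemma lineE_parents {n i : ℕ} (h2 : 2 ≤ i) (hn : i ≤ n) : parents (lineE n) i = {i - 1} := by
  ext u
  simp only [parents, lineE, Set.mem_setOf_eq, Set.mem_singleton_iff]
  omega

lemma lastAdd_le (C : Ctx N b E P' t) : LastAdd P' t (numBlocks N b) ≤ t := by
  apply csSup_le ⟨1, by simp [C.hP'.init, t_pos C]⟩
  intro x hx; exact hx.1

lemma lastAdd_spec (C : Ctx N b E P' t) :
    1 ≤ LastAdd P' t (numBlocks N b) ∧ LastAdd P' t (numBlocks N b) ≤ t ∧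
      numBlocks N b ∉ P' (LastAdd P' t (numBlocks N b) - 1) := by
  have hne : ({i | i ≤ t ∧ numBlocks N b ∉ P' (i-1)} : Set ℕ).Nonempty :=
    ⟨1, by simp [C.hP'.init, t_pos C]⟩
  have hbdd : BddAbove {i | i ≤ t ∧ numBlocks N b ∉ P' (i-1)} := ⟨t, fun x hx => hx.1⟩
  have hmem := Nat.sSup_mem hne hbdd
  have h1 : 1 ≤ LastAdd P' t (numBlocks N b) :=
    le_csSup hbdd (by simp [C.hP'.init, t_pos C] : (1:ℕ) ∈ _)
  exact ⟨h1, hmem.1, hmem.2⟩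

lemma mem_ge_lastAdd (C : Ctx N b E P' t) {j : ℕ}
    (h1 : LastAdd P' t (numBlocks N b) ≤ j) (h2 : j ≤ t) : numBlocks N b ∈ P' j := by
  by_contra h
  by_cases hjt : j = t
  · rw [hjt, C.hP'.final] at h; exact h rfl
  · have : j + 1 ∈ {i | i ≤ t ∧ numBlocks N b ∉ P' (i-1)} := by
      simp only [Set.mem_setOf_eq]
      constructor
      · omega
      · simpa using h
    have := le_csSup (⟨t, fun x hx => hx.1⟩ : BddAbove _) this
    rw [LastAdd] at h1
    omega

lemma le_lastDelete {i j : ℕ} (h : i ∈ P' j) (hj : j ≤ t) : j ≤ LastDelete P' t i :=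
  le_csSup ⟨t, fun x hx => hx.1⟩ ⟨hj, h⟩

lemma lastDelete_le {i : ℕ} : LastDelete P' t i ≤ t := by
  by_cases h : ({j | j ≤ t ∧ i ∈ P' j} : Set ℕ).Nonempty
  · exact csSup_le h (fun x hx => hx.1)
  · rw [LastDelete, Set.not_nonempty_iff_eq_empty.mp h]
    simp

lemma lastDelete_mem {i : ℕ} (h : ({j | j ≤ t ∧ i ∈ P' j} : Set ℕ).Nonempty) :
    i ∈ P' (LastDelete P' t i) :=
  (Nat.sSup_mem h ⟨t, fun x hx => hx.1⟩).2

lemma lastDelete_mem' {i j : ℕ} (h : i ∈ P' j) (hj : j ≤ t) :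
    i ∈ P' (LastDelete P' t i) := lastDelete_mem ⟨j, hj, h⟩

/-- InvA: if block `i ≤ nb` is pebbled at round `j ≤ t`, every block `m < i` was pebbled
at some earlier round. -/
lemma invA (C : Ctx N b E P' t) :
    ∀ j, j ≤ t → ∀ i, i ≤ numBlocks N b → i ∈ P' j →
      ∀ m, 1 ≤ m → m < i → ∃ j', j' < j ∧ m ∈ P' j' := by
  intro j
  induction j using Nat.strong_induction_on with
  | _ j IH =>
    intro hjt i hinb hij m hm1 hmi
    rcases Nat.eq_zero_or_pos j with hj0 | hj0
    · rw [hj0, C.hP'.init] at hij; exact absurd hij (Set.notMem_empty _)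
    by_cases hprev : i ∈ P' (j-1)
    · obtain ⟨j', hj', hmem⟩ := IH (j-1) (by omega) (by omega) i hinb hprev m hm1 hmi
      exact ⟨j', by omega, hmem⟩
    · have hadd := C.hP'.addLegal j hj0 hjt i ⟨hij, hprev⟩
      have hi2 : 2 ≤ i := by omega
      rw [lineE_parents hi2 hinb] at hadd
      have hi1 : i - 1 ∈ P' (j-1) := hadd rfl
      by_cases hmeq : m = i - 1
      · exact ⟨j - 1, by omega, hmeq ▸ hi1⟩
      · obtain ⟨j', hj', hmem⟩ := IH (j-1) (by omega) (by omega) (i-1) (by omega) hi1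
          m hm1 (by omega)
        exact ⟨j', by omega, hmem⟩

/-- InvB: if block `i < nb` is pebbled at round `j ≤ t`, every block `m ≤ i` is pebbled
at some round in `[j, t]`. -/
lemma invB (C : Ctx N b E P' t) :
    ∀ i, i < numBlocks N b → ∀ j, j ≤ t → i ∈ P' j →
      ∀ m, 1 ≤ m → m ≤ i → ∃ j'', j ≤ j'' ∧ j'' ≤ t ∧ m ∈ P' j'' := by
  intro i
  induction i with
  | zero => intro _ j _ _ m hm1 hm2; omega
  | succ i IH =>
    intro hinb j hjt hij m hm1 hmi
    by_cases hmeq : m = i + 1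
    · exact ⟨j, le_refl j, hjt, hmeq ▸ hij⟩
    have hmle : m ≤ i := by omega
    have hi2 : 2 ≤ i + 1 := by omega
    -- find the deletion of block i+1 after round j
    set D := LastDelete P' t (i+1) with hD
    have hjD : j ≤ D := le_lastDelete hij hjt
    have hDt : D ≤ t := lastDelete_le
    have hmemD : i + 1 ∈ P' D := lastDelete_mem' hij hjt
    have hDlt : D < t := by
      rcases Nat.lt_or_ge D t with h | h
      · exact h
      · exfalso
        have : D = t := by omega
        rw [this, C.hP'.final] at hmemD
        have : i + 1 = numBlocks N b := hmemD
        omega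
    have hnotD1 : i + 1 ∉ P' (D+1) := by
      intro hmem
      have := le_lastDelete hmem (show D+1 ≤ t by omega)
      omega
    have hdel := C.hP'.delLegal (D+1) (by omega) (by omega) (i+1)
      (by simpa using ⟨hmemD, hnotD1⟩)
    rw [lineE_parents hi2 (by omega)] at hdel
    have : i + 1 - 1 ∈ P' (D+1-1) := hdel rfl
    simp only [Nat.add_sub_cancel] at this
    obtain ⟨j'', h1, h2, h3⟩ := IH (by omega) D hDt this m hm1 hmle
    exact ⟨j'', le_trans hjD h1, h2, h3⟩

/-! ### endState / midState formulas -/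

/-- Number of substeps of round `j`. -/
noncomputable def cap (N b : ℕ) (P' : ℕ → Set ℕ) (t j : ℕ) : ℕ :=
  b + (if j = LastAdd P' t (numBlocks N b) then N - (numBlocks N b - 1)*b - 1 else 0)

lemma cap_ge (j : ℕ) : b ≤ cap N b P' t j := by rw [cap]; omega

lemma endState_zero (C : Ctx N b E P' t) (i : ℕ) : endState N b E P' t i 0 = ∅ := by
  have h0 : i ∉ P' 0 := by rw [C.hP'.init]; exact Set.notMem_empty _
  rw [endState, if_neg h0, if_neg]
  rintro ⟨⟨j', hj', hmem⟩, -⟩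
  interval_cases j'
  exact h0 hmem

lemma endState_of_mem {i j : ℕ} (h : i ∈ P' j)
    (hne : ¬(i = numBlocks N b ∧ LastAdd P' t (numBlocks N b) ≤ j)) :
    endState N b E P' t i j = blockSet N b i := by
  rw [endState, if_pos h, if_neg hne]

lemma endState_prev_full (C : Ctx N b E P' t) {i j : ℕ} (hj1 : 1 ≤ j) (hjt : j ≤ t)
    (h2 : i ∈ P' (j-1)) (h1 : i ∉ P' j) :
    endState N b E P' t i (j-1) = blockSet N b i := by
  apply endState_of_mem h2
  rintro ⟨rfl, hle⟩
  exact h1 (mem_ge_lastAdd C (by omega) hjt)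

lemma endState_subset (C : Ctx N b E P' t) {i j : ℕ} :
    endState N b E P' t i j ⊆ blockSet N b i := by
  rw [endState]
  split_ifs with h1 h2 h3
  · rw [Set.singleton_subset_iff, h2.1]
    exact N_mem_blockSet_nb C
  · exact subset_rfl
  · exact skip_subset
  · exact Set.empty_subset _

lemma midState_subset (C : Ctx N b E P' t) {i j k : ℕ} :
    midState N b E P' t i j k ⊆ blockSet N b i := by
  simp only [midState]
  split_ifs <;>
    first
      | exact (Set.diff_subset.trans (Set.union_subset (endState_subset C)
          (Set.Icc_subset_Icc_right (min_le_right _ _))))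
      | exact Set.union_subset (Set.diff_subset.trans (endState_subset C))
          (Set.empty_subset _)
      | exact Set.union_subset (Set.diff_subset.trans (endState_subset C)) skip_subset
      | exact endState_subset C

lemma midState_stay {i j : ℕ} (h : i ∈ P' j ↔ i ∈ P' (j-1)) (k : ℕ) :
    midState N b E P' t i j k = endState N b E P' t i (j-1) := by
  simp only [midState]
  rw [if_neg (by tauto), if_neg (by tauto)]

lemma midState_add (C : Ctx N b E P' t) {i j : ℕ} (hi : 1 ≤ i) (hne : i ≠ numBlocks N b)
    (h1 : i ∈ P' j) (h2 : i ∉ P' (j-1)) (k : ℕ) :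
    midState N b E P' t i j k =
      endState N b E P' t i (j-1) ∪
        Set.Icc ((i-1)*b + 1) (min ((i-1)*b + 1 + min k b - 1) (min (i*b) N)) := by
  have hb := C.hb; have hbN := C.hbN
  simp only [midState]
  rw [if_pos ⟨h1, h2⟩, if_neg hne]
  have hib : 1 ≤ i * b := by
    calc 1 = 1 * 1 := rfl
    _ ≤ i * b := Nat.mul_le_mul hi hb
  have hemp : Set.Icc (min (i*b) N + b - min k b) (min (i*b) N - 1) = ∅ :=
    Set.Icc_eq_empty (by have := Nat.min_le_right k b; omega)
  rw [hemp, Set.diff_empty]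

lemma endState_nb_prev_empty (C : Ctx N b E P' t) {j : ℕ}
    (h2 : numBlocks N b ∉ P' (j-1)) :
    endState N b E P' t (numBlocks N b) (j-1) = ∅ := by
  rw [endState, if_neg h2]
  split_ifs
  · exact skip_nb_empty C
  · rfl

lemma midState_add_nb (C : Ctx N b E P' t) {j : ℕ}
    (h1 : numBlocks N b ∈ P' j) (h2 : numBlocks N b ∉ P' (j-1)) (k : ℕ) :
    midState N b E P' t (numBlocks N b) j k =
      (Set.Icc ((numBlocks N b - 1)*b + 1) (min ((numBlocks N b - 1)*b + 1 + k - 1) N)) \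
        (Set.Icc (N + b - k) (N - 1)) := by
  simp only [midState]
  rw [if_pos ⟨h1, h2⟩, if_pos (by trivial), endState_nb_prev_empty C h2, Set.empty_union,
    Nat.min_eq_right (nb_bounds C).2]

lemma midState_del (C : Ctx N b E P' t) {i j k : ℕ} (hj1 : 1 ≤ j) (hjt : j ≤ t)
    (h1 : i ∉ P' j) (h2 : i ∈ P' (j-1)) (hk : i = numBlocks N b → k ≤ b) :
    midState N b E P' t i j k =
      (blockSet N b i \ Set.Icc (min (i*b) N + 1 - min k b) (min (i*b) N)) ∪
        (if j - 1 = LastDelete P' t i then ∅ else SkipSet N b E i) := by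
  simp only [midState]
  rw [if_neg (by tauto), if_pos ⟨h1, h2⟩]
  have hk' : (if i = numBlocks N b then k else min k b) = min k b := by
    split_ifs with h
    · have := hk h; omega
    · rfl
  rw [hk', endState_prev_full C hj1 hjt h2 h1]

lemma mid0 (C : Ctx N b E P' t) {j : ℕ} (hj1 : 1 ≤ j) (hjt : j ≤ t) {i : ℕ}
    (hi : 1 ≤ i) :
    midState N b E P' t i j 0 = endState N b E P' t i (j-1) := by
  have hb := C.hb
  by_cases h1 : i ∈ P' j <;> by_cases h2 : i ∈ P' (j-1)
  · exact midState_stay (by tauto) 0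
  · -- ADD
    by_cases hne : i = numBlocks N b
    · subst hne
      rw [midState_add_nb C h1 h2 0, endState_nb_prev_empty C h2]
      have hl : Set.Icc ((numBlocks N b - 1)*b + 1) (min ((numBlocks N b - 1)*b + 1 + 0 - 1) N)
          = ∅ := Set.Icc_eq_empty
        (by have := Nat.min_le_left ((numBlocks N b - 1)*b + 1 + 0 - 1) N; omega)
      rw [hl, Set.empty_diff]
    · rw [midState_add C hi hne h1 h2 0]
      have hl : Set.Icc ((i-1)*b + 1) (min ((i-1)*b + 1 + min 0 b - 1) (min (i*b) N)) = ∅ :=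
        Set.Icc_eq_empty
        (by have h := Nat.min_le_left ((i-1)*b + 1 + min 0 b - 1) (min (i*b) N)
            have h2 : min 0 b = 0 := Nat.min_eq_left (by omega)
            omega)
      rw [hl, Set.union_empty]
  · -- DEL
    rw [midState_del C hj1 hjt h1 h2 (fun _ => by omega),
      endState_prev_full C hj1 hjt h2 h1]
    have hl : Set.Icc (min (i*b) N + 1 - min 0 b) (min (i*b) N) = ∅ :=
      Set.Icc_eq_empty (by have h2 : min 0 b = 0 := Nat.min_eq_left (by omega); omega)
    rw [hl, Set.diff_empty]
    split_ifs
    · rw [Set.union_empty]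
    · rw [Set.union_eq_left]
      exact skip_subset
  · exact midState_stay (by tauto) 0

lemma endState_off (C : Ctx N b E P' t) {i j : ℕ} (hj1 : 1 ≤ j) (hjt : j ≤ t)
    (h1 : i ∉ P' j) (h2 : i ∉ P' (j-1)) :
    endState N b E P' t i (j-1) = endState N b E P' t i j := by
  rw [endState, if_neg h2, endState, if_neg h1]
  apply if_congr _ rfl rfl
  constructor
  · rintro ⟨⟨j', hj', hm⟩, hld⟩
    have hne : ({j'' | j'' ≤ t ∧ i ∈ P' j''} : Set ℕ).Nonempty := ⟨j', by omega, hm⟩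
    have hmem := lastDelete_mem (i := i) hne
    have : LastDelete P' t i ≠ j - 1 := fun h => h2 (h ▸ hmem)
    have : LastDelete P' t i ≠ j := fun h => h1 (h ▸ hmem)
    exact ⟨⟨j', by omega, hm⟩, by omega⟩
  · rintro ⟨⟨j', hj', hm⟩, hld⟩
    have hj'ne : j' ≠ j := fun h => h1 (h ▸ hm)
    exact ⟨⟨j', by omega, hm⟩, by omega⟩

lemma endState_stay (C : Ctx N b E P' t) {i j : ℕ} (hj1 : 1 ≤ j) (hjt : j ≤ t)
    (h1 : i ∈ P' j) (h2 : i ∈ P' (j-1)) :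
    endState N b E P' t i (j-1) = endState N b E P' t i j := by
  rw [endState, if_pos h2, endState, if_pos h1]
  apply if_congr _ rfl rfl
  constructor
  · rintro ⟨rfl, hle⟩; exact ⟨rfl, by omega⟩
  · rintro ⟨rfl, hle⟩
    refine ⟨rfl, ?_⟩
    obtain ⟨la1, lat, lane⟩ := lastAdd_spec C
    have : LastAdd P' t (numBlocks N b) ≠ j := fun h => lane (h ▸ h2)
    omega

lemma midcap (C : Ctx N b E P' t) {i j : ℕ} (hj1 : 1 ≤ j) (hjt : j ≤ t)
    (hi1 : 1 ≤ i) (hinb : i ≤ numBlocks N b) :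
    midState N b E P' t i j (cap N b P' t j) = endState N b E P' t i j := by
  have hb := C.hb; have hbN := C.hbN
  have hnb := nb_bounds C
  have hsp := succ_pred_mul (b := b) hi1
  have hcap := cap_ge (N := N) (b := b) (P' := P') (t := t) j
  by_cases h1 : i ∈ P' j <;> by_cases h2 : i ∈ P' (j-1)
  · rw [midState_stay (by tauto), endState_stay C hj1 hjt h1 h2]
  · -- ADD
    by_cases hne : i = numBlocks N b
    · subst hne
      by_cases hjs : j = LastAdd P' t (numBlocks N b)
      · -- final placement on the last block
        rw [midState_add_nb C h1 h2, endState, if_pos h1, if_pos ⟨rfl, le_of_eq hjs.symm⟩]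
        have hc : cap N b P' t j = b + (N - (numBlocks N b - 1)*b - 1) := by
          rw [cap, if_pos hjs]
        rw [hc]
        ext x
        simp only [Set.mem_diff, Set.mem_Icc, Set.mem_singleton_iff]
        omega
      · rw [midState_add_nb C h1 h2, endState, if_pos h1, if_neg]
        · have hc : cap N b P' t j = b := by rw [cap, if_neg hjs]; omega
          rw [hc, blockSet]
          rw [Nat.min_eq_right hnb.2]
          ext x
          simp only [Set.mem_diff, Set.mem_Icc]
          omega
        · rintro ⟨-, hle⟩
          rcases Nat.lt_or_ge (LastAdd P' t (numBlocks N b)) j with h | h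
          · exact h2 (mem_ge_lastAdd C (by omega) (by omega))
          · exact hjs (by omega)
    · rw [midState_add C hi1 hne h1 h2, endState_of_mem h1 (by rintro ⟨h, -⟩; exact hne h)]
      have hmin : min (cap N b P' t j) b = b := Nat.min_eq_right hcap
      rw [hmin, blockSet]
      have hend : (i-1)*b + 1 + b - 1 = i*b := by omega
      rw [hend, ← Nat.min_assoc, Nat.min_self]
      apply Set.union_eq_right.mpr
      intro x hx
      exact endState_subset C hx
  · -- DEL
    have hknb : i = numBlocks N b → cap N b P' t j ≤ b := by
      rintro rfl
      have : j ≠ LastAdd P' t (numBlocks N b) := by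
        intro h
        exact h1 (mem_ge_lastAdd C (le_of_eq h.symm) hjt)
      rw [cap, if_neg this]; omega
    rw [midState_del C hj1 hjt h1 h2 hknb]
    have hmin : min (cap N b P' t j) b = b := Nat.min_eq_right hcap
    rw [hmin]
    have hemp : blockSet N b i \ Set.Icc (min (i*b) N + 1 - b) (min (i*b) N) = ∅ := by
      ext x
      simp only [blockSet, Set.mem_diff, Set.mem_Icc, Set.mem_empty_iff_false, iff_false]
      have := Nat.min_le_left (i*b) N
      omega
    rw [hemp, Set.empty_union, endState, if_neg h1]
    have hld : j - 1 ≤ LastDelete P' t i := le_lastDelete h2 (by omega)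
    by_cases hc : j - 1 = LastDelete P' t i
    · rw [if_pos hc, if_neg]
      rintro ⟨-, hle⟩
      omega
    · rw [if_neg hc, if_pos ⟨⟨j-1, by omega, h2⟩, by omega⟩]
  · rw [midState_stay (by tauto), endState_off C hj1 hjt h1 h2]

/-! ### roundOf machinery -/

noncomputable def stepsBefore (N b : ℕ) (P' : ℕ → Set ℕ) (t j : ℕ) : ℕ :=
  (j-1)*b + (if LastAdd P' t (numBlocks N b) < j then N - (numBlocks N b - 1)*b - 1 else 0)

lemma stepsBefore_succ {j : ℕ} (hj : 1 ≤ j) :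
    stepsBefore N b P' t (j+1) = stepsBefore N b P' t j + cap N b P' t j := by
  rw [stepsBefore, stepsBefore, cap]
  simp only [Nat.add_sub_cancel]
  rcases Nat.lt_trichotomy (LastAdd P' t (numBlocks N b)) j with h | h | h
  · rw [if_pos h, if_pos (by omega), if_neg (by omega)]
    have := succ_pred_mul (b := b) hj
    omega
  · rw [if_pos (by omega), if_neg (by omega), if_pos (by omega)]
    have := succ_pred_mul (b := b) hj
    omega
  · rw [if_neg (by omega), if_neg (by omega), if_neg (by omega)]
    have := succ_pred_mul (b := b) hj
    omega

lemma stepsBefore_one (C : Ctx N b E P' t) : stepsBefore N b P' t 1 = 0 := by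
  have := (lastAdd_spec C).1
  rw [stepsBefore, if_neg (by omega)]
  simp

lemma total_steps (C : Ctx N b E P' t) :
    stepsBefore N b P' t t + cap N b P' t t = TransTime N b t := by
  have hla := lastAdd_spec C
  have ht := t_pos C
  rw [stepsBefore, cap, TransTime]
  have := succ_pred_mul (b := b) ht
  rcases Nat.lt_trichotomy (LastAdd P' t (numBlocks N b)) t with h | h | h
  · rw [if_pos h, if_neg (by omega)]; omega
  · rw [if_neg (by omega), if_pos (by omega)]; omega
  · omega

lemma roundOf_eq (C : Ctx N b E P' t) {j k s : ℕ} (hj1 : 1 ≤ j) (hjt : j ≤ t)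
    (hk1 : 1 ≤ k) (hk : k ≤ cap N b P' t j)
    (hs : s = stepsBefore N b P' t j + k) :
    roundOf N b P' t s = (j, k) := by
  have hb := C.hb
  have hla := lastAdd_spec C
  have h1b : (j-1)*b + b = j*b := succ_pred_mul hj1
  have h2b : j*b + b = (j+1)*b := by ring
  rw [stepsBefore] at hs
  rw [cap] at hk
  rw [roundOf]
  rcases Nat.lt_trichotomy j (LastAdd P' t (numBlocks N b)) with hcase | hcase | hcase
  · -- j < js : k ≤ b, s ≤ js*b
    rw [if_neg (by omega)] at hs
    rw [if_neg (by omega)] at hk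
    have hmul : j * b ≤ LastAdd P' t (numBlocks N b) * b := Nat.mul_le_mul_right _ (by omega)
    have hsle : s ≤ LastAdd P' t (numBlocks N b) * b := by omega
    rw [if_pos (by omega), if_pos hsle]
    have hdiv : (s + b - 1) / b = j := div_eq_of hb (by omega) (by omega)
    rw [hdiv]
    have hsnd : s - (j - 1) * b = k := by omega
    rw [hsnd]
  · -- j = js
    rw [if_neg (by omega)] at hs
    rw [if_pos hcase] at hk
    rw [← hcase]
    by_cases hkb : k ≤ b
    · have hsle : s ≤ j * b := by omega
      rw [if_pos (by omega), if_pos hsle]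
      have hdiv : (s + b - 1) / b = j := div_eq_of hb (by omega) (by omega)
      rw [hdiv]
      have hsnd : s - (j - 1) * b = k := by omega
      rw [hsnd]
    · rw [if_pos (by omega), if_neg (by omega)]
      have hsnd : s - (j - 1) * b = k := by omega
      rw [hsnd]
  · -- j > js
    rw [if_pos hcase] at hs
    rw [if_neg (by omega)] at hk
    have hmul : LastAdd P' t (numBlocks N b) * b ≤ (j-1) * b :=
      Nat.mul_le_mul_right _ (by omega)
    have hnbb := nb_bounds C
    have hrN : N - (numBlocks N b - 1)*b - 1 < b := by
      have := succ_pred_mul (b := b) (nb_pos C)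
      omega
    rw [if_neg (by omega)]
    have hsub : s - (N - (numBlocks N b - 1)*b - 1) = (j-1)*b + k := by omega
    rw [hsub]
    have hdiv : ((j-1)*b + k + b - 1) / b = j := div_eq_of hb (by omega) (by omega)
    rw [hdiv]
    have hsnd : (j-1)*b + k - (j - 1) * b = k := by omega
    rw [hsnd]

lemma roundOf_zero (C : Ctx N b E P' t) : roundOf N b P' t 0 = (0, 0) := by
  have hb := C.hb
  rw [roundOf]
  rw [if_pos (by omega), if_pos (by omega)]
  have hdiv : (0 + b - 1) / b = 0 := Nat.div_eq_of_lt (by omega)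
  rw [hdiv]
  simp

lemma exists_jk (C : Ctx N b E P' t) :
    ∀ s, 1 ≤ s → s ≤ TransTime N b t →
      ∃ j k, 1 ≤ j ∧ j ≤ t ∧ 1 ≤ k ∧ k ≤ cap N b P' t j ∧
        s = stepsBefore N b P' t j + k := by
  intro s
  induction s with
  | zero => omega
  | succ s IH =>
    intro hs1 hsT
    rcases Nat.eq_zero_or_pos s with hs0 | hs0
    · subst hs0
      exact ⟨1, 1, le_refl 1, t_pos C, le_refl 1,
        le_trans C.hb (cap_ge 1), by rw [stepsBefore_one C]⟩
    obtain ⟨j, k, hj1, hjt, hk1, hk, hs⟩ := IH hs0 (by omega)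
    by_cases hkc : k < cap N b P' t j
    · exact ⟨j, k+1, hj1, hjt, by omega, by omega, by omega⟩
    · have hkc' : k = cap N b P' t j := by omega
      have hjt' : j < t := by
        rcases Nat.lt_or_ge j t with h | h
        · exact h
        · exfalso
          have hjeq : j = t := by omega
          subst hjeq
          have := total_steps C
          omega
      refine ⟨j+1, 1, by omega, by omega, le_refl 1, le_trans C.hb (cap_ge (j+1)), ?_⟩
      rw [stepsBefore_succ hj1]
      omega

lemma midState_zero (C : Ctx N b E P' t) (i : ℕ) :
    midState N b E P' t i 0 0 = endState N b E P' t i 0 :=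
  midState_stay Iff.rfl 0

lemma step_spec (C : Ctx N b E P' t) {s : ℕ} (hs1 : 1 ≤ s) (hsT : s ≤ TransTime N b t) :
    ∃ j k, roundOf N b P' t s = (j, k) ∧ 1 ≤ j ∧ j ≤ t ∧ 1 ≤ k ∧ k ≤ cap N b P' t j ∧
      ∀ i, 1 ≤ i → i ≤ numBlocks N b →
        midState N b E P' t i (roundOf N b P' t (s-1)).1 (roundOf N b P' t (s-1)).2
          = midState N b E P' t i j (k-1) := by
  obtain ⟨j, k, hj1, hjt, hk1, hk, hs⟩ := exists_jk C s hs1 hsT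
  refine ⟨j, k, roundOf_eq C hj1 hjt hk1 hk hs, hj1, hjt, hk1, hk, ?_⟩
  intro i hi1 hinb
  by_cases hk2 : 2 ≤ k
  · have : roundOf N b P' t (s-1) = (j, k-1) :=
      roundOf_eq C hj1 hjt (by omega) (by omega) (by omega)
    rw [this]
  · have hkeq : k = 1 := by omega
    subst hkeq
    rcases Nat.lt_or_ge j 2 with hj2 | hj2
    case _ =>
      have hjeq : j = 1 := by omega
      subst hjeq
      have hseq : s = 1 := by rw [stepsBefore_one C] at hs; omega
      rw [hseq]
      simp only [Nat.sub_self]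
      rw [roundOf_zero C]
      simp only
      rw [midState_zero C, mid0 C (by omega) (by omega) hi1]
    case _ =>
      have hsb : s - 1 = stepsBefore N b P' t (j-1) + cap N b P' t (j-1) := by
        have h := stepsBefore_succ (N := N) (b := b) (P' := P') (t := t) (j := j - 1)
          (by omega)
        rw [show j - 1 + 1 = j by omega] at h
        omega
      have : roundOf N b P' t (s-1) = (j-1, cap N b P' t (j-1)) :=
        roundOf_eq C (by omega) (by omega) (le_trans C.hb (cap_ge _)) (le_refl _) hsb
      rw [this]
      simp only
      rw [midcap C (by omega) (by omega) hi1 hinb, mid0 C hj1 hjt hi1]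

/-! ### parent presence -/

lemma block_full_during (C : Ctx N b E P' t) {i j : ℕ} (hilt : i < numBlocks N b)
    (h1 : i ∈ P' (j-1)) (h2 : i ∈ P' j) (k : ℕ) :
    blockSet N b i ⊆ midState N b E P' t i j k := by
  rw [midState_stay (by tauto), endState_of_mem h1 (by rintro ⟨rfl,-⟩; omega)]

lemma skip_present (C : Ctx N b E P' t) {i' j : ℕ} (hj1 : 1 ≤ j) (hjt : j ≤ t)
    (hi'1 : 1 ≤ i') (hi'lt : i' < numBlocks N b)
    (hα : ∃ j' ≤ j - 1, i' ∈ P' j') (hβ : j ≤ LastDelete P' t i') (k : ℕ) :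
    SkipSet N b E i' ⊆ midState N b E P' t i' j k := by
  have hne : i' ≠ numBlocks N b := by omega
  by_cases h1 : i' ∈ P' j <;> by_cases h2 : i' ∈ P' (j-1)
  · rw [midState_stay (by tauto), endState_of_mem h2 (by rintro ⟨rfl,-⟩; omega)]
    exact skip_subset
  · rw [midState_add C hi'1 hne h1 h2]
    have he : endState N b E P' t i' (j-1) = SkipSet N b E i' := by
      rw [endState, if_neg h2, if_pos ⟨hα, by omega⟩]
    rw [he]
    exact Set.subset_union_left
  · rw [midState_del C hj1 hjt h1 h2 (fun h => absurd h hne), if_neg (by omega)]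
    exact Set.subset_union_right
  · rw [midState_stay (by tauto)]
    rw [endState, if_neg h2, if_pos ⟨hα, by omega⟩]

lemma parent_present (C : Ctx N b E P' t) {j x u : ℕ} (hj1 : 1 ≤ j) (hjt : j ≤ t)
    (hE : E u x) (hxN : x ≤ N)
    (hmode : ¬(blockOf b x ∈ P' j ↔ blockOf b x ∈ P' (j-1)))
    (hub : blockOf b u < blockOf b x) (k : ℕ) :
    u ∈ midState N b E P' t (blockOf b u) j k := by
  have hb := C.hb
  obtain ⟨hu1, hux, hxN'⟩ := C.hrange u x hE
  have hi1 : 1 ≤ blockOf b x := (blockOf_mem C.hb (by omega)).1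
  have hinb : blockOf b x ≤ numBlocks N b := blockOf_le_nb C.hb hxN
  have hi'1 : 1 ≤ blockOf b u := (blockOf_mem C.hb hu1).1
  have hi2 : 2 ≤ blockOf b x := by omega
  have hpar : blockOf b x - 1 ∈ P' (j-1) ∧ blockOf b x - 1 ∈ P' j := by
    by_cases h1 : blockOf b x ∈ P' j
    · have h2 : blockOf b x ∉ P' (j-1) := by tauto
      have hadd := C.hP'.addLegal j hj1 hjt (blockOf b x) ⟨h1, h2⟩
      rw [lineE_parents hi2 hinb] at hadd
      have hp1 : blockOf b x - 1 ∈ P' (j-1) := hadd rfl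
      have hrev := C.hP'.rev j hj1 hjt
      have hmem : blockOf b x - 1 ∈ parentsOf (lineE (numBlocks N b)) (P' j \ P' (j-1)) :=
        ⟨blockOf b x, ⟨h1, h2⟩, ⟨by omega, by omega, hinb⟩⟩
      exact ⟨hp1, hrev (Or.inl hmem)⟩
    · have h2 : blockOf b x ∈ P' (j-1) := by tauto
      have hdel := C.hP'.delLegal j hj1 hjt (blockOf b x) ⟨h2, h1⟩
      rw [lineE_parents hi2 hinb] at hdel
      have hp1 : blockOf b x - 1 ∈ P' (j-1) := hdel rfl
      have hrev := C.hP'.rev j hj1 hjt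
      have hmem : blockOf b x - 1 ∈ parentsOf (lineE (numBlocks N b)) (P' (j-1) \ P' j) :=
        ⟨blockOf b x, ⟨h2, h1⟩, ⟨by omega, by omega, hinb⟩⟩
      exact ⟨hp1, hrev (Or.inr hmem)⟩
  rcases Nat.lt_or_ge (blockOf b u) (blockOf b x - 1) with hcase | hcase
  · -- skip node
    have humem : u ∈ SkipSet N b E (blockOf b u) := by
      refine ⟨?_, x, hE, by omega⟩
      rw [mem_blockSet_iff C.hb hi'1]
      exact ⟨rfl, hu1, by omega⟩
    refine skip_present C hj1 hjt hi'1 (by omega) ?_ ?_ k humem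
    · obtain ⟨j', hj'lt, hmem⟩ := invA C (j-1) (by omega) (blockOf b x - 1) (by omega)
        hpar.1 (blockOf b u) hi'1 (by omega)
      exact ⟨j', by omega, hmem⟩
    · obtain ⟨j'', hle, hlet, hmem⟩ := invB C (blockOf b x - 1) (by omega) j hjt
        hpar.2 (blockOf b u) hi'1 (by omega)
      exact le_trans hle (le_lastDelete hmem hlet)
  · -- previous block, fully pebbled during round j
    have hieq : blockOf b u = blockOf b x - 1 := by omega
    rw [hieq]
    refine block_full_during C (by omega) hpar.1 hpar.2 k ?_
    rw [mem_blockSet_iff C.hb (by omega), ← hieq]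
    exact ⟨rfl, hu1, by omega⟩

/-! ### master legality lemma -/

noncomputable def U (N b : ℕ) (E : ℕ → ℕ → Prop) (P' : ℕ → Set ℕ) (t j k : ℕ) : Set ℕ :=
  ⋃ i ∈ Finset.Icc 1 (numBlocks N b), midState N b E P' t i j k

lemma mem_U_iff (C : Ctx N b E P' t) {j k x : ℕ} (hx1 : 1 ≤ x) (hxN : x ≤ N) :
    x ∈ U N b E P' t j k ↔ x ∈ midState N b E P' t (blockOf b x) j k := by
  constructor
  · intro hx
    simp only [U, Set.mem_iUnion] at hx
    obtain ⟨i, hi, hx⟩ := hx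
    rw [Finset.mem_Icc] at hi
    have hbs := midState_subset C hx
    rw [mem_blockSet_iff C.hb hi.1] at hbs
    rwa [hbs.1]
  · intro hx
    have h1 := (blockOf_mem C.hb hx1).1
    have h2 := blockOf_le_nb (N := N) C.hb hxN
    simp only [U, Set.mem_iUnion]
    exact ⟨blockOf b x, Finset.mem_Icc.mpr ⟨h1, h2⟩, hx⟩

lemma U_subset (C : Ctx N b E P' t) {j k : ℕ} : U N b E P' t j k ⊆ Set.Icc 1 N := by
  intro x hx
  simp only [U, Set.mem_iUnion] at hx
  obtain ⟨i, hi, hx⟩ := hx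
  exact blockSet_subset (midState_subset C hx)

lemma main_legal (C : Ctx N b E P' t) {j k : ℕ} (hj1 : 1 ≤ j) (hjt : j ≤ t)
    (hk1 : 1 ≤ k) (hk : k ≤ cap N b P' t j) {x : ℕ}
    (hx : (x ∈ U N b E P' t j k ∧ x ∉ U N b E P' t j (k-1)) ∨
          (x ∈ U N b E P' t j (k-1) ∧ x ∉ U N b E P' t j k)) :
    ∀ u, E u x → u ∈ U N b E P' t j (k-1) ∧ u ∈ U N b E P' t j k := by
  have hb := C.hb; have hbN := C.hbN
  have hnbb := nb_bounds C
  have hxIcc : x ∈ Set.Icc 1 N := by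
    rcases hx with ⟨h, -⟩ | ⟨h, -⟩ <;> exact U_subset C h
  rw [Set.mem_Icc] at hxIcc
  obtain ⟨hx1, hxN⟩ := hxIcc
  have hi1 : 1 ≤ blockOf b x := (blockOf_mem C.hb hx1).1
  have hinb : blockOf b x ≤ numBlocks N b := blockOf_le_nb C.hb hxN
  have hxb := (blockOf_mem C.hb hx1).2
  rw [mem_U_iff C hx1 hxN, mem_U_iff C hx1 hxN] at hx
  have hmode : ¬(blockOf b x ∈ P' j ↔ blockOf b x ∈ P' (j-1)) := by
    intro hiff
    rw [midState_stay hiff, midState_stay hiff] at hx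
    tauto
  intro u hE
  obtain ⟨hu1, hux, -⟩ := C.hrange u x hE
  have hi'1 : 1 ≤ blockOf b u := (blockOf_mem C.hb hu1).1
  have hi'le : blockOf b u ≤ blockOf b x := blockOf_mono (by omega)
  have hub := (blockOf_mem C.hb hu1).2
  rw [mem_U_iff C (by omega) (by omega), mem_U_iff C (by omega) (by omega)]
  rcases Nat.lt_or_ge (blockOf b u) (blockOf b x) with hlt | hge
  · exact ⟨parent_present C hj1 hjt hE hxN hmode hlt (k-1),
      parent_present C hj1 hjt hE hxN hmode hlt k⟩
  have hieq : blockOf b u = blockOf b x := by omega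
  rw [hieq]
  have hsp := succ_pred_mul (b := b) hi1
  rw [hieq] at hub
  by_cases h1 : blockOf b x ∈ P' j
  · -- ADD mode
    have h2 : blockOf b x ∉ P' (j-1) := by tauto
    by_cases hne : blockOf b x = numBlocks N b
    · rw [hne] at hx hub hxb hsp ⊢
      have hkbr : k ≤ b + (N - (numBlocks N b - 1)*b - 1) := by
        rw [cap] at hk
        split_ifs at hk <;> omega
      rw [midState_add_nb C (hne ▸ h1) (hne ▸ h2) k, midState_add_nb C (hne ▸ h1) (hne ▸ h2) (k-1)]
        at hx ⊢
      simp only [Set.mem_diff, Set.mem_Icc] at hx ⊢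
      omega
    · -- i ≠ nb : new pebble x = lo + k - 1
      have hmono : midState N b E P' t (blockOf b x) j (k-1) ⊆
          midState N b E P' t (blockOf b x) j k := by
        rw [midState_add C hi1 hne h1 h2, midState_add C hi1 hne h1 h2]
        refine Set.union_subset_union_right _ (Set.Icc_subset_Icc le_rfl ?_)
        have h3 := Nat.min_le_right (k-1) b
        have h4 := Nat.min_le_right k b
        have h5 : min (k-1) b ≤ min k b := by omega
        omega
      have hxadd : x ∈ midState N b E P' t (blockOf b x) j k ∧
          x ∉ midState N b E P' t (blockOf b x) j (k-1) := by
        rcases hx with h | h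
        · exact h
        · exact absurd (hmono h.1) h.2
      rw [midState_add C hi1 hne h1 h2] at hxadd
      have hxprev : x ∉ endState N b E P' t (blockOf b x) (j-1) := by
        intro hmem
        exact hxadd.2 (by rw [midState_add C hi1 hne h1 h2]; exact Or.inl hmem)
      have hxI : x ∈ Set.Icc ((blockOf b x - 1)*b + 1)
          (min ((blockOf b x - 1)*b + 1 + min k b - 1) (min (blockOf b x * b) N)) := by
        rcases hxadd.1 with h | h
        · exact absurd h hxprev
        · exact h
      have hxnI : x ∉ Set.Icc ((blockOf b x - 1)*b + 1)
          (min ((blockOf b x - 1)*b + 1 + min (k-1) b - 1) (min (blockOf b x * b) N)) := by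
        intro hmem
        exact hxadd.2 (by rw [midState_add C hi1 hne h1 h2]; exact Or.inr hmem)
      rw [Set.mem_Icc] at hxI
      rw [Set.mem_Icc] at hxnI
      push_neg at hxnI
      have huI : u ∈ Set.Icc ((blockOf b x - 1)*b + 1)
          (min ((blockOf b x - 1)*b + 1 + min (k-1) b - 1) (min (blockOf b x * b) N)) := by
        rw [Set.mem_Icc]
        have h3 := Nat.min_le_right (k-1) b
        have h4 := Nat.min_le_right k b
        have h5 : min (k-1) b ≤ min k b := by omega
        have h6 : min k b ≤ k := Nat.min_le_left _ _
        have h7 : k - 1 ≤ b → min (k-1) b = k - 1 := fun h => Nat.min_eq_left h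
        have h8 : k ≤ b → min k b = k := fun h => Nat.min_eq_left h
        omega
      constructor
      · rw [midState_add C hi1 hne h1 h2]
        exact Or.inr huI
      · exact hmono (by rw [midState_add C hi1 hne h1 h2]; exact Or.inr huI)
  · -- DEL mode
    have h2 : blockOf b x ∈ P' (j-1) := by tauto
    have hknb : blockOf b x = numBlocks N b → k ≤ b := by
      intro h
      have hjs : j ≠ LastAdd P' t (numBlocks N b) := by
        intro hj
        exact h1 (h ▸ mem_ge_lastAdd C (le_of_eq hj.symm) hjt)
      rw [cap, if_neg hjs] at hk
      omega
    have hmono : midState N b E P' t (blockOf b x) j k ⊆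
        midState N b E P' t (blockOf b x) j (k-1) := by
      rw [midState_del C hj1 hjt h1 h2 hknb, midState_del C hj1 hjt h1 h2 (fun h => by
        have := hknb h; omega)]
      refine Set.union_subset_union_left _ (Set.diff_subset_diff_right (Set.Icc_subset_Icc ?_ le_rfl))
      have h3 := Nat.min_le_right (k-1) b
      have h4 := Nat.min_le_right k b
      have h5 : min (k-1) b ≤ min k b := by omega
      omega
    have hxdel : x ∈ midState N b E P' t (blockOf b x) j (k-1) ∧
        x ∉ midState N b E P' t (blockOf b x) j k := by
      rcases hx with h | h
      · exact absurd (hmono h.1) h.2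
      · exact h
    rw [midState_del C hj1 hjt h1 h2 (fun h => by have := hknb h; omega)] at hxdel
    have hxS : x ∉ (if j - 1 = LastDelete P' t (blockOf b x) then (∅ : Set ℕ)
        else SkipSet N b E (blockOf b x)) := by
      intro hmem
      refine hxdel.2 ?_
      rw [midState_del C hj1 hjt h1 h2 hknb]
      exact Or.inr hmem
    have hxblk : x ∈ blockSet N b (blockOf b x) \ Set.Icc
        (min (blockOf b x * b) N + 1 - min (k-1) b) (min (blockOf b x * b) N) := by
      rcases hxdel.1 with h | h
      · exact h
      · exact absurd h hxS
    have hxD : x ∈ Set.Icc (min (blockOf b x * b) N + 1 - min k b) (min (blockOf b x * b) N) := by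
      by_contra hcon
      refine hxdel.2 ?_
      rw [midState_del C hj1 hjt h1 h2 hknb]
      exact Or.inl ⟨hxblk.1, hcon⟩
    have hxnD := hxblk.2
    rw [Set.mem_Icc] at hxD
    have hxnD' : ¬(min (blockOf b x * b) N + 1 - min (k-1) b ≤ x ∧
        x ≤ min (blockOf b x * b) N) := by
      rw [← Set.mem_Icc]; exact hxnD
    push_neg at hxnD'
    have hublk : u ∈ blockSet N b (blockOf b x) := by
      rw [mem_blockSet_iff C.hb hi1, ← hieq]
      exact ⟨rfl, hu1, by omega⟩
    have huout : ∀ m, m ≤ min k b → u ∉ Set.Icc (min (blockOf b x * b) N + 1 - m)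
        (min (blockOf b x * b) N) := by
      intro m hm hmem
      rw [Set.mem_Icc] at hmem
      have h3 := Nat.min_le_right (k-1) b
      have h4 := Nat.min_le_right k b
      have h5 : min (k-1) b ≤ min k b := by omega
      have h6 : k - 1 < min k b → min (k-1) b = k - 1 := by
        intro h; exact Nat.min_eq_left (by omega)
      omega
    refine ⟨?_, ?_⟩
    · rw [midState_del C hj1 hjt h1 h2 (fun h => by have := hknb h; omega)]
      exact Or.inl ⟨hublk, huout (min (k-1) b) (by
        have h3 := Nat.min_le_right (k-1) b
        have h4 := Nat.min_le_right k b
        omega)⟩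
    · rw [midState_del C hj1 hjt h1 h2 hknb]
      exact Or.inl ⟨hublk, huout (min k b) le_rfl⟩

/-! ### init and final -/

lemma transPeb_zero (C : Ctx N b E P' t) : TransPeb N b E P' t 0 = ∅ := by
  simp only [TransPeb, roundOf_zero C]
  apply Set.eq_empty_iff_forall_notMem.mpr
  intro x hx
  simp only [Set.mem_iUnion] at hx
  obtain ⟨i, hi, hx⟩ := hx
  rw [midState_zero C, endState_zero C] at hx
  exact hx

lemma transPeb_final (C : Ctx N b E P' t) : TransPeb N b E P' t (TransTime N b t) = {N} := by
  have hT : roundOf N b P' t (TransTime N b t) = (t, cap N b P' t t) :=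
    roundOf_eq C (t_pos C) le_rfl (le_trans C.hb (cap_ge t)) le_rfl (total_steps C).symm
  have hNmem : numBlocks N b ∈ P' t := by rw [C.hP'.final]; rfl
  simp only [TransPeb, hT]
  ext x
  simp only [Set.mem_iUnion, Set.mem_singleton_iff]
  constructor
  · rintro ⟨i, hi, hx⟩
    rw [Finset.mem_Icc] at hi
    rw [midcap C (t_pos C) le_rfl hi.1 hi.2] at hx
    by_cases hinb : i = numBlocks N b
    · subst hinb
      rw [endState, if_pos hNmem, if_pos ⟨rfl, lastAdd_le C⟩] at hx
      exact hx
    · exfalso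
      have hnm : i ∉ P' t := by
        intro h
        rw [C.hP'.final] at h
        exact hinb h
      rw [endState, if_neg hnm] at hx
      split_ifs at hx with hcond
      · obtain ⟨⟨j', hj', hm⟩, hld⟩ := hcond
        have h1 : LastDelete P' t i ≤ t := lastDelete_le
        have h2 : LastDelete P' t i = t := by omega
        have := lastDelete_mem' hm hj'
        rw [h2] at this
        exact hnm this
      · exact hx
  · intro hxe
    refine ⟨numBlocks N b, Finset.mem_Icc.mpr ⟨nb_pos C, le_rfl⟩, ?_⟩
    rw [midcap C (t_pos C) le_rfl (nb_pos C) le_rfl,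
      endState, if_pos hNmem, if_pos ⟨rfl, lastAdd_le C⟩]
    exact hxe

end Stmt12

/-- If `P'` is a legal parallel quantum pebbling of the induced line graph `L_{⌈N/b⌉}`,
then the transformed pebbling `Trans(G, P', b)` is a legal parallel quantum pebbling
of `G`. -/
theorem stmt12 (N b : ℕ) (hb : 1 ≤ b) (hbN : b ≤ N) (E : ℕ → ℕ → Prop)
    (hrange : ∀ u v, E u v → 1 ≤ u ∧ u < v ∧ v ≤ N)
    (hsink : ∀ v, 1 ≤ v → v < N → ∃ w, E v w)
    (P' : ℕ → Set ℕ) (t : ℕ)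
    (hP' : IsQPebbling (lineE (numBlocks N b)) {numBlocks N b} P' t) :
    IsQPebbling E {N} (TransPeb N b E P' t) (TransTime N b t) := by
  have C : Stmt12.Ctx N b E P' t := ⟨hb, hbN, hrange, hP'⟩
  have key : ∀ s, 1 ≤ s → s ≤ TransTime N b t → ∀ x,
      ((x ∈ TransPeb N b E P' t s ∧ x ∉ TransPeb N b E P' t (s-1)) ∨
       (x ∈ TransPeb N b E P' t (s-1) ∧ x ∉ TransPeb N b E P' t s)) →
      ∀ u, E u x → u ∈ TransPeb N b E P' t (s-1) ∧ u ∈ TransPeb N b E P' t s := by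
    intro s hs1 hsT x hx u hEux
    obtain ⟨j, k, hro, hj1, hjt, hk1, hk, hmid⟩ := Stmt12.step_spec C hs1 hsT
    have hQ : TransPeb N b E P' t s = Stmt12.U N b E P' t j k := by
      simp only [TransPeb, Stmt12.U, hro]
    have hQ' : TransPeb N b E P' t (s-1) = Stmt12.U N b E P' t j (k-1) := by
      simp only [TransPeb, Stmt12.U]
      apply Set.iUnion₂_congr
      intro i hi
      rw [Finset.mem_Icc] at hi
      exact hmid i hi.1 hi.2
    rw [hQ, hQ'] at hx ⊢
    exact Stmt12.main_legal C hj1 hjt hk1 hk hx u hEux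
  constructor
  · exact Stmt12.transPeb_zero C
  · exact Stmt12.transPeb_final C
  · intro s hs1 hsT x hx u hu
    exact (key s hs1 hsT x (Or.inl ⟨hx.1, hx.2⟩) u hu).1
  · intro s hs1 hsT x hx u hu
    exact (key s hs1 hsT x (Or.inr ⟨hx.1, hx.2⟩) u hu).1
  · intro s hs1 hsT u hu
    rcases hu with ⟨v, hv, hEuv⟩ | ⟨v, hv, hEuv⟩
    · exact (key s hs1 hsT v (Or.inl ⟨hv.1, hv.2⟩) u hEuv).2
    · exact (key s hs1 hsT v (Or.inr ⟨hv.1, hv.2⟩) u hEuv).2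
end
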